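/- arXiv:1810.04530 — 8 statements merged into one kernel-verified Lean document; each statement's English description precedes it below -/
import Mathlib

section
/- Let N ≥ 2, let f₁, …, f_N : [0,1] → [0,1] be strictly monotone absolutely continuous functions with f_n((0,1)) ∩ f_m((0,1)) = ∅ for all n ≠ m, satisfying ∑_{n=1}^N |f_n′(x)| = 1 for almost all x ∈ [0,1], and let g ∈ L¹([0,1]). Define P₀ : L¹([0,1]) → L¹([0,1]) by P₀f = ∑_{n=1}^N |f_n′|·(f∘f_n), and assume that for every f ∈ L¹([0,1]) the sequence (P₀ᵐf)_{m∈ℕ} converges in L¹([0,1]) to the constant ∫₀¹ f(x) dx (this holds when the associated transformation S is exact). Then the equation φ(x) = ∑_{n=1}^N |f_n′(x)| φ(f_n(x)) + g(x) has a solution φ ∈ L¹([0,1]) if and only if the series ∑_{m=1}^∞ ∑_{n₁,…,n_m=1}^N (∏_{k=1}^m |f_{n_k}′ ∘ f_{n_{k−1}} ∘ ⋯ ∘ f_{n_1}|) · (g ∘ f_{n_m} ∘ f_{n_{m−1}} ∘ ⋯ ∘ f_{n_1}) converges in L¹([0,1]); moreover, every solution φ ∈ L¹([0,1]) is of the form φ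 = g + ∑_{m=1}^∞ ∑_{n₁,…,n_m=1}^N (∏_{k=1}^m |f_{n_k}′ ∘ f_{n_{k−1}} ∘ ⋯ ∘ f_{n_1}|) · (g ∘ f_{n_m} ∘ ⋯ ∘ f_{n_1}) + c for some real constant c. -/
open MeasureTheory Filter Topology
open scoped ENNReal NNReal

/-- A function is absolutely continuous on `[a, b]` (ε-δ definition with finite families of
non-overlapping subintervals). -/
def AbsolutelyContinuousOnIcc (f : ℝ → ℝ) (a b : ℝ) : Prop :=
  ∀ ε : ℝ, 0 < ε → ∃ δ : ℝ, 0 < δ ∧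
    ∀ (n : ℕ) (u v : Fin n → ℝ),
      (∀ i, a ≤ u i ∧ u i ≤ v i ∧ v i ≤ b) →
      (Pairwise fun i j => Disjoint (Set.Ioo (u i) (v i)) (Set.Ioo (u j) (v j))) →
      (∑ i, (v i - u i)) < δ → (∑ i, |f (v i) - f (u i)|) < ε

/-- The composition `f_{n_m} ∘ ⋯ ∘ f_{n_1}` associated with the word `[n₁, …, n_m]`
(the empty word gives the identity). -/
def compList {N : ℕ} (f : Fin N → ℝ → ℝ) : List (Fin N) → ℝ → ℝ
  | [] => id
  | n :: l => fun x => compList f l (f n x)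

/-- The product `∏_{k=1}^m |f_{n_k}′ ∘ f_{n_{k−1}} ∘ ⋯ ∘ f_{n_1}|` associated with the word
`[n₁, …, n_m]`, where the inner composition for `k = 1` is understood as `|f_{n_1}′|`
(`f'` is the family of a.e. derivatives). -/
def prodAbsDeriv {N : ℕ} (f f' : Fin N → ℝ → ℝ) : List (Fin N) → ℝ → ℝ
  | [] => fun _ => 1
  | n :: l => fun x => |f' n x| * prodAbsDeriv f f' l (f n x)

lemma AbsolutelyContinuousOnIcc.continuousOn {f : ℝ → ℝ}
    (h : AbsolutelyContinuousOnIcc f 0 1) : ContinuousOn f (Set.Icc 0 1) := by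
  intro x hx
  rw [Metric.continuousWithinAt_iff]
  intro ε hε
  obtain ⟨δ, hδ, hδ'⟩ := h ε hε
  refine ⟨δ, hδ, fun y hy hdist => ?_⟩
  have := hδ' 1 (fun _ => min x y) (fun _ => max x y)
    (fun i => ⟨le_min hx.1 hy.1, min_le_max, max_le hx.2 hy.2⟩)
    (fun i j hij => absurd (Subsingleton.elim i j) hij) ?_
  · rw [Fin.sum_univ_one] at this
    rw [Real.dist_eq]
    rcases le_total x y with hxy | hxy
    · simpa [min_eq_left hxy, max_eq_right hxy] using this
    · rw [abs_sub_comm]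
      simpa [min_eq_right hxy, max_eq_left hxy] using this
  · rw [Fin.sum_univ_one]
    rw [Real.dist_eq] at hdist
    rcases le_total x y with hxy | hxy
    · simpa [min_eq_left hxy, max_eq_right hxy, abs_sub_comm, abs_of_nonneg (sub_nonneg.2 hxy)]
        using hdist
    · rw [abs_sub_comm] at hdist
      simpa [min_eq_right hxy, max_eq_left hxy, abs_of_nonneg (sub_nonneg.2 hxy)] using hdist

noncomputable def clamp01 (x : ℝ) : ℝ := max 0 (min 1 x)

lemma clamp01_continuous : Continuous clamp01 :=
  continuous_const.max (continuous_const.min continuous_id)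

lemma clamp01_mem (x : ℝ) : clamp01 x ∈ Set.Icc (0:ℝ) 1 :=
  ⟨le_max_left _ _, max_le zero_le_one (min_le_left _ _)⟩

lemma clamp01_eq {x : ℝ} (hx : x ∈ Set.Icc (0:ℝ) 1) : clamp01 x = x := by
  simp [clamp01, min_eq_right hx.2, max_eq_right, hx.1]

lemma exists_goodSet {f fd : ℝ → ℝ}
    (hd : ∀ᵐ x ∂(volume.restrict (Set.Icc (0:ℝ) 1)),
      HasDerivWithinAt f (fd x) (Set.Icc 0 1) x) :
    ∃ D : Set ℝ, MeasurableSet D ∧ D ⊆ Set.Icc 0 1 ∧ volume ((Set.Icc (0:ℝ) 1) \ D) = 0 ∧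
      ∀ x ∈ D, HasDerivWithinAt f (fd x) (Set.Icc 0 1) x := by
  have hbad : volume ({x | ¬ HasDerivWithinAt f (fd x) (Set.Icc 0 1) x} ∩ Set.Icc 0 1) = 0 := by
    have h := hd
    rw [ae_iff, Measure.restrict_apply' measurableSet_Icc] at h
    exact h
  set T := toMeasurable volume ({x | ¬ HasDerivWithinAt f (fd x) (Set.Icc 0 1) x} ∩ Set.Icc 0 1)
  refine ⟨Set.Icc 0 1 \ T,
    measurableSet_Icc.diff (measurableSet_toMeasurable _ _), Set.diff_subset, ?_, ?_⟩
  · refine measure_mono_null (fun x hx => ?_) (by rw [measure_toMeasurable]; exact hbad)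
    by_contra h
    exact hx.2 ⟨hx.1, h⟩
  · intro x hx
    by_contra h
    exact hx.2 (subset_toMeasurable _ _ ⟨h, hx.1⟩)

lemma cov_le {f fd : ℝ → ℝ} (hinj : Set.InjOn f (Set.Icc 0 1))
    (hd : ∀ᵐ x ∂(volume.restrict (Set.Icc (0:ℝ) 1)),
      HasDerivWithinAt f (fd x) (Set.Icc 0 1) x)
    (G : ℝ → ℝ≥0∞) :
    ∫⁻ x in Set.Icc (0:ℝ) 1, ENNReal.ofReal |fd x| * G (f x)
      ≤ ∫⁻ y in f '' Set.Icc (0:ℝ) 1, G y := by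
  obtain ⟨D, hDm, hDsub, hDnull, hDd⟩ := exists_goodSet hd
  have h1 : ∫⁻ x in Set.Icc (0:ℝ) 1, ENNReal.ofReal |fd x| * G (f x)
      = ∫⁻ x in D, ENNReal.ofReal |fd x| * G (f x) := by
    apply setLIntegral_congr
    rw [MeasureTheory.ae_eq_set]
    constructor
    · exact hDnull
    · rw [Set.diff_eq_empty.2 hDsub]; exact measure_empty
  have h2 : ∫⁻ x in f '' D, G x = ∫⁻ x in D, ENNReal.ofReal |fd x| * G (f x) := by
    have := lintegral_image_eq_lintegral_abs_det_fderiv_mul volume hDm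
      (f' := fun x => (1 : ℝ →L[ℝ] ℝ).smulRight (fd x))
      (fun x hx => ((hDd x hx).mono hDsub).hasFDerivWithinAt) (hinj.mono hDsub) G
    simpa [ContinuousLinearMap.smulRight_one_eq_toSpanSingleton, ContinuousLinearMap.det_toSpanSingleton] using this
  rw [h1, ← h2]
  exact lintegral_mono_set (Set.image_mono hDsub)

lemma deriv_aemeasurable {f fd : ℝ → ℝ} (hc : ContinuousOn f (Set.Icc 0 1))
    (hd : ∀ᵐ x ∂(volume.restrict (Set.Icc (0:ℝ) 1)),
      HasDerivWithinAt f (fd x) (Set.Icc 0 1) x) :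
    AEMeasurable fd (volume.restrict (Set.Icc (0:ℝ) 1)) := by
  set ft : ℝ → ℝ := fun x => f (clamp01 x) with hft
  have hftc : Continuous ft := hc.comp_continuous clamp01_continuous clamp01_mem
  set q : ℕ → ℝ → ℝ := fun k x => ((k:ℝ)+1) * (ft (x + 1/((k:ℝ)+1)) - ft x) with hq
  have hqm : ∀ k, Measurable (q k) := fun k =>
    (measurable_const.mul ((hftc.measurable.comp (measurable_id.add_const _)).sub
      hftc.measurable))
  have hIoo : ∀ᵐ x ∂(volume.restrict (Set.Icc (0:ℝ) 1)), x ∈ Set.Ioo (0:ℝ) 1 := by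
    rw [ae_iff, Measure.restrict_apply' measurableSet_Icc]
    refine measure_mono_null (t := {0,1}) (fun x hx => ?_) ?_
    · have h1 : x ∈ Set.Icc (0:ℝ) 1 := hx.2
      have h2 : ¬ x ∈ Set.Ioo (0:ℝ) 1 := hx.1
      have : x = 0 ∨ x = 1 := by
        rcases lt_or_eq_of_le h1.1 with h | h
        · rcases lt_or_eq_of_le h1.2 with h' | h'
          · exact absurd ⟨h, h'⟩ h2
          · exact Or.inr h'
        · exact Or.inl h.symm
      exact (show x ∈ ({0,1} : Set ℝ) from by simpa using this)
    · exact ((Set.finite_singleton (1:ℝ)).insert 0).measure_zero _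
  apply aemeasurable_of_tendsto_metrizable_ae' (f := q) (fun k => (hqm k).aemeasurable)
  filter_upwards [hd, hIoo] with x hx hxIoo
  have hnhds : Set.Icc (0:ℝ) 1 ∈ 𝓝 x := Icc_mem_nhds hxIoo.1 hxIoo.2
  have hder : HasDerivAt f (fd x) x := hx.hasDerivAt hnhds
  have heq : ft =ᶠ[𝓝 x] f := by
    filter_upwards [hnhds] with y hy
    rw [hft]; simp only [clamp01_eq hy]
  have hderft : HasDerivAt ft (fd x) x := hder.congr_of_eventuallyEq heq
  have hslope := hasDerivAt_iff_tendsto_slope.1 hderft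
  have hy : Tendsto (fun k : ℕ => x + 1/((k:ℝ)+1)) atTop (𝓝[≠] x) := by
    apply tendsto_nhdsWithin_of_tendsto_nhds_of_eventually_within
    · have : Tendsto (fun k : ℕ => 1/((k:ℝ)+1)) atTop (𝓝 0) :=
        tendsto_one_div_add_atTop_nhds_zero_nat
      simpa using (tendsto_const_nhds (x := x)).add this
    · filter_upwards with k
      have : (0:ℝ) < 1/((k:ℝ)+1) := by positivity
      simp only [Set.mem_compl_iff, Set.mem_singleton_iff]
      intro h
      nlinarith [this]
  have := hslope.comp hy
  convert this using 2 with k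
  have hk : (0:ℝ) < 1/((k:ℝ)+1) := by positivity
  rw [hq]
  simp only [Function.comp_apply, slope_def_field]
  field_simp
  ring

lemma null_preimage {f fd : ℝ → ℝ} (hc : ContinuousOn f (Set.Icc 0 1))
    (hinj : Set.InjOn f (Set.Icc 0 1))
    (hd : ∀ᵐ x ∂(volume.restrict (Set.Icc (0:ℝ) 1)),
      HasDerivWithinAt f (fd x) (Set.Icc 0 1) x)
    {E : Set ℝ} (hE : volume E = 0) :
    ∀ᵐ x ∂(volume.restrict (Set.Icc (0:ℝ) 1)), f x ∈ E → fd x = 0 := by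
  have hfdm : AEMeasurable fd (volume.restrict (Set.Icc (0:ℝ) 1)) := deriv_aemeasurable hc hd
  obtain ⟨D, hDm, hDsub, hDnull, hDd⟩ := exists_goodSet hd
  set E' := toMeasurable volume E with hE'def
  have hE' : volume E' = 0 := by rw [hE'def, measure_toMeasurable]; exact hE
  have hEsub : E ⊆ E' := subset_toMeasurable _ _
  have hE'm : MeasurableSet E' := measurableSet_toMeasurable _ _
  set ft : ℝ → ℝ := fun x => f (clamp01 x) with hft
  have hftc : Continuous ft := hc.comp_continuous clamp01_continuous clamp01_mem
  set s := D ∩ ft ⁻¹' E' with hsdef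
  have hs : MeasurableSet s := hDm.inter (hE'm.preimage hftc.measurable)
  have hsub : s ⊆ Set.Icc 0 1 := fun x hx => hDsub hx.1
  have hfteq : ∀ x ∈ Set.Icc (0:ℝ) 1, ft x = f x := fun x hx => by
    rw [hft]; simp only [clamp01_eq hx]
  have hfs : f '' s ⊆ E' := by
    rintro y ⟨x, hx, rfl⟩
    have := hx.2
    rwa [Set.mem_preimage, hfteq x (hsub hx)] at this
  have hcov := lintegral_image_eq_lintegral_abs_det_fderiv_mul volume hs
    (f' := fun x => (1 : ℝ →L[ℝ] ℝ).smulRight (fd x))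
    (fun x hx => ((hDd x hx.1).mono hsub).hasFDerivWithinAt) (hinj.mono hsub)
    (fun _ => (1:ℝ≥0∞))
  simp only [ContinuousLinearMap.smulRight_one_eq_toSpanSingleton, ContinuousLinearMap.det_toSpanSingleton, mul_one, setLIntegral_one] at hcov
  have hzero : ∫⁻ x in s, ENNReal.ofReal |fd x| ∂volume = 0 := by
    rw [← hcov]
    exact le_antisymm (le_trans (measure_mono hfs) hE'.le) (zero_le')
  have hfds : AEMeasurable fd (volume.restrict s) := by
    have := hfdm.restrict (s := s)
    rwa [Measure.restrict_restrict hs, Set.inter_eq_self_of_subset_left hsub] at this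
  have haezero : ∀ᵐ x ∂(volume.restrict s), fd x = 0 := by
    have h := (lintegral_eq_zero_iff'
      ((ENNReal.measurable_ofReal.comp measurable_abs).comp_aemeasurable hfds)).1 hzero
    filter_upwards [h] with x hx
    simp only [Function.comp_apply, Pi.zero_apply, ENNReal.ofReal_eq_zero] at hx
    exact abs_nonpos_iff.1 hx
  have hA : volume ({x | fd x ≠ 0} ∩ s) = 0 := by
    rw [ae_iff, Measure.restrict_apply' hs] at haezero
    exact measure_mono_null (Set.inter_subset_inter_left _ (fun x hx => hx)) haezero
  rw [ae_iff, Measure.restrict_apply' measurableSet_Icc]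
  refine measure_mono_null (t := (Set.Icc 0 1 \ D) ∪ ({x | fd x ≠ 0} ∩ s)) ?_
    (measure_union_null hDnull hA)
  rintro x ⟨hx1, hx2⟩
  push_neg at hx1
  obtain ⟨hfE, hfd0⟩ := hx1
  by_cases hxD : x ∈ D
  · refine Or.inr ⟨hfd0, hxD, ?_⟩
    rw [Set.mem_preimage, hfteq x hx2]
    exact hEsub hfE
  · exact Or.inl ⟨hx2, hxD⟩

lemma sum_lintegral_le {N : ℕ} (A : Fin N → Set ℝ) (hmeas : ∀ n, MeasurableSet (A n))
    (hsub : ∀ n, A n ⊆ Set.Icc 0 1)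
    (hnull : ∀ n m, n ≠ m → volume (A n ∩ A m) = 0) (G : ℝ → ℝ≥0∞) :
    ∑ n, ∫⁻ y in A n, G y ≤ ∫⁻ y in Set.Icc (0:ℝ) 1, G y := by
  set B : Fin N → Set ℝ := fun n => A n \ ⋃ (m : Fin N), ⋃ (_ : m < n), A m with hB
  have hBm : ∀ n, MeasurableSet (B n) := fun n =>
    (hmeas n).diff (MeasurableSet.iUnion fun m => MeasurableSet.iUnion fun _ => hmeas m)
  have hBsub : ∀ n, B n ⊆ A n := fun n => Set.diff_subset
  have heq : ∀ n, ∫⁻ y in A n, G y = ∫⁻ y in B n, G y := by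
    intro n
    apply setLIntegral_congr
    rw [MeasureTheory.ae_eq_set]
    constructor
    · refine measure_mono_null (t := ⋃ (m : Fin N), ⋃ (_ : m < n), A n ∩ A m) ?_ ?_
      · rintro x ⟨hx1, hx2⟩
        have hx3 : x ∈ ⋃ (m : Fin N), ⋃ (_ : m < n), A m := by
          by_contra hcon
          exact hx2 ⟨hx1, hcon⟩
        obtain ⟨m, hm, hxm⟩ := by simpa using hx3
        exact Set.mem_iUnion.2 ⟨m, Set.mem_iUnion.2 ⟨hm, hx1, hxm⟩⟩
      · refine measure_iUnion_null fun m => measure_iUnion_null fun hm => ?_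
        exact hnull n m (ne_of_gt hm)
    · rw [Set.diff_eq_empty.2 (hBsub n)]; exact measure_empty
  have hdisj : Pairwise (Function.onFun Disjoint B) := by
    intro n m hnm
    have key : ∀ p q : Fin N, p < q → Disjoint (B p) (B q) := by
      intro p q hpq
      rw [Set.disjoint_left]
      intro x hxp hxq
      exact hxq.2 (Set.mem_iUnion.2 ⟨p, Set.mem_iUnion.2 ⟨hpq, hxp.1⟩⟩)
    rcases lt_or_gt_of_ne hnm with h | h
    · exact key n m h
    · exact (key m n h).symm
  calc ∑ n, ∫⁻ y in A n, G y = ∑ n, ∫⁻ y in B n, G y := by simp_rw [heq]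
    _ = ∑' n, ∫⁻ y in B n, G y := (tsum_fintype _).symm
    _ = ∫⁻ y in ⋃ n, B n, G y := (lintegral_iUnion hBm hdisj G).symm
    _ ≤ ∫⁻ y in Set.Icc (0:ℝ) 1, G y :=
        lintegral_mono_set (Set.iUnion_subset fun n => (hBsub n).trans (hsub n))

/-- Let `N ≥ 2`, let `f₁, …, f_N : [0,1] → [0,1]` be strictly monotone
absolutely continuous functions with pairwise disjoint images of `(0,1)` and with
`∑ₙ |f_n′| = 1` a.e., and let `g ∈ L¹([0,1])`. Assume that the iterates of
`P₀ f = ∑ₙ |f_n′| (f ∘ f_n)` converge in `L¹` to the constant `∫₀¹ f` for every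
`f ∈ L¹([0,1])`. Then `φ(x) = ∑ₙ |f_n′(x)| φ(f_n(x)) + g(x)` has a solution in
`L¹([0,1])` iff the series
`∑_{m≥1} ∑_{n₁,…,n_m} (∏ₖ |f_{n_k}′ ∘ f_{n_{k−1}} ∘ ⋯ ∘ f_{n_1}|) · (g ∘ f_{n_m} ∘ ⋯ ∘ f_{n_1})`
converges in `L¹([0,1])`; moreover every solution is of the form `g + (this series) + c`
for some real constant `c`. -/
theorem stmt1 (N : ℕ) (hN : 2 ≤ N) (f : Fin N → ℝ → ℝ)
    (hmaps : ∀ n, Set.MapsTo (f n) (Set.Icc 0 1) (Set.Icc 0 1))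
    (hmono : ∀ n, StrictMonoOn (f n) (Set.Icc 0 1) ∨ StrictAntiOn (f n) (Set.Icc 0 1))
    (hAC : ∀ n, AbsolutelyContinuousOnIcc (f n) 0 1)
    (hdisj : ∀ n m, n ≠ m →
      Disjoint (f n '' Set.Ioo 0 1) (f m '' Set.Ioo 0 1))
    (f' : Fin N → ℝ → ℝ)
    (hf' : ∀ n, ∀ᵐ x ∂(volume.restrict (Set.Icc (0 : ℝ) 1)),
      HasDerivWithinAt (f n) (f' n x) (Set.Icc 0 1) x)
    (hsum1 : ∀ᵐ x ∂(volume.restrict (Set.Icc (0 : ℝ) 1)), ∑ n, |f' n x| = 1)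
    (g : ℝ → ℝ) (hg : Integrable g (volume.restrict (Set.Icc 0 1)))
    (P₀ : (ℝ → ℝ) → (ℝ → ℝ))
    (hP₀ : ∀ F : ℝ → ℝ, ∀ x : ℝ, P₀ F x = ∑ n, |f' n x| * F (f n x))
    (hexact : ∀ F : ℝ → ℝ, Integrable F (volume.restrict (Set.Icc 0 1)) →
      Tendsto (fun m : ℕ =>
          ∫ x in Set.Icc (0 : ℝ) 1, |(P₀^[m]) F x - ∫ y in Set.Icc (0 : ℝ) 1, F y|)
        atTop (𝓝 0)) :
    ((∃ φ : ℝ → ℝ, Integrable φ (volume.restrict (Set.Icc 0 1)) ∧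
        (∀ᵐ x ∂(volume.restrict (Set.Icc (0 : ℝ) 1)),
          φ x = (∑ n, |f' n x| * φ (f n x)) + g x)) ↔
      (∃ s : ℝ → ℝ, Integrable s (volume.restrict (Set.Icc 0 1)) ∧
        Tendsto (fun M : ℕ =>
            ∫ x in Set.Icc (0 : ℝ) 1,
              |(∑ m ∈ Finset.Icc 1 M, ∑ w : Fin m → Fin N,
                  prodAbsDeriv f f' (List.ofFn w) x * g (compList f (List.ofFn w) x))
                - s x|)
          atTop (𝓝 0))) ∧
    (∀ φ : ℝ → ℝ, Integrable φ (volume.restrict (Set.Icc 0 1)) →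
      (∀ᵐ x ∂(volume.restrict (Set.Icc (0 : ℝ) 1)),
        φ x = (∑ n, |f' n x| * φ (f n x)) + g x) →
      ∃ (s : ℝ → ℝ) (c : ℝ), Integrable s (volume.restrict (Set.Icc 0 1)) ∧
        Tendsto (fun M : ℕ =>
            ∫ x in Set.Icc (0 : ℝ) 1,
              |(∑ m ∈ Finset.Icc 1 M, ∑ w : Fin m → Fin N,
                  prodAbsDeriv f f' (List.ofFn w) x * g (compList f (List.ofFn w) x))
                - s x|)
          atTop (𝓝 0) ∧
        (∀ᵐ x ∂(volume.restrict (Set.Icc (0 : ℝ) 1)), φ x = g x + s x + c)) := by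
  classical
  -- basic per-branch facts
  have hcont : ∀ n, ContinuousOn (f n) (Set.Icc 0 1) := fun n => (hAC n).continuousOn
  have hinj : ∀ n, Set.InjOn (f n) (Set.Icc 0 1) := fun n =>
    (hmono n).elim StrictMonoOn.injOn StrictAntiOn.injOn
  have hfdm : ∀ n, AEMeasurable (f' n) (volume.restrict (Set.Icc (0:ℝ) 1)) := fun n =>
    deriv_aemeasurable (hcont n) (hf' n)
  have himgm : ∀ n, MeasurableSet (f n '' Set.Icc 0 1) := fun n =>
    (isCompact_Icc.image_of_continuousOn (hcont n)).isClosed.measurableSet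
  have himgsub : ∀ n, f n '' Set.Icc 0 1 ⊆ Set.Icc 0 1 := fun n => (hmaps n).image_subset
  have himgnull : ∀ n m, n ≠ m →
      volume ((f n '' Set.Icc 0 1) ∩ (f m '' Set.Icc 0 1)) = 0 := by
    intro n m hnm
    have hfin : volume ({f n 0, f n 1, f m 0, f m 1} : Set ℝ) = 0 :=
      Set.Finite.measure_zero (Set.toFinite _) volume
    refine measure_mono_null (t := {f n 0, f n 1, f m 0, f m 1}) ?_ hfin
    rintro y ⟨⟨a, ha, rfl⟩, ⟨b, hb, hab⟩⟩
    have hcase : ∀ (z : ℝ), z ∈ Set.Icc (0:ℝ) 1 → z ∈ Set.Ioo (0:ℝ) 1 ∨ z = 0 ∨ z = 1 := by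
      intro z hz
      rcases lt_or_eq_of_le hz.1 with h | h
      · rcases lt_or_eq_of_le hz.2 with h' | h'
        · exact Or.inl ⟨h, h'⟩
        · exact Or.inr (Or.inr h')
      · exact Or.inr (Or.inl h.symm)
    rcases hcase a ha with haI | ha01
    · rcases hcase b hb with hbI | hb01
      · have h1 : f n a ∈ f n '' Set.Ioo 0 1 := ⟨a, haI, rfl⟩
        have h2 : f n a ∈ f m '' Set.Ioo 0 1 := ⟨b, hbI, hab⟩
        exact absurd (hdisj n m hnm) (Set.not_disjoint_iff.2 ⟨_, h1, h2⟩)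
      · rcases hb01 with rfl | rfl
        · simp [← hab]
        · simp [← hab]
    · rcases ha01 with rfl | rfl
      · simp
      · simp
  set μ : Measure ℝ := volume.restrict (Set.Icc (0:ℝ) 1) with hμdef
  have hftc : ∀ n, Continuous (fun x => f n (clamp01 x)) := fun n =>
    (hcont n).comp_continuous clamp01_continuous clamp01_mem
  have haeIcc : ∀ᵐ x ∂μ, x ∈ Set.Icc (0:ℝ) 1 := ae_restrict_mem measurableSet_Icc
  have hcompmeas : ∀ n (F : ℝ → ℝ), Measurable F →
      AEMeasurable (fun x => F (f n x)) μ := by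
    intro n F hF
    refine (hF.comp (hftc n).measurable).aemeasurable.congr ?_
    filter_upwards [haeIcc] with x hx
    exact congrArg (fun y => F (f n y)) (clamp01_eq hx)
  have habsm : ∀ n, AEMeasurable (fun x => |f' n x|) μ := fun n =>
    measurable_abs.comp_aemeasurable (hfdm n)
  -- congruence of P₀ under a.e. equality
  have hPcong : ∀ F G : ℝ → ℝ, F =ᵐ[μ] G → P₀ F =ᵐ[μ] P₀ G := by
    intro F G h
    have hE : volume ({y | F y ≠ G y} ∩ Set.Icc 0 1) = 0 := by
      rw [Filter.EventuallyEq, ae_iff, hμdef, Measure.restrict_apply' measurableSet_Icc] at h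
      exact h
    have hnp : ∀ᵐ x ∂μ, ∀ n : Fin N,
        f n x ∈ ({y | F y ≠ G y} ∩ Set.Icc 0 1) → f' n x = 0 :=
      ae_all_iff.2 fun n => null_preimage (hcont n) (hinj n) (hf' n) hE
    filter_upwards [hnp, haeIcc] with x hx hxIcc
    rw [hP₀, hP₀]
    refine Finset.sum_congr rfl fun n _ => ?_
    by_cases hFG : F (f n x) = G (f n x)
    · rw [hFG]
    · rw [hx n ⟨hFG, hmaps n hxIcc⟩]
      simp
  -- key lintegral contraction for measurable functions
  have hkey : ∀ (F : ℝ → ℝ), Measurable F →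
      ∫⁻ x, ENNReal.ofReal |P₀ F x| ∂μ ≤ ∫⁻ x, ENNReal.ofReal |F x| ∂μ := by
    intro F hF
    have hstep1 : ∫⁻ x, ENNReal.ofReal |P₀ F x| ∂μ
        ≤ ∫⁻ x, ∑ n, ENNReal.ofReal |f' n x| * ENNReal.ofReal |F (f n x)| ∂μ := by
      apply lintegral_mono
      intro x
      show ENNReal.ofReal |P₀ F x| ≤ ∑ n, ENNReal.ofReal |f' n x| * ENNReal.ofReal |F (f n x)|
      rw [hP₀]
      calc ENNReal.ofReal |∑ n, |f' n x| * F (f n x)|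
          ≤ ENNReal.ofReal (∑ n, |f' n x| * |F (f n x)|) := by
            apply ENNReal.ofReal_le_ofReal
            refine (Finset.abs_sum_le_sum_abs _ _).trans (le_of_eq ?_)
            refine Finset.sum_congr rfl fun n _ => ?_
            rw [abs_mul, abs_abs]
        _ = ∑ n, ENNReal.ofReal (|f' n x| * |F (f n x)|) :=
            ENNReal.ofReal_sum_of_nonneg (fun n _ => mul_nonneg (abs_nonneg _) (abs_nonneg _))
        _ = ∑ n, ENNReal.ofReal |f' n x| * ENNReal.ofReal |F (f n x)| := by
            refine Finset.sum_congr rfl fun n _ => ?_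
            rw [ENNReal.ofReal_mul (abs_nonneg _)]
    have hstep2 : ∫⁻ x, ∑ n, ENNReal.ofReal |f' n x| * ENNReal.ofReal |F (f n x)| ∂μ
        = ∑ n, ∫⁻ x, ENNReal.ofReal |f' n x| * ENNReal.ofReal |F (f n x)| ∂μ :=
      lintegral_finset_sum' _ (fun n _ => ((habsm n).ennreal_ofReal.mul
        ((hcompmeas n (fun y => |F y|) hF.abs)).ennreal_ofReal))
    have hstep3 : ∀ n : Fin N, ∫⁻ x, ENNReal.ofReal |f' n x| * ENNReal.ofReal |F (f n x)| ∂μ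
        ≤ ∫⁻ y in f n '' Set.Icc 0 1, ENNReal.ofReal |F y| ∂volume :=
      fun n => cov_le (hinj n) (hf' n) (fun y => ENNReal.ofReal |F y|)
    have hstep4 := sum_lintegral_le (fun n => f n '' Set.Icc 0 1) himgm himgsub himgnull
      (fun y => ENNReal.ofReal |F y|)
    calc ∫⁻ x, ENNReal.ofReal |P₀ F x| ∂μ
        ≤ ∫⁻ x, ∑ n, ENNReal.ofReal |f' n x| * ENNReal.ofReal |F (f n x)| ∂μ := hstep1
      _ = ∑ n, ∫⁻ x, ENNReal.ofReal |f' n x| * ENNReal.ofReal |F (f n x)| ∂μ := hstep2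
      _ ≤ ∑ n, ∫⁻ y in f n '' Set.Icc 0 1, ENNReal.ofReal |F y| ∂volume :=
          Finset.sum_le_sum (fun n _ => hstep3 n)
      _ ≤ ∫⁻ y in Set.Icc (0:ℝ) 1, ENNReal.ofReal |F y| ∂volume := hstep4
  have haemP : ∀ (F : ℝ → ℝ), Measurable F → AEMeasurable (P₀ F) μ := by
    intro F hF
    have h1 : AEMeasurable (fun x => ∑ n, |f' n x| * F (f n x)) μ :=
      Finset.aemeasurable_fun_sum _ (fun n _ => (habsm n).mul (hcompmeas n F hF))
    exact h1.congr (Filter.Eventually.of_forall fun x => (hP₀ F x).symm)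
  -- contraction: integrability and L¹ norm bound
  have hlint : ∀ (F : ℝ → ℝ), Integrable F μ →
      Integrable (P₀ F) μ ∧ ∫ x, |P₀ F x| ∂μ ≤ ∫ x, |F x| ∂μ := by
    intro F hFint
    obtain ⟨Fm, hFm, hFeq⟩ : ∃ Fm, Measurable Fm ∧ F =ᵐ[μ] Fm :=
      ⟨hFint.aestronglyMeasurable.mk F,
        hFint.aestronglyMeasurable.stronglyMeasurable_mk.measurable,
        hFint.aestronglyMeasurable.ae_eq_mk⟩
    have hPeq : P₀ F =ᵐ[μ] P₀ Fm := hPcong F Fm hFeq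
    have hFmint : Integrable Fm μ := hFint.congr hFeq
    have hfin : ∫⁻ x, ENNReal.ofReal |Fm x| ∂μ < ⊤ := by
      have h2 := hFmint.2
      rw [hasFiniteIntegral_iff_norm] at h2
      simpa [Real.norm_eq_abs] using h2
    have hPmfin : ∫⁻ x, ENNReal.ofReal |P₀ Fm x| ∂μ < ⊤ := lt_of_le_of_lt (hkey Fm hFm) hfin
    have hPmint : Integrable (P₀ Fm) μ := by
      refine ⟨(haemP Fm hFm).aestronglyMeasurable, ?_⟩
      rw [hasFiniteIntegral_iff_norm]
      simpa [Real.norm_eq_abs] using hPmfin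
    have hPint : Integrable (P₀ F) μ := hPmint.congr hPeq.symm
    refine ⟨hPint, ?_⟩
    have e1 : ∫ x, |P₀ F x| ∂μ = (∫⁻ x, ENNReal.ofReal |P₀ Fm x| ∂μ).toReal := by
      rw [integral_congr_ae (g := fun x => |P₀ Fm x|) (hPeq.mono fun x hx => by rw [hx])]
      rw [integral_eq_lintegral_of_nonneg_ae (Filter.Eventually.of_forall fun x => abs_nonneg _)
        hPmint.abs.aestronglyMeasurable]
    have e2 : ∫ x, |F x| ∂μ = (∫⁻ x, ENNReal.ofReal |Fm x| ∂μ).toReal := by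
      rw [integral_congr_ae (g := fun x => |Fm x|) (hFeq.mono fun x hx => by rw [hx])]
      rw [integral_eq_lintegral_of_nonneg_ae (Filter.Eventually.of_forall fun x => abs_nonneg _)
        hFmint.abs.aestronglyMeasurable]
    rw [e1, e2]
    exact ENNReal.toReal_mono hfin.ne (hkey Fm hFm)
  -- pointwise algebra of P₀
  have hPadd : ∀ (F G : ℝ → ℝ) x, P₀ (fun y => F y + G y) x = P₀ F x + P₀ G x := by
    intro F G x
    simp only [hP₀, mul_add, Finset.sum_add_distrib]
  have hPsub : ∀ (F G : ℝ → ℝ) x, P₀ (fun y => F y - G y) x = P₀ F x - P₀ G x := by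
    intro F G x
    simp only [hP₀, mul_sub, Finset.sum_sub_distrib]
  have hPsum : ∀ (M : ℕ) (F : ℕ → ℝ → ℝ) x,
      P₀ (fun y => ∑ i ∈ Finset.range M, F i y) x = ∑ i ∈ Finset.range M, P₀ (F i) x := by
    intro M F x
    simp only [hP₀, Finset.mul_sum]
    rw [Finset.sum_comm]
  have hPiterAdd : ∀ (k : ℕ) (F G : ℝ → ℝ) x,
      P₀^[k] (fun y => F y + G y) x = P₀^[k] F x + P₀^[k] G x := by
    intro k
    induction k with
    | zero => intro F G x; simp
    | succ k ih =>
      intro F G x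
      rw [Function.iterate_succ_apply, Function.iterate_succ_apply,
        Function.iterate_succ_apply]
      have hfun : P₀ (fun y => F y + G y) = fun y => P₀ F y + P₀ G y :=
        funext fun y => hPadd F G y
      rw [hfun]
      exact ih (P₀ F) (P₀ G) x
  have hPitercong : ∀ (k : ℕ) (F G : ℝ → ℝ), F =ᵐ[μ] G → P₀^[k] F =ᵐ[μ] P₀^[k] G := by
    intro k
    induction k with
    | zero => intro F G h; simpa using h
    | succ k ih =>
      intro F G h
      rw [Function.iterate_succ_apply, Function.iterate_succ_apply]
      exact ih _ _ (hPcong F G h)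
  -- the combinatorial identity: inner sums are iterates of P₀
  have hA : ∀ (m : ℕ) (x : ℝ),
      (∑ w : Fin m → Fin N,
        prodAbsDeriv f f' (List.ofFn w) x * g (compList f (List.ofFn w) x)) = P₀^[m] g x := by
    intro m
    induction m with
    | zero =>
      intro x
      rw [Function.iterate_zero_apply]
      have hterm : ∀ w : Fin 0 → Fin N,
          prodAbsDeriv f f' (List.ofFn w) x * g (compList f (List.ofFn w) x) = g x := by
        intro w
        simp [List.ofFn_zero, prodAbsDeriv, compList]
      rw [Finset.sum_congr rfl fun w _ => hterm w, Finset.sum_const, Finset.card_univ]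
      simp
    | succ m ih =>
      intro x
      rw [Function.iterate_succ_apply', hP₀]
      have hre : (∑ w : Fin (m+1) → Fin N,
          prodAbsDeriv f f' (List.ofFn w) x * g (compList f (List.ofFn w) x))
          = ∑ p : Fin N × (Fin m → Fin N),
            prodAbsDeriv f f' (List.ofFn (Fin.cons p.1 p.2)) x
              * g (compList f (List.ofFn (Fin.cons p.1 p.2)) x) := by
        refine Fintype.sum_equiv (Fin.consEquiv (fun _ => Fin N)).symm _ _ fun w => ?_
        show _ = prodAbsDeriv f f' (List.ofFn (Fin.cons (w 0) (Fin.tail w))) x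
          * g (compList f (List.ofFn (Fin.cons (w 0) (Fin.tail w))) x)
        rw [Fin.cons_self_tail]
      rw [hre, Fintype.sum_prod_type]
      refine Finset.sum_congr rfl fun n _ => ?_
      have hlist : ∀ v : Fin m → Fin N, List.ofFn (Fin.cons n v : Fin (m+1) → Fin N)
          = n :: List.ofFn v := by
        intro v
        rw [List.ofFn_succ]
        simp [Fin.cons_zero, Fin.cons_succ]
      calc (∑ v : Fin m → Fin N, prodAbsDeriv f f' (List.ofFn (Fin.cons n v)) x
              * g (compList f (List.ofFn (Fin.cons n v)) x))
          = ∑ v : Fin m → Fin N, |f' n x| * (prodAbsDeriv f f' (List.ofFn v) (f n x)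
              * g (compList f (List.ofFn v) (f n x))) := by
            refine Finset.sum_congr rfl fun v _ => ?_
            rw [hlist v]
            simp only [prodAbsDeriv, compList]
            ring
        _ = |f' n x| * P₀^[m] g (f n x) := by
            rw [← Finset.mul_sum, ih (f n x)]
  -- the partial sums
  set T : ℕ → ℝ → ℝ := fun M x => ∑ i ∈ Finset.range M, P₀^[i+1] g x with hTdef
  have hT : ∀ (M : ℕ) (x : ℝ),
      (∑ m ∈ Finset.Icc 1 M, ∑ w : Fin m → Fin N,
        prodAbsDeriv f f' (List.ofFn w) x * g (compList f (List.ofFn w) x)) = T M x := by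
    intro M x
    show _ = ∑ i ∈ Finset.range M, P₀^[i+1] g x
    rw [← Finset.Ico_add_one_right_eq_Icc, Finset.sum_Ico_eq_sum_range]
    refine Finset.sum_congr (by norm_num) fun i _ => ?_
    rw [hA]
    rw [Nat.add_comm 1 i]
  have hiterint : ∀ k, Integrable (P₀^[k] g) μ := by
    intro k
    induction k with
    | zero => simpa using hg
    | succ k ih =>
      rw [Function.iterate_succ_apply']
      exact (hlint _ ih).1
  have hTint : ∀ M, Integrable (fun x => T M x) μ := fun M =>
    integrable_finset_sum _ (fun i _ => hiterint (i+1))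
  have hTrec : ∀ M x, T (M+1) x = P₀ g x + P₀ (fun y => T M y) x := by
    intro M x
    have h1 : T (M+1) x = ∑ i ∈ Finset.range M, P₀^[i+1+1] g x + P₀^[0+1] g x :=
      Finset.sum_range_succ' (fun i => P₀^[i+1] g x) M
    have h2 : ∀ i : ℕ, P₀^[i+1+1] g x = P₀ (P₀^[i+1] g) x := fun i =>
      congrFun (Function.iterate_succ_apply' P₀ (i+1) g) x
    rw [h1, Finset.sum_congr rfl fun i _ => h2 i, ← hPsum M (fun i => P₀^[i+1] g) x]
    simp only [zero_add, Function.iterate_one, hTdef]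
    ring
  -- the telescoping claim for solutions
  have hclaim : ∀ (φ : ℝ → ℝ), Integrable φ μ →
      (∀ᵐ x ∂μ, φ x = (∑ n, |f' n x| * φ (f n x)) + g x) →
      ∀ M : ℕ, φ =ᵐ[μ] fun x => P₀^[M+1] φ x + (g x + T M x) := by
    intro φ hφint hφeq M
    have hφeq' : φ =ᵐ[μ] fun x => P₀ φ x + g x := by
      filter_upwards [hφeq] with x hx
      rw [hx, hP₀]
    induction M with
    | zero =>
      filter_upwards [hφeq'] with x hx
      simpa [hTdef] using hx
    | succ M ih =>
      have h1 : P₀^[M+1] φ =ᵐ[μ] P₀^[M+1] (fun x => P₀ φ x + g x) := hPitercong _ _ _ hφeq'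
      filter_upwards [ih, h1] with x hx hx1
      have hiter : P₀^[M+1] (P₀ φ) x = P₀^[M+1+1] φ x :=
        (congrFun (Function.iterate_succ_apply P₀ (M+1) φ) x).symm
      have hTsucc : T (M+1) x = T M x + P₀^[M+1] g x := Finset.sum_range_succ _ M
      calc φ x = P₀^[M+1] φ x + (g x + T M x) := hx
        _ = P₀^[M+1] (fun x => P₀ φ x + g x) x + (g x + T M x) := by rw [hx1]
        _ = (P₀^[M+1+1] φ x + P₀^[M+1] g x) + (g x + T M x) := by
            rw [hPiterAdd (M+1) (P₀ φ) g x, hiter]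
        _ = P₀^[M+1+1] φ x + (g x + T (M+1) x) := by rw [hTsucc]; ring
  -- forward direction
  have hforward : ∀ (φ : ℝ → ℝ), Integrable φ μ →
      (∀ᵐ x ∂μ, φ x = (∑ n, |f' n x| * φ (f n x)) + g x) →
      Integrable (fun x => φ x - g x - ∫ y, φ y ∂μ) μ ∧
      Tendsto (fun M : ℕ => ∫ x, |T M x - (φ x - g x - ∫ y, φ y ∂μ)| ∂μ) atTop (𝓝 0) := by
    intro φ hφint hφeq
    have hcint : Integrable (fun _ : ℝ => ∫ y, φ y ∂μ) μ := by
      have : IntegrableOn (fun _ : ℝ => ∫ y, φ y ∂μ) (Set.Icc 0 1) volume :=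
        integrableOn_const measure_Icc_lt_top.ne
      exact this
    have hsint : Integrable (fun x => φ x - g x - ∫ y, φ y ∂μ) μ :=
      (hφint.sub hg).sub hcint
    refine ⟨hsint, ?_⟩
    have heq : ∀ M : ℕ, ∫ x, |T M x - (φ x - g x - ∫ y, φ y ∂μ)| ∂μ
        = ∫ x, |P₀^[M+1] φ x - ∫ y, φ y ∂μ| ∂μ := by
      intro M
      apply integral_congr_ae
      filter_upwards [hclaim φ hφint hφeq M] with x hx
      rw [hx]
      have : T M x - (P₀^[M+1] φ x + (g x + T M x) - g x - ∫ y, φ y ∂μ)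
          = -(P₀^[M+1] φ x - ∫ y, φ y ∂μ) := by ring
      rw [this, abs_neg]
    have hshift : Tendsto (fun M : ℕ => ∫ x, |P₀^[M+1] φ x - ∫ y, φ y ∂μ| ∂μ)
        atTop (𝓝 0) := (hexact φ hφint).comp (tendsto_add_atTop_nat 1)
    exact Tendsto.congr (fun M => (heq M).symm) hshift
  -- backward direction
  have hbackward : ∀ s : ℝ → ℝ, Integrable s μ →
      Tendsto (fun M : ℕ => ∫ x, |T M x - s x| ∂μ) atTop (𝓝 0) →
      ∃ φ : ℝ → ℝ, Integrable φ μ ∧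
        ∀ᵐ x ∂μ, φ x = (∑ n, |f' n x| * φ (f n x)) + g x := by
    intro s hsint hconv
    set ψ : ℝ → ℝ := fun x => P₀ g x + P₀ s x with hψ
    have hψint : Integrable ψ μ := ((hlint g hg).1.add (hlint s hsint).1)
    have hTs : ∀ M, Integrable (fun x => T M x - s x) μ := fun M => (hTint M).sub hsint
    have hbound : ∀ M, ∫ x, |T (M+1) x - ψ x| ∂μ ≤ ∫ x, |T M x - s x| ∂μ := by
      intro M
      have hpt : ∀ x, T (M+1) x - ψ x = P₀ (fun y => T M y - s y) x := by
        intro x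
        rw [hTrec M x]
        simp only [hψ, hPsub (fun y => T M y) s x]
        ring
      calc ∫ x, |T (M+1) x - ψ x| ∂μ = ∫ x, |P₀ (fun y => T M y - s y) x| ∂μ := by
            refine integral_congr_ae (Filter.Eventually.of_forall fun x => ?_)
            show |T (M+1) x - ψ x| = |P₀ (fun y => T M y - s y) x|
            rw [hpt x]
        _ ≤ ∫ x, |T M x - s x| ∂μ := (hlint _ (hTs M)).2
    have hzero1 : Tendsto (fun M : ℕ => ∫ x, |T (M+1) x - ψ x| ∂μ) atTop (𝓝 0) :=
      squeeze_zero (fun M => integral_nonneg fun x => abs_nonneg _) hbound hconv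
    have hzero2 : Tendsto (fun M : ℕ => ∫ x, |T (M+1) x - s x| ∂μ) atTop (𝓝 0) :=
      hconv.comp (tendsto_add_atTop_nat 1)
    have hsψ : ∫ x, |s x - ψ x| ∂μ = 0 := by
      have hle : ∀ M : ℕ, ∫ x, |s x - ψ x| ∂μ
          ≤ ∫ x, |T (M+1) x - s x| ∂μ + ∫ x, |T (M+1) x - ψ x| ∂μ := by
        intro M
        have hint1 : Integrable (fun x => |T (M+1) x - s x|) μ := (hTs (M+1)).abs
        have hint2 : Integrable (fun x => |T (M+1) x - ψ x|) μ := ((hTint (M+1)).sub hψint).abs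
        have hint3 : Integrable (fun x => |s x - ψ x|) μ := (hsint.sub hψint).abs
        calc ∫ x, |s x - ψ x| ∂μ
            ≤ ∫ x, (|T (M+1) x - s x| + |T (M+1) x - ψ x|) ∂μ := by
              refine integral_mono hint3 (hint1.add hint2) fun x => ?_
              have h6 := abs_sub_le (s x) (T (M+1) x) (ψ x)
              rw [abs_sub_comm (s x) (T (M+1) x)] at h6
              exact h6
          _ = ∫ x, |T (M+1) x - s x| ∂μ + ∫ x, |T (M+1) x - ψ x| ∂μ :=
              integral_add hint1 hint2
      have h0 : Tendsto (fun M : ℕ => ∫ x, |T (M+1) x - s x| ∂μ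
          + ∫ x, |T (M+1) x - ψ x| ∂μ) atTop (𝓝 0) := by
        simpa using hzero2.add hzero1
      have h1 : ∫ x, |s x - ψ x| ∂μ ≤ 0 := ge_of_tendsto h0 (Eventually.of_forall hle)
      exact le_antisymm h1 (integral_nonneg fun x => abs_nonneg _)
    have haeψ : s =ᵐ[μ] ψ := by
      have habs : (fun x => |s x - ψ x|) =ᵐ[μ] 0 :=
        (integral_eq_zero_iff_of_nonneg (fun x => abs_nonneg _) ((hsint.sub hψint).abs)).1 hsψ
      filter_upwards [habs] with x hx
      have h2 : |s x - ψ x| = 0 := hx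
      have h3 : s x - ψ x = 0 := abs_eq_zero.1 h2
      linarith
    refine ⟨fun x => g x + s x, hg.add hsint, ?_⟩
    filter_upwards [haeψ] with x hx
    have h4 : (∑ n, |f' n x| * (g (f n x) + s (f n x)))
        = (∑ n, |f' n x| * g (f n x)) + (∑ n, |f' n x| * s (f n x)) := by
      rw [← Finset.sum_add_distrib]
      exact Finset.sum_congr rfl fun n _ => by ring
    rw [h4, ← hP₀ g x, ← hP₀ s x]
    have h5 : ψ x = P₀ g x + P₀ s x := rfl
    rw [← h5, ← hx]
    ring
  -- assembling the statement
  constructor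
  · constructor
    · rintro ⟨φ, hφint, hφeq⟩
      obtain ⟨hsint, htend⟩ := hforward φ hφint hφeq
      refine ⟨fun x => φ x - g x - ∫ y, φ y ∂μ, hsint, ?_⟩
      simp only [hT]
      exact htend
    · rintro ⟨s, hsint, hconv⟩
      apply hbackward s hsint
      simp only [hT] at hconv
      exact hconv
  · intro φ hφint hφeq
    obtain ⟨hsint, htend⟩ := hforward φ hφint hφeq
    refine ⟨fun x => φ x - g x - ∫ y, φ y ∂μ, ∫ y, φ y ∂μ, hsint, ?_, ?_⟩
    · simp only [hT]
      exact htend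
    · filter_upwards with x
      ring
end

section
/- Let N ≥ 2 and let f₁, …, f_N : [0,1] → [0,1] be strictly monotone functions such that f_n((0,1)) ∩ f_m((0,1)) = ∅ for all n ≠ m, ⋃_{n=1}^N f_n([0,1]) = [0,1], and each f_n satisfies Luzin's condition N (f_n maps Lebesgue-null sets to Lebesgue-null sets). Define S : [0,1] → [0,1] by S(x) = f_n⁻¹(x) for x ∈ f_n((0,1)) (n = 1, …, N) and S(x) = 0 for x ∉ ⋃_{n=1}^N f_n((0,1)). Then S is nonsingular with respect to Lebesgue measure: for every Borel set A ⊆ [0,1] with Lebesgue measure zero, S⁻¹(A) has Lebesgue measure zero. -/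
open MeasureTheory

/-! Every point of `[0,1]` is `f n x` for some `n` and some `x ∈ [0,1]`. If `x ∈ (0,1)` then
`S (f n x) = x`, so `S (f n x) ∈ A` forces `f n x ∈ f n '' A`; otherwise `x` is an endpoint.
Hence `S⁻¹(A) ∩ [0,1]` lies in `⋃ n, f n '' (A ∪ {0, 1})`, which is null by Luzin's condition N. -/

section BranchInverse

variable {ι α β : Type*}

theorem preimage_inter_iUnion_image_subset (f : ι → α → β) (S : β → α) {U : Set α}
    (hSf : ∀ i, ∀ x ∈ U, S (f i x) = x) (A C : Set α) :
    S ⁻¹' A ∩ ⋃ i, f i '' C ⊆ ⋃ i, f i '' (A ∩ C ∪ C \ U) := by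
  rintro _ ⟨hyA, hyC⟩
  obtain ⟨i, x, hxC, rfl⟩ := Set.mem_iUnion.1 hyC
  refine Set.mem_iUnion.2 ⟨i, x, ?_, rfl⟩
  by_cases hxU : x ∈ U
  · exact Or.inl ⟨by rwa [Set.mem_preimage, hSf i x hxU] at hyA, hxC⟩
  · exact Or.inr ⟨hxC, hxU⟩

theorem measure_preimage_inter_iUnion_image_null [Countable ι] [MeasurableSpace α]
    [MeasurableSpace β] {μ : Measure α} {ν : Measure β}
    (f : ι → α → β) (S : β → α) {U C A : Set α}
    (hLuzin : ∀ i, ∀ B : Set α, B ⊆ C → μ B = 0 → ν (f i '' B) = 0)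
    (hSf : ∀ i, ∀ x ∈ U, S (f i x) = x) (hCU : μ (C \ U) = 0) (hA : μ A = 0) :
    ν (S ⁻¹' A ∩ ⋃ i, f i '' C) = 0 := by
  refine measure_mono_null (preimage_inter_iUnion_image_subset f S hSf A C) ?_
  refine measure_iUnion_null fun i => hLuzin i _ ?_ ?_
  · exact Set.union_subset Set.inter_subset_right Set.sdiff_subset
  · exact measure_union_null (measure_mono_null Set.inter_subset_left hA) hCU

end BranchInverse

theorem stmt3_general (N : ℕ) (f : Fin N → ℝ → ℝ)
    (hcover : (⋃ n, f n '' Set.Icc 0 1) = Set.Icc 0 1)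
    (hLuzin : ∀ n, ∀ A : Set ℝ, A ⊆ Set.Icc 0 1 → volume A = 0 → volume (f n '' A) = 0)
    (S : ℝ → ℝ)
    (hSf : ∀ n, ∀ x ∈ Set.Ioo (0 : ℝ) 1, S (f n x) = x) :
    ∀ A : Set ℝ, MeasurableSet A → A ⊆ Set.Icc 0 1 → volume A = 0 →
      volume (S ⁻¹' A ∩ Set.Icc 0 1) = 0 := by
  intro A _ _ hA
  have hends : volume (Set.Icc (0 : ℝ) 1 \ Set.Ioo 0 1) = 0 := by
    rw [Set.Icc_sdiff_Ioo_same zero_le_one]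
    exact (Set.toFinite _).measure_zero _
  rw [← hcover]
  exact measure_preimage_inter_iUnion_image_null f S hLuzin hSf hends hA

/-- Let `N ≥ 2` and let `f₁, …, f_N : [0,1] → [0,1]` be strictly monotone
functions with `f_n((0,1)) ∩ f_m((0,1)) = ∅` for `n ≠ m`, `⋃ f_n([0,1]) = [0,1]`, each
satisfying Luzin's condition N. Let `S : [0,1] → [0,1]` be defined by `S(x) = f_n⁻¹(x)`
for `x ∈ f_n((0,1))` and `S(x) = 0` otherwise. Then `S` is nonsingular with respect to
Lebesgue measure: `S⁻¹(A)` is Lebesgue-null for every Borel-null `A ⊆ [0,1]`. -/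
theorem stmt3 (N : ℕ) (hN : 2 ≤ N) (f : Fin N → ℝ → ℝ)
    (hmaps : ∀ n, Set.MapsTo (f n) (Set.Icc 0 1) (Set.Icc 0 1))
    (hmono : ∀ n, StrictMonoOn (f n) (Set.Icc 0 1) ∨ StrictAntiOn (f n) (Set.Icc 0 1))
    (hdisj : ∀ n m, n ≠ m →
      Disjoint (f n '' Set.Ioo 0 1) (f m '' Set.Ioo 0 1))
    (hcover : (⋃ n, f n '' Set.Icc 0 1) = Set.Icc 0 1)
    (hLuzin : ∀ n, ∀ A : Set ℝ, A ⊆ Set.Icc 0 1 → volume A = 0 → volume (f n '' A) = 0)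
    (S : ℝ → ℝ) (hSmeas : Measurable S)
    (hSmaps : Set.MapsTo S (Set.Icc 0 1) (Set.Icc 0 1))
    (hSf : ∀ n, ∀ x ∈ Set.Ioo (0 : ℝ) 1, S (f n x) = x)
    (hS0 : ∀ y ∈ Set.Icc (0 : ℝ) 1, y ∉ (⋃ n, f n '' Set.Ioo 0 1) → S y = 0) :
    ∀ A : Set ℝ, MeasurableSet A → A ⊆ Set.Icc 0 1 → volume A = 0 →
      volume (S ⁻¹' A ∩ Set.Icc 0 1) = 0 :=
  stmt3_general N f hcover hLuzin S hSf
end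

section
/- Let N ≥ 2 and let α₁, …, α_N be positive real numbers with ∑_{n=1}^N α_n = 1. Put β_n = ∑_{k=1}^{n−1} α_k and f_n(x) = α_n x + β_n for x ∈ [0,1] and n = 1, …, N. Define S : [0,1) → [0,1) by S(x) = (x − β_n)/α_n for x ∈ (β_n, β_n + α_n) (n = 1, …, N) and S(x) = 0 for x ∉ ⋃_{n=1}^N (β_n, β_n + α_n). Fix ε ∈ [0,1] and two distinct indices p, q ∈ {1, …, N}, and define ξ : {1, …, N} → ℝ by ξ(p) = ε·min{α_p, α_q}, ξ(q) = −ε·min{α_p, α_q}, and ξ(n) = 0 for n ∉ {p, q}. Then there exists a Borel probability measure ν on [0,1) such that: (i) for every k ∈ ℕ and all n₁, …, n_k ∈ {1, …, N}, ν([F(0), F(1))) = (α_{n_k} + ξ(n_k))·∏_{i=1}^{k−1} α_{n_i}, where F = f_{n_k} ∘ f_{n_{k−1}} ∘ ⋯ ∘ f_{n_1}; and (ii) |ν(S⁻¹(B)) − ν(B)| ≤ ε·l(B) for every Borel set B ⊆ [0,1), where l denotes Lebesgue measure. In particular, ν is ε-invariant under S with respect to Lebesgue measure on [0,1). -/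
open MeasureTheory Filter Topology

lemma compList_concat {N : ℕ} (f : Fin N → ℝ → ℝ) (l : List (Fin N)) (m : Fin N) (x : ℝ) :
    compList f (l ++ [m]) x = f m (compList f l x) := by
  induction l generalizing x with
  | nil => rfl
  | cons n l ih =>
    show compList f (l ++ [m]) (f n x) = _
    rw [ih]
    rfl

lemma compList_affine {N : ℕ} (α β : Fin N → ℝ) (l : List (Fin N)) (x : ℝ) :
    compList (fun n x => α n * x + β n) l x
      = (l.map α).prod * x + compList (fun n x => α n * x + β n) l 0 := by
  induction l generalizing x with
  | nil => simp [compList]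
  | cons n l ih =>
    simp only [compList, List.map_cons, List.prod_cons]
    rw [ih (α n * x + β n), ih (α n * 0 + β n)]
    ring

lemma compList_mem {N : ℕ} (α β : Fin N → ℝ) (hα : ∀ n, 0 < α n)
    (hβ0 : ∀ n, 0 ≤ β n) (hβ1 : ∀ n, β n + α n ≤ 1)
    (l : List (Fin N)) (x : ℝ) (hx : x ∈ Set.Icc (0:ℝ) 1) :
    compList (fun n x => α n * x + β n) l x ∈ Set.Icc (0:ℝ) 1 := by
  induction l generalizing x with
  | nil => exact hx
  | cons n l ih =>
    apply ih
    obtain ⟨h0, h1⟩ := hx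
    simp only [Set.mem_Icc]
    constructor
    · have := (hα n).le
      nlinarith [hβ0 n]
    · have h := hβ1 n
      nlinarith [(hα n).le]

/-- Let `N ≥ 2`, `α₁, …, α_N > 0` with `∑ αₙ = 1`, `βₙ = ∑_{k<n} α_k`, and
`fₙ(x) = αₙ x + βₙ`. Let `S : [0,1) → [0,1)` be given by `S(x) = (x − βₙ)/αₙ` on
`(βₙ, βₙ + αₙ)` and `S(x) = 0` elsewhere. Fix `ε ∈ [0,1]`, distinct `p, q` and `ξ` with
`ξ(p) = ε·min{α_p, α_q}`, `ξ(q) = −ε·min{α_p, α_q}`, `ξ(n) = 0` otherwise. Then there is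
a Borel probability measure `ν` on `[0,1)` with
`ν([F(0), F(1))) = (α_{n_k} + ξ(n_k))·∏_{i=1}^{k−1} α_{n_i}` for
`F = f_{n_k} ∘ ⋯ ∘ f_{n_1}`, and `|ν(S⁻¹(B)) − ν(B)| ≤ ε·l(B)` for every Borel
`B ⊆ [0,1)`; in particular `ν` is `ε`-invariant under `S`. -/
theorem stmt6 (N : ℕ) (hN : 2 ≤ N) (α : Fin N → ℝ) (hα : ∀ n, 0 < α n)
    (hsum : ∑ n, α n = 1)
    (β : Fin N → ℝ)
    (hβ : ∀ n, β n = ∑ k ∈ Finset.univ.filter (fun k : Fin N => k < n), α k)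
    (S : ℝ → ℝ) (hSmeas : Measurable S)
    (hSmaps : Set.MapsTo S (Set.Ico 0 1) (Set.Ico 0 1))
    (hSin : ∀ n, ∀ x ∈ Set.Ioo (β n) (β n + α n), S x = (x - β n) / α n)
    (hSout : ∀ x ∈ Set.Ico (0 : ℝ) 1,
      x ∉ (⋃ n, Set.Ioo (β n) (β n + α n)) → S x = 0)
    (ε : ℝ) (hε0 : 0 ≤ ε) (hε1 : ε ≤ 1)
    (p q : Fin N) (hpq : p ≠ q)
    (ξ : Fin N → ℝ)
    (hξp : ξ p = ε * min (α p) (α q))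
    (hξq : ξ q = -(ε * min (α p) (α q)))
    (hξ0 : ∀ n, n ≠ p → n ≠ q → ξ n = 0) :
    ∃ ν : Measure ℝ, IsProbabilityMeasure ν ∧ ν (Set.Ico 0 1) = 1 ∧
      (∀ k : ℕ, ∀ w : Fin (k + 1) → Fin N,
        ν (Set.Ico (compList (fun n x => α n * x + β n) (List.ofFn w) 0)
              (compList (fun n x => α n * x + β n) (List.ofFn w) 1)) =
          ENNReal.ofReal ((α (w (Fin.last k)) + ξ (w (Fin.last k))) *
            ∏ i : Fin k, α (w i.castSucc))) ∧
      (∀ B : Set ℝ, MeasurableSet B → B ⊆ Set.Ico 0 1 →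
        |(ν (S ⁻¹' B ∩ Set.Ico 0 1)).toReal - (ν B).toReal| ≤
          ε * (volume B).toReal) := by
  -- ξ bounds
  have hξ_abs : ∀ n, |ξ n| ≤ ε * α n := by
    intro n
    have hmin : (0:ℝ) ≤ min (α p) (α q) := le_min (hα p).le (hα q).le
    have hεmin : 0 ≤ ε * min (α p) (α q) := mul_nonneg hε0 hmin
    rcases eq_or_ne n p with rfl | hp
    · rw [hξp, abs_of_nonneg hεmin]
      exact mul_le_mul_of_nonneg_left (min_le_left _ _) hε0
    · rcases eq_or_ne n q with rfl | hq
      · rw [hξq, abs_neg, abs_of_nonneg hεmin]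
        exact mul_le_mul_of_nonneg_left (min_le_right _ _) hε0
      · rw [hξ0 n hp hq, abs_zero]; exact mul_nonneg hε0 (hα n).le
  set c : Fin N → ℝ := fun n => 1 + ξ n / α n with hc_def
  have hc_abs : ∀ n, |c n - 1| ≤ ε := by
    intro n
    have : c n - 1 = ξ n / α n := by simp [hc_def]
    rw [this, abs_div, abs_of_pos (hα n), div_le_iff₀ (hα n)]
    exact hξ_abs n
  have hc0 : ∀ n, 0 ≤ c n := by
    intro n
    have h := (abs_le.mp (hc_abs n)).1
    linarith
  have hcα : ∀ n, c n * α n = α n + ξ n := by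
    intro n
    show (1 + ξ n / α n) * α n = α n + ξ n
    rw [add_mul, div_mul_cancel₀ _ (hα n).ne', one_mul]
  -- β facts
  have hβle : ∀ n : Fin N, β n + α n = ∑ k ∈ Finset.univ.filter (fun k : Fin N => k ≤ n), α k := by
    intro n
    rw [hβ n]
    have : Finset.univ.filter (fun k : Fin N => k ≤ n)
        = insert n (Finset.univ.filter (fun k : Fin N => k < n)) := by
      ext k
      simp [le_iff_lt_or_eq, or_comm]
    rw [this, Finset.sum_insert (by simp)]
    ring
  have hβ0 : ∀ n, 0 ≤ β n := by
    intro n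
    rw [hβ n]
    exact Finset.sum_nonneg fun k _ => (hα k).le
  have hβ1 : ∀ n, β n + α n ≤ 1 := by
    intro n
    rw [hβle n, ← hsum]
    exact Finset.sum_le_sum_of_subset_of_nonneg (Finset.filter_subset _ _)
      (fun k _ _ => (hα k).le)
  have hβlt : ∀ n m : Fin N, n < m → β n + α n ≤ β m := by
    intro n m hnm
    rw [hβle n, hβ m]
    apply Finset.sum_le_sum_of_subset_of_nonneg
    · intro k hk
      simp only [Finset.mem_filter, Finset.mem_univ, true_and] at hk ⊢
      exact lt_of_le_of_lt hk hnm
    · exact fun k _ _ => (hα k).le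
  set cell : Fin N → Set ℝ := fun n => Set.Ico (β n) (β n + α n) with hcell_def
  have hcell_meas : ∀ n, MeasurableSet (cell n) := fun n => measurableSet_Ico
  have hcell_sub : ∀ n, cell n ⊆ Set.Ico (0:ℝ) 1 := by
    intro n x hx
    exact ⟨le_trans (hβ0 n) hx.1, lt_of_lt_of_le hx.2 (hβ1 n)⟩
  have hcell_disj : ∀ n m : Fin N, n ≠ m → Disjoint (cell n) (cell m) := by
    intro n m hnm
    rw [Set.disjoint_left]
    intro x hxn hxm
    rcases hnm.lt_or_gt with h | h
    · have := hβlt n m h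
      exact absurd hxm.1 (by linarith [hxn.2])
    · have := hβlt m n h
      exact absurd hxn.1 (by linarith [hxm.2])
  have hβsucc : ∀ n m : Fin N, n.1 + 1 = m.1 → β m = β n + α n := by
    intro n m hnm
    rw [hβ m, hβle n]
    congr 1
    ext k
    simp only [Finset.mem_filter, Finset.mem_univ, true_and, Fin.lt_def, Fin.le_def]
    omega
  have hN0 : 0 < N := by omega
  have hcover : Set.Ico (0:ℝ) 1 ⊆ ⋃ n, cell n := by
    intro x hx
    obtain ⟨hx0, hx1⟩ := hx
    have hzero : β ⟨0, hN0⟩ = 0 := by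
      rw [hβ]
      apply Finset.sum_eq_zero
      intro k hk
      simp only [Finset.mem_filter, Finset.mem_univ, true_and, Fin.lt_def] at hk
      omega
    set T : Finset (Fin N) := Finset.univ.filter (fun n => β n ≤ x) with hT
    have hTne : T.Nonempty := ⟨⟨0, hN0⟩, by simp [hT, hzero, hx0]⟩
    set n := T.max' hTne with hn
    have hnx : β n ≤ x := by
      have := T.max'_mem hTne
      simp only [hT, Finset.mem_filter, Finset.mem_univ, true_and] at this
      exact this
    refine Set.mem_iUnion.mpr ⟨n, hnx, ?_⟩
    by_contra hcon
    push_neg at hcon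
    by_cases hn1 : n.1 + 1 < N
    · set m : Fin N := ⟨n.1 + 1, hn1⟩ with hm
      have hmx : β m ≤ x := by
        rw [hβsucc n m rfl]
        linarith
      have hmem : m ∈ T := by simp [hT, hmx]
      have hle := Finset.le_max' T m hmem
      rw [← hn] at hle
      have : n < m := by simp [hm, Fin.lt_def]
      exact absurd hle (not_le.mpr this)
    · have hfull : Finset.univ.filter (fun k : Fin N => k ≤ n) = Finset.univ := by
        apply Finset.filter_true_of_mem
        intro k _
        have := k.2
        simp only [Fin.le_def]
        omega
      have : β n + α n = 1 := by rw [hβle n, hfull, hsum]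
      linarith
  -- the measure
  set ν : Measure ℝ :=
    ∑ n ∈ Finset.univ, (ENNReal.ofReal (c n)) • (volume.restrict (cell n)) with hνdef
  have hνapp : ∀ A : Set ℝ, ν A = ∑ n, ENNReal.ofReal (c n) * volume (A ∩ cell n) := by
    intro A
    rw [hνdef, Measure.finset_sum_apply]
    refine Finset.sum_congr rfl fun n _ => ?_
    rw [Measure.smul_apply, Measure.restrict_apply' (hcell_meas n), smul_eq_mul]
  have hν_sub : ∀ (A : Set ℝ) (m : Fin N), A ⊆ cell m →
      ν A = ENNReal.ofReal (c m) * volume A := by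
    intro A m hAm
    rw [hνapp]
    rw [Finset.sum_eq_single m]
    · rw [Set.inter_eq_left.mpr hAm]
    · intro n _ hnm
      have hAe : A ∩ cell n = ∅ := by
        apply Set.eq_empty_iff_forall_notMem.mpr
        intro x hxmem
        exact (hcell_disj m n (Ne.symm hnm)).le_bot ⟨hAm hxmem.1, hxmem.2⟩
      rw [hAe, measure_empty, mul_zero]
    · simp
  have hsumξ : ∑ n, ξ n = 0 := by
    have h1 : ∑ n ∈ ({p, q} : Finset (Fin N)), ξ n = ∑ n, ξ n := by
      apply Finset.sum_subset (Finset.subset_univ _)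
      intro n _ hn
      simp only [Finset.mem_insert, Finset.mem_singleton, not_or] at hn
      exact hξ0 n hn.1 hn.2
    rw [← h1, Finset.sum_pair hpq, hξp, hξq]
    ring
  have hsumcα : ∑ n, c n * α n = 1 := by
    simp_rw [hcα]
    rw [Finset.sum_add_distrib, hsum, hsumξ]
    ring
  have hν_one : ∀ A : Set ℝ, (∀ n, cell n ⊆ A) → ν A = 1 := by
    intro A hA
    rw [hνapp]
    have : ∀ n : Fin N, A ∩ cell n = cell n := fun n => Set.inter_eq_right.mpr (hA n)
    calc ∑ n, ENNReal.ofReal (c n) * volume (A ∩ cell n)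
        = ∑ n, ENNReal.ofReal (c n * α n) := by
          refine Finset.sum_congr rfl fun n _ => ?_
          rw [this n, hcell_def]
          simp only [Real.volume_Ico, add_sub_cancel_left]
          rw [← ENNReal.ofReal_mul (hc0 n)]
      _ = ENNReal.ofReal (∑ n, c n * α n) := by
          rw [ENNReal.ofReal_sum_of_nonneg]
          intro n _
          exact mul_nonneg (hc0 n) (hα n).le
      _ = 1 := by rw [hsumcα, ENNReal.ofReal_one]
  have hprob : IsProbabilityMeasure ν := ⟨hν_one Set.univ (fun n => Set.subset_univ _)⟩
  have hν01 : ν (Set.Ico 0 1) = 1 := hν_one _ hcell_sub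
  refine ⟨ν, hprob, hν01, ?_, ?_⟩
  · -- part (i)
    intro k w
    set f : Fin N → ℝ → ℝ := fun n x => α n * x + β n with hf
    set m := w (Fin.last k) with hm
    set l' := List.ofFn fun i : Fin k => w i.castSucc with hl'
    have hsplit : List.ofFn w = l' ++ [m] := by
      rw [List.ofFn_succ' w, List.concat_eq_append]
    set G := compList f l' with hG
    have hG0 : G 0 ∈ Set.Icc (0:ℝ) 1 := compList_mem α β hα hβ0 hβ1 l' 0 (by norm_num)
    have hG1 : G 1 ∈ Set.Icc (0:ℝ) 1 := compList_mem α β hα hβ0 hβ1 l' 1 (by norm_num)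
    set P := (l'.map α).prod with hPdef
    have hP : P = ∏ i : Fin k, α (w i.castSucc) := by
      rw [hPdef, hl', List.map_ofFn, List.prod_ofFn]
      rfl
    have hPnn : 0 ≤ P := by
      rw [hP]
      exact Finset.prod_nonneg fun i _ => (hα _).le
    have hG10 : G 1 = P + G 0 := by
      rw [hG, compList_affine α β l' 1]
      simp [hPdef]
      rfl
    have hF0 : compList f (List.ofFn w) 0 = f m (G 0) := by
      rw [hsplit, compList_concat]
    have hF1 : compList f (List.ofFn w) 1 = f m (G 1) := by
      rw [hsplit, compList_concat]
    have hsub : Set.Ico (f m (G 0)) (f m (G 1)) ⊆ cell m := by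
      intro x hx
      have h1 : β m ≤ f m (G 0) := by
        simp only [hf]
        nlinarith [hG0.1, (hα m).le]
      have h2 : f m (G 1) ≤ β m + α m := by
        simp only [hf]
        nlinarith [hG1.2, (hα m).le]
      exact ⟨le_trans h1 hx.1, lt_of_lt_of_le hx.2 h2⟩
    rw [hF0, hF1, hν_sub _ m hsub, Real.volume_Ico]
    have hdiff : f m (G 1) - f m (G 0) = α m * P := by
      simp only [hf, hG10]
      ring
    rw [hdiff, ← ENNReal.ofReal_mul (hc0 m), ← hP]
    congr 1
    have := hcα m
    nlinarith [this]
  · -- part (ii)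
    intro B hB hBsub
    have hIcofin : volume (Set.Ico (0:ℝ) 1) ≠ ⊤ := by
      rw [Real.volume_Ico]
      exact ENNReal.ofReal_ne_top
    have hBfin : volume B ≠ ⊤ :=
      fun h => hIcofin (top_le_iff.mp (h ▸ measure_mono hBsub))
    set v : Fin N → ENNReal := fun n => volume (B ∩ cell n) with hv
    have hvfin : ∀ n, v n ≠ ⊤ := by
      intro n h
      exact hBfin (top_le_iff.mp (h ▸ measure_mono Set.inter_subset_left))
    have hvol_sum : volume B = ∑ n, v n := by
      have hBeq : B = ⋃ n ∈ Finset.univ, B ∩ cell n := by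
        ext x
        simp only [Set.mem_iUnion, Finset.mem_univ, exists_prop, true_and, Set.mem_inter_iff]
        constructor
        · intro hx
          obtain ⟨n, hn⟩ := Set.mem_iUnion.mp (hcover (hBsub hx))
          exact ⟨n, hx, hn⟩
        · rintro ⟨n, hx, _⟩
          exact hx
      conv_lhs => rw [hBeq]
      rw [measure_biUnion_finset]
      · intro n _ m _ hnm
        exact (hcell_disj n m hnm).mono Set.inter_subset_right Set.inter_subset_right
      · exact fun n _ => hB.inter (hcell_meas n)
    have key_n : ∀ n, volume (S ⁻¹' B ∩ Set.Ico 0 1 ∩ cell n)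
        = ENNReal.ofReal (α n) * volume B := by
      intro n
      have h1 : S ⁻¹' B ∩ Set.Ico 0 1 ∩ cell n = S ⁻¹' B ∩ cell n := by
        rw [Set.inter_assoc]
        congr 1
        exact Set.inter_eq_right.mpr (hcell_sub n)
      set g : ℝ → ℝ := fun x => (α n)⁻¹ * (-β n + x) with hg
      have hgeq : ∀ x, g x = (x - β n) / α n := by
        intro x
        simp only [hg, div_eq_inv_mul]
        ring
      have hIoo : S ⁻¹' B ∩ Set.Ioo (β n) (β n + α n)
          = g ⁻¹' B ∩ Set.Ioo (β n) (β n + α n) := by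
        ext x
        simp only [Set.mem_inter_iff, Set.mem_preimage]
        constructor
        · rintro ⟨hxB, hxI⟩
          refine ⟨?_, hxI⟩
          rw [hgeq, ← hSin n x hxI]
          exact hxB
        · rintro ⟨hxB, hxI⟩
          refine ⟨?_, hxI⟩
          rw [hSin n x hxI, ← hgeq]
          exact hxB
      have hg_sub : g ⁻¹' B ⊆ cell n := by
        intro x hx
        obtain ⟨h0, h1'⟩ := hBsub hx
        rw [hgeq] at h0 h1'
        rw [le_div_iff₀ (hα n)] at h0
        rw [div_lt_one (hα n)] at h1'
        constructor
        · linarith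
        · linarith
      have e1 : volume (S ⁻¹' B ∩ cell n) = volume (g ⁻¹' B) := by
        apply le_antisymm
        · have hsub1 : S ⁻¹' B ∩ cell n ⊆ g ⁻¹' B ∪ {β n} := by
            rintro x ⟨hxB, hxc⟩
            rcases eq_or_lt_of_le hxc.1 with heq | hlt
            · right
              simp [← heq]
            · left
              have : x ∈ g ⁻¹' B ∩ Set.Ioo (β n) (β n + α n) := by
                rw [← hIoo]
                exact ⟨hxB, hlt, hxc.2⟩
              exact this.1
          calc volume (S ⁻¹' B ∩ cell n) ≤ volume (g ⁻¹' B ∪ {β n}) := measure_mono hsub1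
            _ ≤ volume (g ⁻¹' B) + volume ({β n} : Set ℝ) := measure_union_le _ _
            _ = volume (g ⁻¹' B) := by rw [Real.volume_singleton, add_zero]
        · have hsub2 : g ⁻¹' B ⊆ (S ⁻¹' B ∩ cell n) ∪ {β n} := by
            intro x hx
            rcases eq_or_lt_of_le (hg_sub hx).1 with heq | hlt
            · right
              simp [← heq]
            · left
              have hxI : x ∈ Set.Ioo (β n) (β n + α n) := ⟨hlt, (hg_sub hx).2⟩
              have : x ∈ S ⁻¹' B ∩ Set.Ioo (β n) (β n + α n) := by
                rw [hIoo]
                exact ⟨hx, hxI⟩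
              exact ⟨this.1, hg_sub hx⟩
          calc volume (g ⁻¹' B) ≤ volume ((S ⁻¹' B ∩ cell n) ∪ {β n}) := measure_mono hsub2
            _ ≤ volume (S ⁻¹' B ∩ cell n) + volume ({β n} : Set ℝ) := measure_union_le _ _
            _ = volume (S ⁻¹' B ∩ cell n) := by rw [Real.volume_singleton, add_zero]
      have e2 : volume (g ⁻¹' B) = ENNReal.ofReal (α n) * volume B := by
        have hcomp : g ⁻¹' B = (fun x => -β n + x) ⁻¹' ((fun y => (α n)⁻¹ * y) ⁻¹' B) := rfl
        rw [hcomp, measure_preimage_add, Real.volume_preimage_mul_left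
          (inv_ne_zero (hα n).ne') B, inv_inv, abs_of_pos (hα n)]
      rw [h1, e1, e2]
    have hν_pre : ν (S ⁻¹' B ∩ Set.Ico 0 1) = volume B := by
      rw [hνapp]
      calc ∑ n, ENNReal.ofReal (c n) * volume (S ⁻¹' B ∩ Set.Ico 0 1 ∩ cell n)
          = ∑ n, ENNReal.ofReal (c n * α n) * volume B := by
            refine Finset.sum_congr rfl fun n _ => ?_
            rw [key_n n, ENNReal.ofReal_mul (hc0 n), mul_assoc]
        _ = ENNReal.ofReal (∑ n, c n * α n) * volume B := by
            rw [← Finset.sum_mul, ENNReal.ofReal_sum_of_nonneg]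
            intro n _
            exact mul_nonneg (hc0 n) (hα n).le
        _ = volume B := by rw [hsumcα, ENNReal.ofReal_one, one_mul]
    have hνB : (ν B).toReal = ∑ n, c n * (v n).toReal := by
      rw [hνapp B, ENNReal.toReal_sum]
      · refine Finset.sum_congr rfl fun n _ => ?_
        rw [ENNReal.toReal_mul, ENNReal.toReal_ofReal (hc0 n)]
      · intro n _
        exact ENNReal.mul_ne_top ENNReal.ofReal_ne_top (hvfin n)
    have hvB : (volume B).toReal = ∑ n, (v n).toReal := by
      rw [hvol_sum, ENNReal.toReal_sum (fun n _ => hvfin n)]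
    rw [hν_pre, hνB]
    calc |(volume B).toReal - ∑ n, c n * (v n).toReal|
        = |∑ n, (1 - c n) * (v n).toReal| := by
          rw [hvB, ← Finset.sum_sub_distrib]
          congr 1
          refine Finset.sum_congr rfl fun n _ => ?_
          ring
      _ ≤ ∑ n, |(1 - c n) * (v n).toReal| := Finset.abs_sum_le_sum_abs _ _
      _ ≤ ∑ n, ε * (v n).toReal := by
          refine Finset.sum_le_sum fun n _ => ?_
          rw [abs_mul, abs_of_nonneg ENNReal.toReal_nonneg]
          refine mul_le_mul_of_nonneg_right ?_ ENNReal.toReal_nonneg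
          rw [abs_sub_comm]
          exact hc_abs n
      _ = ε * (volume B).toReal := by rw [← Finset.mul_sum, hvB]
end

section
/- Let N ≥ 2, let α₁, …, α_N be non-zero real numbers with ∑_{n=1}^N |α_n| = 1, put β_n = ∑_{k=1}^n |α_k| − (|α_n| + α_n)/2 and f_n(x) = α_n x + β_n for x ∈ [0,1], and define S : [0,1] → [0,1] by S(x) = f_n⁻¹(x) for x ∈ f_n((0,1)) (n = 1, …, N) and S(x) = 0 for x ∉ ⋃_{n=1}^N f_n((0,1)). Fix ε ∈ [0,1] and real numbers γ₁, …, γ_N ∈ [−ε, ε] with ∑_{n=1}^N |α_n| γ_n = 0, and put I_n = (min{f_n(0), f_n(1)}, max{f_n(0), f_n(1)}). Then the formula ν(A) = ∑_{n=1}^N (1 + γ_n)·l(A ∩ I_n) for Borel sets A ⊆ [0,1] defines a Borel probability measure on [0,1] that is ε-invariant under S with respect to Lebesgue measure l. -/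
open MeasureTheory Filter Topology

lemma vol_image_affine (a b : ℝ) (ha : a ≠ 0) (s : Set ℝ) :
    volume ((fun x => a * x + b) '' s) = ENNReal.ofReal |a| * volume s := by
  have himg : (fun x => a * x + b) '' s = (fun y => a⁻¹ * (y - b)) ⁻¹' s := by
    ext y
    constructor
    · rintro ⟨x, hx, rfl⟩
      show a⁻¹ * (a * x + b - b) ∈ s
      have hxx : a⁻¹ * (a * x + b - b) = x := by field_simp; ring
      rw [hxx]; exact hx
    · intro hy
      exact ⟨a⁻¹ * (y - b), hy, by field_simp; ring⟩
  have hcomp : (fun y => a⁻¹ * (y - b)) ⁻¹' s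
      = (fun y : ℝ => y - b) ⁻¹' ((fun z : ℝ => a⁻¹ * z) ⁻¹' s) := rfl
  rw [himg, hcomp]
  have h1 : volume ((fun y : ℝ => y - b) ⁻¹' ((fun z : ℝ => a⁻¹ * z) ⁻¹' s))
      = volume ((fun z : ℝ => a⁻¹ * z) ⁻¹' s) := by
    simp only [sub_eq_add_neg]
    exact measure_preimage_add_right volume (-b) ((fun z : ℝ => a⁻¹ * z) ⁻¹' s)
  rw [h1]
  have := Real.volume_preimage_mul_left (inv_ne_zero ha) s
  simpa [inv_inv] using this

/-- Let `N ≥ 2`, let `α₁, …, α_N` be non-zero reals with `∑ |αₙ| = 1`,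
`βₙ = ∑_{k≤n} |α_k| − (|αₙ| + αₙ)/2`, `fₙ(x) = αₙ x + βₙ`, and let `S : [0,1] → [0,1]` be
given by `S(x) = fₙ⁻¹(x)` on `fₙ((0,1))` and `S(x) = 0` elsewhere. Fix `ε ∈ [0,1]` and
`γ₁, …, γ_N ∈ [−ε, ε]` with `∑ |αₙ| γₙ = 0`, and put
`Iₙ = (min{fₙ(0), fₙ(1)}, max{fₙ(0), fₙ(1)})`. Then `ν(A) = ∑ₙ (1 + γₙ) l(A ∩ Iₙ)`
defines a Borel probability measure on `[0,1]` that is `ε`-invariant under `S` with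
respect to Lebesgue measure `l`. -/
theorem stmt9 (N : ℕ) (hN : 2 ≤ N) (α : Fin N → ℝ) (hα : ∀ n, α n ≠ 0)
    (hsum : ∑ n, |α n| = 1)
    (β : Fin N → ℝ)
    (hβ : ∀ n, β n =
      (∑ k ∈ Finset.univ.filter (fun k : Fin N => k ≤ n), |α k|) - (|α n| + α n) / 2)
    (S : ℝ → ℝ) (hSmeas : Measurable S)
    (hSmaps : Set.MapsTo S (Set.Icc 0 1) (Set.Icc 0 1))
    (hSin : ∀ n : Fin N, ∀ x ∈ Set.Ioo (0 : ℝ) 1, S (α n * x + β n) = x)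
    (hSout : ∀ y ∈ Set.Icc (0 : ℝ) 1,
      y ∉ (⋃ n, (fun x => α n * x + β n) '' Set.Ioo 0 1) → S y = 0)
    (ε : ℝ) (hε0 : 0 ≤ ε) (hε1 : ε ≤ 1)
    (γ : Fin N → ℝ) (hγ : ∀ n, |γ n| ≤ ε)
    (hγ0 : ∑ n, |α n| * γ n = 0) :
    ∃ ν : Measure ℝ, IsProbabilityMeasure ν ∧
      (∀ A : Set ℝ, MeasurableSet A → (ν A).toReal =
        ∑ n, (1 + γ n) *
          (volume (A ∩ Set.Ioo (min (β n) (α n * 1 + β n))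
            (max (β n) (α n * 1 + β n)))).toReal) ∧
      (∀ A : Set ℝ, MeasurableSet A → A ⊆ Set.Icc 0 1 →
        |(ν (S ⁻¹' A ∩ Set.Icc 0 1)).toReal - (ν A).toReal| ≤
          ε * (volume A).toReal) := by
  classical
  -- partial sums
  set C : ℕ → ℝ := fun m => ∑ k ∈ Finset.univ.filter (fun k : Fin N => (k : ℕ) < m), |α k|
    with hCdef
  have hC0 : C 0 = 0 := by simp [hCdef]
  have hCN : C N = 1 := by
    show (∑ k ∈ Finset.univ.filter (fun k : Fin N => (k : ℕ) < N), |α k|) = 1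
    rw [Finset.filter_true_of_mem (fun (k : Fin N) _ => k.isLt)]
    exact hsum
  have hCstep : ∀ n : Fin N, C ((n : ℕ) + 1) = C (n : ℕ) + |α n| := by
    intro n
    have hins : Finset.univ.filter (fun k : Fin N => (k : ℕ) < (n : ℕ) + 1)
        = insert n (Finset.univ.filter (fun k : Fin N => (k : ℕ) < (n : ℕ))) := by
      ext k
      simp only [Finset.mem_filter, Finset.mem_univ, true_and, Finset.mem_insert,
        Nat.lt_succ_iff_lt_or_eq]
      constructor
      · rintro (h | h)
        · exact Or.inr h
        · exact Or.inl (Fin.ext h)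
      · rintro (h | h)
        · exact Or.inr (by rw [h])
        · exact Or.inl h
    rw [hCdef]
    simp only
    rw [hins, Finset.sum_insert (by simp)]
    ring
  have hCmono : Monotone C := by
    intro m m' h
    apply Finset.sum_le_sum_of_subset_of_nonneg
    · intro k hk
      simp only [Finset.mem_filter, Finset.mem_univ, true_and] at hk ⊢
      omega
    · intro k _ _; exact abs_nonneg _
  have hβ' : ∀ n : Fin N, β n = C ((n : ℕ) + 1) - (|α n| + α n) / 2 := by
    intro n
    rw [hβ n]
    congr 1
    apply Finset.sum_congr _ (fun _ _ => rfl)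
    ext k
    simp only [Finset.mem_filter, Finset.mem_univ, true_and, Fin.le_def, Nat.lt_succ_iff]
  have hpos : ∀ n : Fin N, 0 < α n → β n = C (n : ℕ) ∧ α n + β n = C ((n : ℕ) + 1) := by
    intro n h
    have habs : |α n| = α n := abs_of_pos h
    have := hCstep n
    constructor <;> (rw [hβ' n, habs]; linarith)
  have hneg : ∀ n : Fin N, α n < 0 → β n = C ((n : ℕ) + 1) ∧ α n + β n = C (n : ℕ) := by
    intro n h
    have habs : |α n| = -α n := abs_of_neg h
    have := hCstep n
    constructor <;> (rw [hβ' n, habs]; linarith)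
  -- interval identification
  set I : Fin N → Set ℝ := fun n => Set.Ioo (C (n : ℕ)) (C ((n : ℕ) + 1)) with hIdef
  have hI : ∀ n : Fin N, Set.Ioo (min (β n) (α n * 1 + β n)) (max (β n) (α n * 1 + β n))
      = I n := by
    intro n
    rw [mul_one]
    rcases lt_or_gt_of_ne (hα n) with h | h
    · obtain ⟨h1, h2⟩ := hneg n h
      have hmin : min (β n) (α n + β n) = C (n : ℕ) := by
        rw [min_eq_right (by linarith), h2]
      have hmax : max (β n) (α n + β n) = C ((n : ℕ) + 1) := by
        rw [max_eq_left (by linarith), h1]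
      rw [hmin, hmax]
    · obtain ⟨h1, h2⟩ := hpos n h
      have hmin : min (β n) (α n + β n) = C (n : ℕ) := by
        rw [min_eq_left (by linarith), h1]
      have hmax : max (β n) (α n + β n) = C ((n : ℕ) + 1) := by
        rw [max_eq_right (by linarith), h2]
      rw [hmin, hmax]
  have hImeas : ∀ n, MeasurableSet (I n) := fun n => measurableSet_Ioo
  have hIlen : ∀ n, volume (I n) = ENNReal.ofReal |α n| := by
    intro n
    rw [hIdef]
    simp only [Real.volume_Ioo]
    congr 1
    rw [hCstep n]; ring
  have hIsub : ∀ n, I n ⊆ Set.Ioo 0 1 := by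
    intro n
    apply Set.Ioo_subset_Ioo
    · rw [← hC0]; exact hCmono (Nat.zero_le _)
    · rw [← hCN]; exact hCmono n.isLt
  have h1γ : ∀ n, (0 : ℝ) ≤ 1 + γ n := by
    intro n
    have := hγ n
    have := neg_abs_le (γ n)
    linarith
  -- the measure
  set ν : Measure ℝ := ∑ n : Fin N, (ENNReal.ofReal (1 + γ n)) • volume.restrict (I n)
    with hνdef
  have hνapp : ∀ A : Set ℝ, MeasurableSet A →
      ν A = ∑ n, ENNReal.ofReal (1 + γ n) * volume (A ∩ I n) := by
    intro A hA
    rw [hνdef]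
    rw [Measure.finset_sum_apply]
    apply Finset.sum_congr rfl
    intro n _
    rw [Measure.smul_apply, Measure.restrict_apply hA, smul_eq_mul]
  have hsum1 : ∑ n, (1 + γ n) * |α n| = 1 := by
    have hterm : ∀ n : Fin N, (1 + γ n) * |α n| = |α n| + |α n| * γ n := fun n => by ring
    rw [Finset.sum_congr rfl (fun n _ => hterm n), Finset.sum_add_distrib, hsum, hγ0, add_zero]
  have hνprob : IsProbabilityMeasure ν := by
    constructor
    rw [hνapp Set.univ MeasurableSet.univ]
    have hterm : ∀ n : Fin N, ENNReal.ofReal (1 + γ n) * volume (Set.univ ∩ I n)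
        = ENNReal.ofReal ((1 + γ n) * |α n|) := by
      intro n
      rw [Set.univ_inter, hIlen n, ← ENNReal.ofReal_mul (h1γ n)]
    rw [Finset.sum_congr rfl (fun n _ => hterm n),
      ← ENNReal.ofReal_sum_of_nonneg (fun n _ => mul_nonneg (h1γ n) (abs_nonneg _)), hsum1,
      ENNReal.ofReal_one]
  have hfin : ∀ (A : Set ℝ) (n : Fin N), volume (A ∩ I n) ≠ ⊤ := by
    intro A n
    exact ne_top_of_le_ne_top (by rw [hIlen n]; exact ENNReal.ofReal_ne_top)
      (measure_mono Set.inter_subset_right)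
  have hνtoReal : ∀ A : Set ℝ, MeasurableSet A →
      (ν A).toReal = ∑ n, (1 + γ n) * (volume (A ∩ I n)).toReal := by
    intro A hA
    rw [hνapp A hA,
      ENNReal.toReal_sum (fun n _ => ENNReal.mul_ne_top ENNReal.ofReal_ne_top (hfin A n))]
    exact Finset.sum_congr rfl fun n _ => by
      rw [ENNReal.toReal_mul, ENNReal.toReal_ofReal (h1γ n)]
  refine ⟨ν, hνprob, ?_, ?_⟩
  · intro A hA
    rw [hνtoReal A hA]
    exact Finset.sum_congr rfl fun n _ => by rw [hI n]
  intro A hA hA01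
  -- the affine map sends (0,1) into I n
  have hmemI : ∀ n : Fin N, ∀ x ∈ Set.Ioo (0:ℝ) 1, α n * x + β n ∈ I n := by
    intro n x hx
    obtain ⟨hx0, hx1⟩ := hx
    rcases lt_or_gt_of_ne (hα n) with h | h
    · obtain ⟨h1, h2⟩ := hneg n h
      exact ⟨by nlinarith, by nlinarith⟩
    · obtain ⟨h1, h2⟩ := hpos n h
      exact ⟨by nlinarith, by nlinarith⟩
  have hsurjI : ∀ n : Fin N, ∀ y ∈ I n, ∃ x ∈ Set.Ioo (0:ℝ) 1, α n * x + β n = y := by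
    intro n y hy
    obtain ⟨hy1, hy2⟩ := hy
    have hax : α n * ((y - β n) / α n) = y - β n := by
      rw [mul_comm, div_mul_cancel₀ _ (hα n)]
    refine ⟨(y - β n) / α n, ?_, by rw [hax]; ring⟩
    rcases lt_or_gt_of_ne (hα n) with h | h
    · obtain ⟨h1, h2⟩ := hneg n h
      constructor
      · nlinarith [hax]
      · nlinarith [hax]
    · obtain ⟨h1, h2⟩ := hpos n h
      constructor
      · nlinarith [hax]
      · nlinarith [hax]
  have hpre : ∀ n : Fin N, S ⁻¹' A ∩ I n = (fun x => α n * x + β n) '' (A ∩ Set.Ioo 0 1) := by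
    intro n
    ext y
    constructor
    · rintro ⟨hyS, hyI⟩
      obtain ⟨x, hx, hxy⟩ := hsurjI n y hyI
      refine ⟨x, ⟨?_, hx⟩, hxy⟩
      have hSx := hSin n x hx
      rw [hxy] at hSx
      rw [← hSx]
      exact hyS
    · rintro ⟨x, ⟨hxA, hxI⟩, rfl⟩
      refine ⟨?_, hmemI n x hxI⟩
      show S (α n * x + β n) ∈ A
      rw [hSin n x hxI]
      exact hxA
  have hIccI : ∀ n : Fin N, (S ⁻¹' A ∩ Set.Icc 0 1) ∩ I n = S ⁻¹' A ∩ I n := by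
    intro n
    rw [Set.inter_assoc, Set.inter_eq_right.2 ((hIsub n).trans Set.Ioo_subset_Icc_self)]
  have hmeasB : MeasurableSet (S ⁻¹' A ∩ Set.Icc 0 1) := (hSmeas hA).inter measurableSet_Icc
  have hν1 : ν (S ⁻¹' A ∩ Set.Icc 0 1) = volume (A ∩ Set.Ioo 0 1) := by
    rw [hνapp _ hmeasB]
    have hterm : ∀ n : Fin N,
        ENNReal.ofReal (1 + γ n) * volume ((S ⁻¹' A ∩ Set.Icc 0 1) ∩ I n)
        = ENNReal.ofReal ((1 + γ n) * |α n|) * volume (A ∩ Set.Ioo 0 1) := by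
      intro n
      rw [hIccI n, hpre n, vol_image_affine (α n) (β n) (hα n), ← mul_assoc,
        ← ENNReal.ofReal_mul (h1γ n)]
    rw [Finset.sum_congr rfl (fun n _ => hterm n), ← Finset.sum_mul,
      ← ENNReal.ofReal_sum_of_nonneg (fun n _ => mul_nonneg (h1γ n) (abs_nonneg _)),
      hsum1, ENNReal.ofReal_one, one_mul]
  have hvolA : volume (A ∩ Set.Ioo 0 1) = volume A := by
    refine le_antisymm (measure_mono Set.inter_subset_left) ?_
    have hsub : A ⊆ (A ∩ Set.Ioo 0 1) ∪ {0, 1} := by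
      intro x hx
      by_cases hx' : x ∈ Set.Ioo (0:ℝ) 1
      · exact Or.inl ⟨hx, hx'⟩
      · right
        obtain ⟨h0, h1⟩ := hA01 hx
        simp only [Set.mem_Ioo, not_and_or, not_lt] at hx'
        rcases hx' with h | h
        · exact Or.inl (le_antisymm h h0)
        · exact Or.inr (le_antisymm h1 h)
    calc volume A ≤ volume ((A ∩ Set.Ioo 0 1) ∪ {0,1}) := measure_mono hsub
      _ ≤ volume (A ∩ Set.Ioo 0 1) + volume ({0,1} : Set ℝ) := measure_union_le _ _
      _ = volume (A ∩ Set.Ioo 0 1) := by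
          rw [Set.Finite.measure_zero ((Set.finite_singleton (1:ℝ)).insert 0) volume,
            add_zero]
  have hdisj : Pairwise (Function.onFun Disjoint (fun n => A ∩ I n)) := by
    have key : ∀ p q : Fin N, p < q → Disjoint (I p) (I q) := by
      intro p q hpq
      rw [Set.disjoint_left]
      intro y hy1 hy2
      have hle : C ((p:ℕ)+1) ≤ C (q:ℕ) := hCmono hpq
      have := hy1.2
      have := hy2.1
      linarith
    intro n m hnm
    apply Set.disjoint_of_subset Set.inter_subset_right Set.inter_subset_right
    rcases lt_or_gt_of_ne hnm with h | h
    · exact key n m h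
    · exact (key m n h).symm
  have hcover : volume (A ∩ Set.Ioo 0 1) = ∑ n, volume (A ∩ I n) := by
    have hU : volume (⋃ n, A ∩ I n) = ∑' n, volume (A ∩ I n) :=
      measure_iUnion hdisj (fun n => hA.inter (hImeas n))
    rw [tsum_fintype] at hU
    rw [← hU]
    refine le_antisymm ?_ (measure_mono (Set.iUnion_subset fun n =>
      Set.inter_subset_inter Set.Subset.rfl (hIsub n)))
    have hsub2 : A ∩ Set.Ioo 0 1 ⊆ (⋃ n, A ∩ I n) ∪ Set.range C := by
      rintro y ⟨hyA, hy0, hy1⟩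
      by_cases hmem : ∃ n : Fin N, y ∈ I n
      · obtain ⟨n, hn⟩ := hmem
        exact Or.inl (Set.mem_iUnion.2 ⟨n, hyA, hn⟩)
      · push_neg at hmem
        right
        have hwit : y ≤ C (N - 1 + 1) := by
          rw [show N - 1 + 1 = N by omega, hCN]; linarith
        have hPex : ∃ m, y ≤ C (m + 1) := ⟨N - 1, hwit⟩
        have hm : y ≤ C (Nat.find hPex + 1) := Nat.find_spec hPex
        have hmle : Nat.find hPex ≤ N - 1 := Nat.find_min' hPex hwit
        have hmlt : Nat.find hPex < N := by omega
        rcases eq_or_lt_of_le hm with heq | hlt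
        · exact ⟨Nat.find hPex + 1, heq.symm⟩
        · exfalso
          have hnotI := hmem ⟨Nat.find hPex, hmlt⟩
          have hle : y ≤ C (Nat.find hPex) := by
            by_contra hc
            push_neg at hc
            exact hnotI ⟨hc, hlt⟩
          rcases Nat.eq_zero_or_pos (Nat.find hPex) with hm0 | hm0
          · rw [hm0, hC0] at hle; linarith
          · have hmin := Nat.find_min hPex (show Nat.find hPex - 1 < Nat.find hPex by omega)
            rw [show Nat.find hPex - 1 + 1 = Nat.find hPex by omega] at hmin
            exact hmin hle
    calc volume (A ∩ Set.Ioo 0 1) ≤ volume ((⋃ n, A ∩ I n) ∪ Set.range C) :=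
          measure_mono hsub2
      _ ≤ volume (⋃ n, A ∩ I n) + volume (Set.range C) := measure_union_le _ _
      _ = volume (⋃ n, A ∩ I n) := by
          rw [Set.Countable.measure_zero (Set.countable_range C) volume, add_zero]
  have hT : (volume A).toReal = ∑ n, (volume (A ∩ I n)).toReal := by
    rw [← hvolA, hcover, ENNReal.toReal_sum (fun n _ => hfin A n)]
  have hν1' : (ν (S ⁻¹' A ∩ Set.Icc 0 1)).toReal = (volume A).toReal := by
    rw [hν1, hvolA]
  rw [hν1', hνtoReal A hA, hT]
  have hveq : ∑ n, (volume (A ∩ I n)).toReal - ∑ n, (1 + γ n) * (volume (A ∩ I n)).toReal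
      = - ∑ n, γ n * (volume (A ∩ I n)).toReal := by
    have hterm : ∀ n : Fin N, (volume (A ∩ I n)).toReal
        - (1 + γ n) * (volume (A ∩ I n)).toReal
        = -(γ n * (volume (A ∩ I n)).toReal) := fun n => by ring
    rw [← Finset.sum_sub_distrib, Finset.sum_congr rfl (fun n _ => hterm n),
      Finset.sum_neg_distrib]
  rw [hveq, abs_neg]
  calc |∑ n, γ n * (volume (A ∩ I n)).toReal|
      ≤ ∑ n, |γ n * (volume (A ∩ I n)).toReal| := Finset.abs_sum_le_sum_abs _ _
    _ ≤ ∑ n, ε * (volume (A ∩ I n)).toReal := by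
        refine Finset.sum_le_sum fun n _ => ?_
        rw [abs_mul, abs_of_nonneg ENNReal.toReal_nonneg]
        exact mul_le_mul_of_nonneg_right (hγ n) ENNReal.toReal_nonneg
    _ = ε * ∑ n, (volume (A ∩ I n)).toReal := by rw [Finset.mul_sum]
end

section
/- Let (X, 𝒜, μ) be a probability space, let g ∈ L¹(X, μ) with ∫_X g dμ = 0, and let P : L¹(X, μ) → L¹(X, μ) be an ergodic Markov operator with P1 = 1. Then the equation φ = Pφ + g has a solution φ ∈ L¹(X, μ) if and only if the sequence (∑_{k=0}^{m−1} ((m−k)/m)·Pᵏg)_{m∈ℕ} converges in L¹(X, μ). Moreover, a function φ ∈ L¹(X, μ) solves φ = Pφ + g if and only if φ = lim_{m→∞} ∑_{k=0}^{m−1} ((m−k)/m)·Pᵏg + c (equality μ-a.e.) for some real constant c. -/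
open MeasureTheory Filter Topology

set_option linter.unusedSectionVars false

namespace Stmt10

variable {X : Type*} [MeasurableSpace X] {μ : Measure X} [IsProbabilityMeasure μ]

/-- The integral as a continuous linear functional on `L¹`. -/
noncomputable def J (μ : Measure X) [IsProbabilityMeasure μ] : Lp ℝ 1 μ →L[ℝ] ℝ :=
  LinearMap.mkContinuous
    { toFun := fun f => ∫ x, f x ∂μ
      map_add' := fun f g => by
        rw [integral_congr_ae (Lp.coeFn_add f g)]
        exact integral_add (L1.integrable_coeFn f) (L1.integrable_coeFn g)
      map_smul' := fun c f => by
        rw [integral_congr_ae (Lp.coeFn_smul c f)]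
        simpa using integral_smul c (fun x => f x) }
    1 (fun f => by
      simpa [L1.norm_eq_integral_norm] using norm_integral_le_integral_norm (fun x => f x))

lemma J_apply (f : Lp ℝ 1 μ) : J μ f = ∫ x, f x ∂μ := rfl

lemma abs_J_le (f : Lp ℝ 1 μ) : |J μ f| ≤ ‖f‖ := by
  simpa [J_apply, L1.norm_eq_integral_norm] using norm_integral_le_integral_norm (fun x => f x)

lemma J_eq_norm (f : Lp ℝ 1 μ) (hf : 0 ≤ f) : J μ f = ‖f‖ := by
  rw [J_apply, L1.norm_eq_integral_norm]
  refine integral_congr_ae ?_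
  filter_upwards [(Lp.coeFn_nonneg f).2 hf] with x hx
  simp [Real.norm_eq_abs, abs_of_nonneg hx]

lemma posPart_nonneg (f : Lp ℝ 1 μ) : 0 ≤ Lp.posPart f := by
  rw [← Lp.coeFn_nonneg]
  filter_upwards [Lp.coeFn_posPart f] with x hx
  rw [hx]; exact le_max_right _ _

lemma negPart_nonneg (f : Lp ℝ 1 μ) : 0 ≤ Lp.negPart f := by
  rw [← Lp.coeFn_nonneg]
  filter_upwards [Lp.coeFn_negPart_eq_max f] with x hx
  rw [hx]; exact le_max_right _ _

lemma decomp (f : Lp ℝ 1 μ) : f = Lp.posPart f - Lp.negPart f := by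
  refine (Lp.ext ?_).symm
  filter_upwards [Lp.coeFn_sub (Lp.posPart f) (Lp.negPart f), Lp.coeFn_posPart f,
    Lp.coeFn_negPart f] with x h1 h2 h3
  rw [h1, Pi.sub_apply, h2, h3]
  simp [max_def, min_def]; split_ifs <;> linarith

lemma norm_decomp (f : Lp ℝ 1 μ) : ‖f‖ = ‖Lp.posPart f‖ + ‖Lp.negPart f‖ := by
  rw [← J_eq_norm _ (posPart_nonneg f), ← J_eq_norm _ (negPart_nonneg f),
    L1.norm_eq_integral_norm, J_apply, J_apply,
    ← integral_add (L1.integrable_coeFn _) (L1.integrable_coeFn _)]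
  refine integral_congr_ae ?_
  filter_upwards [Lp.coeFn_posPart f, Lp.coeFn_negPart f] with x h2 h3
  rw [h2, h3]
  simp only [Real.norm_eq_abs, max_def, min_def]
  split_ifs with h
  · rw [abs_of_nonpos h]; ring
  · rw [abs_of_pos (lt_of_not_ge h)]; ring

lemma eq_zero_of_pairing (u : Lp ℝ 1 μ)
    (h : ∀ h : X → ℝ, MemLp h ⊤ μ → ∫ x, u x * h x ∂μ = 0) : u = 0 := by
  set s : X → ℝ := fun x => if 0 ≤ u x then 1 else -1 with hs
  have hmeas : StronglyMeasurable s := by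
    refine StronglyMeasurable.ite ?_ stronglyMeasurable_const stronglyMeasurable_const
    exact measurableSet_le measurable_const (Lp.stronglyMeasurable u).measurable
  have hmem : MemLp s ⊤ μ := memLp_top_of_bound hmeas.aestronglyMeasurable 1
    (Eventually.of_forall fun x => by by_cases hx : 0 ≤ u x <;> simp [s, hx])
  have h0 : ∫ x, u x * s x ∂μ = 0 := h s hmem
  have h1 : ∫ x, ‖u x‖ ∂μ = 0 := by
    rw [← h0]; refine integral_congr_ae (Eventually.of_forall fun x => ?_)
    by_cases hx : 0 ≤ u x
    · simp [s, hx, Real.norm_eq_abs, abs_of_nonneg hx]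
    · simp [s, hx, Real.norm_eq_abs, abs_of_neg (lt_of_not_ge hx)]
  have h2 : ‖u‖ = 0 := by rw [L1.norm_eq_integral_norm]; exact h1
  simpa using norm_eq_zero.mp h2

lemma const_eq_smul_one (c : ℝ) : Lp.const 1 μ c = c • Lp.const 1 μ (1 : ℝ) := by
  refine Lp.ext ?_
  filter_upwards [Lp.coeFn_const (μ := μ) (p := (1 : ENNReal)) c,
    Lp.coeFn_smul c (Lp.const 1 μ (1 : ℝ)),
    Lp.coeFn_const (μ := μ) (p := (1 : ENNReal)) (1 : ℝ)] with x h1 h2 h3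
  rw [h1, h2, Pi.smul_apply, h3]
  simp [Function.const]

lemma J_const (c : ℝ) : J μ (Lp.const 1 μ c) = c := by
  rw [J_apply, integral_congr_ae (Lp.coeFn_const (μ := μ) (p := (1 : ENNReal)) c)]
  simp

lemma bound_of_memTop {h : X → ℝ} (hh : MemLp h ⊤ μ) : ∃ C : ℝ, ∀ᵐ x ∂μ, ‖h x‖ ≤ C := by
  refine ⟨(eLpNorm h ⊤ μ).toReal, ?_⟩
  have h1 : eLpNorm h ⊤ μ ≠ ⊤ := hh.2.ne
  filter_upwards [ae_le_eLpNormEssSup (f := h) (μ := μ)] with x hx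
  have h2 := ENNReal.toReal_mono h1 (by simpa [eLpNorm_exponent_top] using hx)
  simpa using h2

lemma pair_integrable (A : Lp ℝ 1 μ) {h : X → ℝ} (hh : MemLp h ⊤ μ) :
    Integrable (fun x => (A : X → ℝ) x * h x) μ := by
  obtain ⟨C, hC⟩ := bound_of_memTop hh
  have h2 := (L1.integrable_coeFn A).bdd_mul hh.aestronglyMeasurable hC
  simpa [mul_comm] using h2

lemma pair_sub (A B : Lp ℝ 1 μ) {h : X → ℝ} (hh : MemLp h ⊤ μ) :
    ∫ x, (A - B : Lp ℝ 1 μ) x * h x ∂μ = ∫ x, A x * h x ∂μ - ∫ x, B x * h x ∂μ := by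
  rw [← integral_sub (pair_integrable A hh) (pair_integrable B hh)]
  refine integral_congr_ae ?_
  filter_upwards [Lp.coeFn_sub A B] with x h1
  rw [h1]; simp; ring

section P

variable (P : Lp ℝ 1 μ →ₗ[ℝ] Lp ℝ 1 μ)
variable (hpos : ∀ f : Lp ℝ 1 μ, 0 ≤ f → 0 ≤ P f)
variable (hnorm : ∀ f : Lp ℝ 1 μ, 0 ≤ f → ‖P f‖ = ‖f‖)

include hnorm in
lemma norm_P_le (f : Lp ℝ 1 μ) : ‖P f‖ ≤ ‖f‖ := by
  conv_lhs => rw [decomp f]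
  rw [map_sub]
  refine (norm_sub_le _ _).trans ?_
  rw [hnorm _ (posPart_nonneg f), hnorm _ (negPart_nonneg f), ← norm_decomp]

include hnorm in
lemma norm_pow_le (k : ℕ) (f : Lp ℝ 1 μ) : ‖(P ^ k) f‖ ≤ ‖f‖ := by
  induction k generalizing f with
  | zero => simp
  | succ n ih =>
    rw [pow_succ, Module.End.mul_apply]
    exact (ih (P f)).trans (norm_P_le P hnorm f)

include hpos hnorm in
lemma J_P (f : Lp ℝ 1 μ) : J μ (P f) = J μ f := by
  have hpp : ∀ u : Lp ℝ 1 μ, 0 ≤ u → J μ (P u) = J μ u := fun u hu => by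
    rw [J_eq_norm _ (hpos u hu), J_eq_norm _ hu, hnorm u hu]
  conv_lhs => rw [decomp f]
  conv_rhs => rw [decomp f]
  rw [map_sub, map_sub, map_sub, hpp _ (posPart_nonneg f), hpp _ (negPart_nonneg f)]

include hpos hnorm in
lemma J_pow (k : ℕ) (f : Lp ℝ 1 μ) : J μ ((P ^ k) f) = J μ f := by
  induction k generalizing f with
  | zero => simp
  | succ n ih =>
    rw [pow_succ, Module.End.mul_apply, ih (P f), J_P P hpos hnorm f]

variable (hergodic : ∀ f : Lp ℝ 1 μ, 0 ≤ f → ∫ x, f x ∂μ = 1 →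
      ∀ h : X → ℝ, MemLp h ⊤ μ →
        Tendsto (fun m : ℕ => (1 / (m : ℝ)) *
            ∑ k ∈ Finset.Icc 1 m, ∫ x, ((P ^ k) f) x * h x ∂μ)
          atTop (𝓝 (∫ x, h x ∂μ)))

include hpos hnorm hergodic in
lemma ergodic_ext (f : Lp ℝ 1 μ) {h : X → ℝ} (hh : MemLp h ⊤ μ) :
    Tendsto (fun m : ℕ => (1 / (m : ℝ)) *
        ∑ k ∈ Finset.Icc 1 m, ∫ x, ((P ^ k) f) x * h x ∂μ)
      atTop (𝓝 (J μ f * ∫ x, h x ∂μ)) := by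
  have key : ∀ u : Lp ℝ 1 μ, 0 ≤ u →
      Tendsto (fun m : ℕ => (1 / (m : ℝ)) *
          ∑ k ∈ Finset.Icc 1 m, ∫ x, ((P ^ k) u) x * h x ∂μ)
        atTop (𝓝 (J μ u * ∫ x, h x ∂μ)) := by
    intro u hu
    set a : ℝ := J μ u with ha
    rcases eq_or_lt_of_le (norm_nonneg u) with h0 | h0
    · -- u = 0
      have hu0 : u = 0 := by simpa using (norm_eq_zero.mp h0.symm)
      subst hu0
      have hz : ∀ m : ℕ, (1 / (m : ℝ)) *
          ∑ k ∈ Finset.Icc 1 m, ∫ x, ((P ^ k) (0 : Lp ℝ 1 μ)) x * h x ∂μ = 0 := by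
        intro m
        have : ∀ k : ℕ, ∫ x, ((P ^ k) (0 : Lp ℝ 1 μ)) x * h x ∂μ = 0 := by
          intro k
          rw [map_zero]
          have : ∫ x, ((0 : Lp ℝ 1 μ) : X → ℝ) x * h x ∂μ = ∫ x, (0 : ℝ) ∂μ := by
            refine integral_congr_ae ?_
            filter_upwards [Lp.coeFn_zero (E := ℝ) (p := (1 : ENNReal)) (μ := μ)] with x hx
            rw [hx]; simp
          rw [this, integral_zero]
        simp [this]
      have ha' : a * ∫ x, h x ∂μ = 0 := by simp [ha]
      rw [ha']
      simp only [hz]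
      exact tendsto_const_nhds
    · -- ‖u‖ > 0
      have haeq : a = ‖u‖ := J_eq_norm u hu
      have ha0 : 0 < a := haeq ▸ h0
      set v : Lp ℝ 1 μ := a⁻¹ • u with hv
      have hvpos : 0 ≤ v := by
        rw [← Lp.coeFn_nonneg]
        filter_upwards [Lp.coeFn_smul a⁻¹ u, (Lp.coeFn_nonneg u).2 hu] with x h1 h2
        rw [hv, h1]
        simpa using mul_nonneg (le_of_lt (by positivity : (0:ℝ) < a⁻¹)) h2
      have hvint : ∫ x, v x ∂μ = 1 := by
        have : J μ v = 1 := by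
          rw [hv, _root_.map_smul]
          simp only [smul_eq_mul]
          rw [← ha, inv_mul_cancel₀ (ne_of_gt ha0)]
        simpa [J_apply] using this
      have hmain := hergodic v hvpos hvint h hh
      have hterm : ∀ k : ℕ, ∫ x, ((P ^ k) v) x * h x ∂μ
          = a⁻¹ * ∫ x, ((P ^ k) u) x * h x ∂μ := by
        intro k
        rw [hv, _root_.map_smul]
        rw [← integral_const_mul]
        refine integral_congr_ae ?_
        filter_upwards [Lp.coeFn_smul a⁻¹ ((P ^ k) u)] with x hx
        rw [hx]; simp; ring
      have hseq : ∀ m : ℕ, (1 / (m : ℝ)) *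
          ∑ k ∈ Finset.Icc 1 m, ∫ x, ((P ^ k) v) x * h x ∂μ
          = a⁻¹ * ((1 / (m : ℝ)) * ∑ k ∈ Finset.Icc 1 m, ∫ x, ((P ^ k) u) x * h x ∂μ) := by
        intro m
        simp only [hterm, ← Finset.mul_sum]
        ring
      simp only [hseq] at hmain
      have := hmain.const_mul a
      simp only [← mul_assoc, mul_inv_cancel₀ (ne_of_gt ha0), one_mul] at this
      exact this
  -- general case
  have hp := key (Lp.posPart f) (posPart_nonneg f)
  have hn := key (Lp.negPart f) (negPart_nonneg f)
  have hsub := hp.sub hn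
  have heq : ∀ m : ℕ, (1 / (m : ℝ)) *
        ∑ k ∈ Finset.Icc 1 m, ∫ x, ((P ^ k) (Lp.posPart f)) x * h x ∂μ
      - (1 / (m : ℝ)) *
        ∑ k ∈ Finset.Icc 1 m, ∫ x, ((P ^ k) (Lp.negPart f)) x * h x ∂μ
      = (1 / (m : ℝ)) * ∑ k ∈ Finset.Icc 1 m, ∫ x, ((P ^ k) f) x * h x ∂μ := by
    intro m
    rw [← mul_sub, ← Finset.sum_sub_distrib]
    congr 1
    refine Finset.sum_congr rfl fun k _ => ?_
    rw [← pair_sub _ _ hh, ← map_sub, ← decomp f]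
  simp only [heq] at hsub
  have hJ : J μ (Lp.posPart f) * ∫ x, h x ∂μ - J μ (Lp.negPart f) * ∫ x, h x ∂μ
      = J μ f * ∫ x, h x ∂μ := by
    rw [← sub_mul, ← ContinuousLinearMap.map_sub, ← decomp f]
  rwa [hJ] at hsub

end P

section L2

/-- Inclusion of `L²` into `L¹` (probability measure). -/
noncomputable def incl (ψ : Lp ℝ 2 μ) : Lp ℝ 1 μ :=
  ((Lp.memLp ψ).mono_exponent (by norm_num : (1:ENNReal) ≤ 2)).toLp ψ

lemma coeFn_incl (ψ : Lp ℝ 2 μ) : incl ψ =ᵐ[μ] ψ := MemLp.coeFn_toLp _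

lemma incl_add (ψ χ : Lp ℝ 2 μ) : incl (ψ + χ) = incl ψ + incl χ := by
  refine Lp.ext ?_
  filter_upwards [coeFn_incl (ψ + χ), coeFn_incl ψ, coeFn_incl χ,
    Lp.coeFn_add ψ χ, Lp.coeFn_add (incl ψ) (incl χ)] with x h1 h2 h3 h4 h5
  rw [h1, h4, h5]
  simp [h2, h3]

lemma incl_smul (c : ℝ) (ψ : Lp ℝ 2 μ) : incl (c • ψ) = c • incl ψ := by
  refine Lp.ext ?_
  filter_upwards [coeFn_incl (c • ψ), coeFn_incl ψ,
    Lp.coeFn_smul c ψ, Lp.coeFn_smul c (incl ψ)] with x h1 h2 h3 h4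
  rw [h1, h3, h4]
  simp [h2]

lemma norm_incl_le (ψ : Lp ℝ 2 μ) : ‖incl ψ‖ ≤ ‖ψ‖ := by
  rw [incl, Lp.norm_toLp, Lp.norm_def]
  refine ENNReal.toReal_mono (Lp.eLpNorm_ne_top ψ) ?_
  exact eLpNorm_le_eLpNorm_of_exponent_le (by norm_num) (Lp.aestronglyMeasurable ψ)

/-- Inclusion as a continuous linear map. -/
noncomputable def inclCLM (μ : Measure X) [IsProbabilityMeasure μ] :
    Lp ℝ 2 μ →L[ℝ] Lp ℝ 1 μ :=
  LinearMap.mkContinuous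
    { toFun := incl, map_add' := incl_add, map_smul' := incl_smul } 1
    (fun ψ => by simpa using norm_incl_le ψ)

lemma inclCLM_apply (ψ : Lp ℝ 2 μ) : inclCLM μ ψ = incl ψ := rfl

/-- The square of an `L²` function, as an element of `L¹`. -/
noncomputable def sqLp (ψ : Lp ℝ 2 μ) : Lp ℝ 1 μ :=
  ((Lp.memLp ψ).integrable_sq).toL1 _

lemma coeFn_sqLp (ψ : Lp ℝ 2 μ) : sqLp ψ =ᵐ[μ] fun x => (ψ x) ^ 2 :=
  Integrable.coeFn_toL1 _

lemma sqLp_nonneg (ψ : Lp ℝ 2 μ) : 0 ≤ sqLp ψ := by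
  rw [← Lp.coeFn_nonneg]
  filter_upwards [coeFn_sqLp ψ] with x hx
  rw [hx]; positivity

variable (P : Lp ℝ 1 μ →ₗ[ℝ] Lp ℝ 1 μ)
variable (hpos : ∀ f : Lp ℝ 1 μ, 0 ≤ f → 0 ≤ P f)
variable (hnorm : ∀ f : Lp ℝ 1 μ, 0 ≤ f → ‖P f‖ = ‖f‖)
variable (hP1 : P (Lp.const 1 μ (1 : ℝ)) = Lp.const 1 μ (1 : ℝ))

include hpos hP1 in
lemma jensen (ψ : Lp ℝ 2 μ) :
    ∀ᵐ x ∂μ, ((P (incl ψ)) : X → ℝ) x ^ 2 ≤ ((P (sqLp ψ)) : X → ℝ) x := by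
  have hwt : ∀ t : ℚ, Integrable (fun x => (ψ x - (t : ℝ)) ^ 2) μ :=
    fun t => ((Lp.memLp ψ).sub (memLp_const (t : ℝ))).integrable_sq
  have hdecomp : ∀ t : ℚ, (hwt t).toL1 _
      = sqLp ψ - ((2 * (t : ℝ)) • incl ψ - ((t : ℝ) ^ 2) • Lp.const 1 μ (1 : ℝ)) := by
    intro t
    refine Lp.ext ?_
    filter_upwards [Integrable.coeFn_toL1 (hwt t), coeFn_sqLp ψ, coeFn_incl ψ,
      Lp.coeFn_sub (sqLp ψ) (((2 * (t : ℝ)) • incl ψ - ((t : ℝ) ^ 2) • Lp.const 1 μ (1 : ℝ))),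
      Lp.coeFn_sub ((2 * (t : ℝ)) • incl ψ) (((t : ℝ) ^ 2) • Lp.const 1 μ (1 : ℝ)),
      Lp.coeFn_smul (2 * (t : ℝ)) (incl ψ),
      Lp.coeFn_smul ((t : ℝ) ^ 2) (Lp.const 1 μ (1 : ℝ)),
      Lp.coeFn_const (μ := μ) (p := (1 : ENNReal)) (1 : ℝ)] with x h1 h2 h3 h4 h5 h6 h7 h8
    rw [h1, h4, Pi.sub_apply, h5, Pi.sub_apply, h6, h7, Pi.smul_apply, Pi.smul_apply, h2, h8, h3]
    simp only [smul_eq_mul, Function.const_apply]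
    ring
  have hae : ∀ t : ℚ, ∀ᵐ x ∂μ,
      0 ≤ ((P (sqLp ψ)) : X → ℝ) x - (2 * (t : ℝ)) * ((P (incl ψ)) : X → ℝ) x + (t : ℝ) ^ 2 := by
    intro t
    have h0 : 0 ≤ P ((hwt t).toL1 _) := by
      refine hpos _ ?_
      rw [← Lp.coeFn_nonneg]
      filter_upwards [Integrable.coeFn_toL1 (hwt t)] with x hx
      rw [hx]; positivity
    rw [hdecomp t, map_sub, map_sub, _root_.map_smul, _root_.map_smul, hP1] at h0
    have h0' := (Lp.coeFn_nonneg _).2 h0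
    filter_upwards [h0', Lp.coeFn_sub (P (sqLp ψ))
        ((2 * (t : ℝ)) • P (incl ψ) - ((t : ℝ) ^ 2) • Lp.const 1 μ (1 : ℝ)),
      Lp.coeFn_sub ((2 * (t : ℝ)) • P (incl ψ)) (((t : ℝ) ^ 2) • Lp.const 1 μ (1 : ℝ)),
      Lp.coeFn_smul (2 * (t : ℝ)) (P (incl ψ)),
      Lp.coeFn_smul ((t : ℝ) ^ 2) (Lp.const 1 μ (1 : ℝ)),
      Lp.coeFn_const (μ := μ) (p := (1 : ENNReal)) (1 : ℝ)] with x h1 h2 h3 h4 h5 h6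
    rw [h2, Pi.sub_apply, h3, Pi.sub_apply, h4, h5, Pi.smul_apply, Pi.smul_apply, h6] at h1
    simp only [smul_eq_mul, Function.const_apply, Pi.zero_apply, mul_one] at h1
    linarith
  have hall : ∀ᵐ x ∂μ, ∀ t : ℚ,
      0 ≤ ((P (sqLp ψ)) : X → ℝ) x - (2 * (t : ℝ)) * ((P (incl ψ)) : X → ℝ) x + (t : ℝ) ^ 2 :=
    (ae_all_iff).2 hae
  filter_upwards [hall] with x hx
  set a : ℝ := ((P (incl ψ)) : X → ℝ) x
  set b : ℝ := ((P (sqLp ψ)) : X → ℝ) x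
  by_contra hcon
  push_neg at hcon
  have hε : (0:ℝ) < a ^ 2 - b := by linarith
  set δ : ℝ := Real.sqrt (a ^ 2 - b) with hδ
  have hδpos : 0 < δ := Real.sqrt_pos.2 hε
  have hδsq : δ ^ 2 = a ^ 2 - b := Real.sq_sqrt (le_of_lt hε)
  obtain ⟨t, ht1, ht2⟩ := exists_rat_btwn (by linarith : a - δ < a + δ)
  have h0 := hx t
  nlinarith

include hpos hP1 in
lemma memtwo (ψ : Lp ℝ 2 μ) : MemLp ((P (incl ψ)) : X → ℝ) 2 μ := by
  rw [memLp_two_iff_integrable_sq (Lp.aestronglyMeasurable _)]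
  refine Integrable.mono' (L1.integrable_coeFn (P (sqLp ψ))) ?_ ?_
  · have hm := Lp.aestronglyMeasurable (P (incl ψ))
    simpa [pow_two, Pi.mul_def] using hm.mul hm
  · filter_upwards [jensen P hpos hP1 ψ] with x hx
    rw [Real.norm_eq_abs, abs_of_nonneg (by positivity)]
    exact hx

/-- The operator `P` viewed as a map on `L²`. -/
noncomputable def P2 (hpos : ∀ f : Lp ℝ 1 μ, 0 ≤ f → 0 ≤ P f)
    (hP1 : P (Lp.const 1 μ (1 : ℝ)) = Lp.const 1 μ (1 : ℝ)) :
    Lp ℝ 2 μ → Lp ℝ 2 μ :=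
  fun ψ => (memtwo P hpos hP1 ψ).toLp _

lemma coeFn_P2 (ψ : Lp ℝ 2 μ) : P2 P hpos hP1 ψ =ᵐ[μ] P (incl ψ) :=
  MemLp.coeFn_toLp _

include hpos hP1 in
lemma incl_P2 (ψ : Lp ℝ 2 μ) : incl (P2 P hpos hP1 ψ) = P (incl ψ) := by
  refine Lp.ext ?_
  exact (coeFn_incl _).trans (coeFn_P2 P hpos hP1 ψ)

include hpos hP1 in
lemma P2_add (ψ χ : Lp ℝ 2 μ) :
    P2 P hpos hP1 (ψ + χ) = P2 P hpos hP1 ψ + P2 P hpos hP1 χ := by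
  refine Lp.ext ?_
  filter_upwards [coeFn_P2 P hpos hP1 (ψ + χ), coeFn_P2 P hpos hP1 ψ, coeFn_P2 P hpos hP1 χ,
    Lp.coeFn_add (P2 P hpos hP1 ψ) (P2 P hpos hP1 χ),
    Lp.coeFn_add (P (incl ψ)) (P (incl χ))] with x h1 h2 h3 h4 h5
  rw [h1, h4, Pi.add_apply, h2, h3]
  rw [show incl (ψ + χ) = incl ψ + incl χ from incl_add ψ χ, map_add] at *
  rw [h5]; rfl

include hpos hP1 in
lemma P2_smul (c : ℝ) (ψ : Lp ℝ 2 μ) :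
    P2 P hpos hP1 (c • ψ) = c • P2 P hpos hP1 ψ := by
  refine Lp.ext ?_
  filter_upwards [coeFn_P2 P hpos hP1 (c • ψ), coeFn_P2 P hpos hP1 ψ,
    Lp.coeFn_smul c (P2 P hpos hP1 ψ),
    Lp.coeFn_smul c (P (incl ψ))] with x h1 h2 h3 h4
  rw [h1, h3, Pi.smul_apply, h2]
  rw [show incl (c • ψ) = c • incl ψ from incl_smul c ψ, _root_.map_smul] at *
  rw [h4]; rfl

include hpos hnorm hP1 in
lemma norm_P2_le (ψ : Lp ℝ 2 μ) : ‖P2 P hpos hP1 ψ‖ ≤ ‖ψ‖ := by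
  have key : ‖P2 P hpos hP1 ψ‖ ^ 2 ≤ ‖ψ‖ ^ 2 := by
    rw [← real_inner_self_eq_norm_sq, ← real_inner_self_eq_norm_sq]
    have h1 : (inner ℝ (P2 P hpos hP1 ψ) (P2 P hpos hP1 ψ) : ℝ)
        = ∫ x, ((P (incl ψ)) : X → ℝ) x ^ 2 ∂μ := by
      rw [L2.inner_def]
      refine integral_congr_ae ?_
      filter_upwards [coeFn_P2 P hpos hP1 ψ] with x hx
      simp [RCLike.inner_apply, hx, pow_two]
    have h2 : (inner ℝ ψ ψ : ℝ) = ∫ x, (sqLp ψ : X → ℝ) x ∂μ := by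
      rw [L2.inner_def]
      refine integral_congr_ae ?_
      filter_upwards [coeFn_sqLp ψ] with x hx
      simp [RCLike.inner_apply, hx, pow_two]
    rw [h1, h2]
    have h3 : ∫ x, ((P (incl ψ)) : X → ℝ) x ^ 2 ∂μ ≤ ∫ x, ((P (sqLp ψ)) : X → ℝ) x ∂μ := by
      refine integral_mono_ae ((memtwo P hpos hP1 ψ).integrable_sq)
        (L1.integrable_coeFn _) ?_
      exact jensen P hpos hP1 ψ
    have h4 : ∫ x, ((P (sqLp ψ)) : X → ℝ) x ∂μ = ∫ x, (sqLp ψ : X → ℝ) x ∂μ := by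
      have := J_P P hpos hnorm (sqLp ψ)
      simpa [J_apply] using this
    linarith
  nlinarith [norm_nonneg (P2 P hpos hP1 ψ), norm_nonneg ψ]

/-- `P` on `L²` as a continuous linear map. -/
noncomputable def P2CLM (hpos : ∀ f : Lp ℝ 1 μ, 0 ≤ f → 0 ≤ P f)
    (hnorm : ∀ f : Lp ℝ 1 μ, 0 ≤ f → ‖P f‖ = ‖f‖)
    (hP1 : P (Lp.const 1 μ (1 : ℝ)) = Lp.const 1 μ (1 : ℝ)) :
    Lp ℝ 2 μ →L[ℝ] Lp ℝ 2 μ :=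
  LinearMap.mkContinuous
    { toFun := P2 P hpos hP1, map_add' := P2_add P hpos hP1, map_smul' := P2_smul P hpos hP1 } 1
    (fun ψ => by simpa using norm_P2_le P hpos hnorm hP1 ψ)

lemma P2CLM_apply (ψ : Lp ℝ 2 μ) : P2CLM P hpos hnorm hP1 ψ = P2 P hpos hP1 ψ := rfl

include hpos hnorm hP1 in
lemma incl_iter (k : ℕ) (ψ : Lp ℝ 2 μ) :
    incl ((⇑(P2CLM P hpos hnorm hP1))^[k] (P2CLM P hpos hnorm hP1 ψ))
      = (P ^ (k + 1)) (incl ψ) := by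
  induction k generalizing ψ with
  | zero => simpa [P2CLM_apply] using incl_P2 P hpos hP1 ψ
  | succ n ih =>
    rw [Function.iterate_succ_apply]
    have := ih (P2CLM P hpos hnorm hP1 ψ)
    rw [this, P2CLM_apply, incl_P2 P hpos hP1 ψ]
    simp [pow_succ, Module.End.mul_apply]

include hpos hnorm hP1 in
lemma tendsto_A_incl (ψ : Lp ℝ 2 μ) :
    ∃ u : Lp ℝ 1 μ,
      Tendsto (fun m : ℕ => (m : ℝ)⁻¹ • ∑ k ∈ Finset.range m, (P ^ (k + 1)) (incl ψ))
        atTop (𝓝 u) := by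
  have hnormP2 : ‖P2CLM P hpos hnorm hP1‖ ≤ 1 :=
    LinearMap.mkContinuous_norm_le _ zero_le_one _
  obtain ⟨u2, hconv⟩ : ∃ u2 : Lp ℝ 2 μ,
      Tendsto (fun m : ℕ => birkhoffAverage ℝ (⇑(P2CLM P hpos hnorm hP1)) _root_.id m
        (P2CLM P hpos hnorm hP1 ψ)) atTop (𝓝 u2) :=
    ⟨_, ContinuousLinearMap.tendsto_birkhoffAverage_orthogonalProjection (𝕜 := ℝ)
      (P2CLM P hpos hnorm hP1) hnormP2 (P2CLM P hpos hnorm hP1 ψ)⟩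
  refine ⟨inclCLM μ u2, ?_⟩
  have hcomp := ((inclCLM μ).continuous.tendsto _).comp hconv
  refine hcomp.congr fun m => ?_
  show inclCLM μ (birkhoffAverage ℝ (⇑(P2CLM P hpos hnorm hP1)) _root_.id m
      (P2CLM P hpos hnorm hP1 ψ)) = _
  rw [birkhoffAverage, birkhoffSum, ContinuousLinearMap.map_smul, map_sum]
  congr 1
  refine Finset.sum_congr rfl fun k _ => ?_
  show incl _ = _
  simpa [_root_.id] using incl_iter P hpos hnorm hP1 k ψ

lemma dense_L2 (f : Lp ℝ 1 μ) {ε : ℝ} (hε : 0 < ε) : ∃ ψ : Lp ℝ 2 μ, ‖f - incl ψ‖ < ε := by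
  have hd := Lp.simpleFunc.denseRange (E := ℝ) (μ := μ) (p := (1 : ENNReal)) (by norm_num)
  obtain ⟨s, hs⟩ := Metric.denseRange_iff.1 hd f ε hε
  set sf := Lp.simpleFunc.toSimpleFunc s with hsf
  have hmem : MemLp (sf : X → ℝ) 2 μ := (SimpleFunc.memLp_top sf μ).mono_exponent le_top
  refine ⟨hmem.toLp _, ?_⟩
  have heq : incl (hmem.toLp _) = (s : Lp ℝ 1 μ) := by
    refine Lp.ext ?_
    refine (coeFn_incl _).trans ?_
    exact (MemLp.coeFn_toLp hmem).trans (Lp.simpleFunc.toSimpleFunc_eq_toFun s)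
  rw [heq]
  simpa [dist_eq_norm] using hs

end L2

section Main

variable (P : Lp ℝ 1 μ →ₗ[ℝ] Lp ℝ 1 μ)
variable (hpos : ∀ f : Lp ℝ 1 μ, 0 ≤ f → 0 ≤ P f)
variable (hnorm : ∀ f : Lp ℝ 1 μ, 0 ≤ f → ‖P f‖ = ‖f‖)
variable (hP1 : P (Lp.const 1 μ (1 : ℝ)) = Lp.const 1 μ (1 : ℝ))

/-- The Cesàro averages `(1/m) ∑_{k=1}^m P^k`. -/
noncomputable def Aop (P : Lp ℝ 1 μ →ₗ[ℝ] Lp ℝ 1 μ) (m : ℕ) :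
    Lp ℝ 1 μ →ₗ[ℝ] Lp ℝ 1 μ :=
  (m : ℝ)⁻¹ • ∑ k ∈ Finset.range m, P ^ (k + 1)

lemma Aop_apply (m : ℕ) (f : Lp ℝ 1 μ) :
    Aop P m f = (m : ℝ)⁻¹ • ∑ k ∈ Finset.range m, (P ^ (k + 1)) f := by
  simp [Aop, LinearMap.sum_apply]

include hnorm in
lemma norm_Aop_le (m : ℕ) (f : Lp ℝ 1 μ) : ‖Aop P m f‖ ≤ ‖f‖ := by
  rcases Nat.eq_zero_or_pos m with hm | hm
  · subst hm; simp [Aop_apply]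
  rw [Aop_apply, norm_smul]
  have h1 : ‖∑ k ∈ Finset.range m, (P ^ (k + 1)) f‖ ≤ (m : ℝ) * ‖f‖ := by
    refine (norm_sum_le _ _).trans ?_
    calc ∑ k ∈ Finset.range m, ‖(P ^ (k + 1)) f‖
        ≤ ∑ _k ∈ Finset.range m, ‖f‖ :=
          Finset.sum_le_sum fun k _ => norm_pow_le P hnorm (k + 1) f
      _ = (m : ℝ) * ‖f‖ := by simp [mul_comm]
  have hm' : (0 : ℝ) < (m : ℝ) := by exact_mod_cast hm
  calc ‖(m : ℝ)⁻¹‖ * ‖∑ k ∈ Finset.range m, (P ^ (k + 1)) f‖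
      ≤ (m : ℝ)⁻¹ * ((m : ℝ) * ‖f‖) := by
        rw [Real.norm_eq_abs, abs_of_nonneg (by positivity)]
        exact mul_le_mul_of_nonneg_left h1 (by positivity)
    _ = ‖f‖ := by field_simp
include hnorm in
lemma tendsto_P {v : ℕ → Lp ℝ 1 μ} {l : Lp ℝ 1 μ} (hv : Tendsto v atTop (𝓝 l)) :
    Tendsto (fun m => P (v m)) atTop (𝓝 (P l)) := by
  rw [tendsto_iff_norm_sub_tendsto_zero]
  have h1 : Tendsto (fun m => ‖v m - l‖) atTop (𝓝 0) :=
    tendsto_iff_norm_sub_tendsto_zero.mp hv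
  refine squeeze_zero (fun m => norm_nonneg _) (fun m => ?_) h1
  rw [← map_sub]
  exact norm_P_le P hnorm _

include hpos hnorm hP1 in
lemma tendsto_Aop (φ : Lp ℝ 1 μ) :
    ∃ u : Lp ℝ 1 μ, Tendsto (fun m => Aop P m φ) atTop (𝓝 u) ∧ P u = u := by
  have hcauchy : CauchySeq (fun m => Aop P m φ) := by
    rw [Metric.cauchySeq_iff]
    intro ε hε
    obtain ⟨ψ, hψ⟩ := dense_L2 φ (show (0:ℝ) < ε / 3 by linarith)
    obtain ⟨w, hw⟩ := tendsto_A_incl P hpos hnorm hP1 ψ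
    have hwc : CauchySeq (fun m : ℕ => (m : ℝ)⁻¹ • ∑ k ∈ Finset.range m,
        (P ^ (k + 1)) (incl ψ)) := hw.cauchySeq
    rw [Metric.cauchySeq_iff] at hwc
    obtain ⟨N, hN⟩ := hwc (ε / 3) (by linarith)
    refine ⟨N, fun m hm n hn => ?_⟩
    have hAw : ∀ j : ℕ, Aop P j (incl ψ)
        = (j : ℝ)⁻¹ • ∑ k ∈ Finset.range j, (P ^ (k + 1)) (incl ψ) := fun j => Aop_apply P j _
    have key : ∀ j : ℕ, dist (Aop P j φ) (Aop P j (incl ψ)) < ε / 3 := fun j => by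
      rw [dist_eq_norm, ← map_sub]
      exact lt_of_le_of_lt (norm_Aop_le P hnorm j (φ - incl ψ)) hψ
    calc dist (Aop P m φ) (Aop P n φ)
        ≤ dist (Aop P m φ) (Aop P m (incl ψ))
          + dist (Aop P m (incl ψ)) (Aop P n (incl ψ))
          + dist (Aop P n (incl ψ)) (Aop P n φ) := dist_triangle4 _ _ _ _
      _ < ε / 3 + ε / 3 + ε / 3 := by
          refine add_lt_add (add_lt_add (key m) ?_) ?_
          · rw [hAw m, hAw n]; exact hN m hm n hn
          · rw [dist_comm]; exact key n
      _ = ε := by ring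
  obtain ⟨u, hu⟩ := cauchySeq_tendsto_of_complete hcauchy
  refine ⟨u, hu, ?_⟩
  -- P u = u
  have hPA : ∀ m : ℕ, P (Aop P m φ) - Aop P m φ
      = (m : ℝ)⁻¹ • ((P ^ (m + 1)) φ - P φ) := by
    intro m
    have h1 : P (Aop P m φ) = (m : ℝ)⁻¹ • ∑ k ∈ Finset.range m, (P ^ (k + 1 + 1)) φ := by
      rw [Aop_apply, _root_.map_smul, map_sum]
      congr 1
      refine Finset.sum_congr rfl fun k _ => ?_
      simp [pow_succ', Module.End.mul_apply]
    have h2 : ∑ k ∈ Finset.range m, (P ^ (k + 1 + 1)) φ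
        = ∑ k ∈ Finset.range m, (P ^ (k + 1)) φ + (P ^ (m + 1)) φ - (P ^ (0 + 1)) φ := by
      have h3 := Finset.sum_range_succ' (fun k => (P ^ (k + 1)) φ) m
      have h4 := Finset.sum_range_succ (fun k => (P ^ (k + 1)) φ) m
      rw [h4] at h3
      exact eq_sub_of_add_eq h3.symm
    rw [h1, Aop_apply, h2, smul_sub, smul_add, smul_sub]
    simp only [zero_add, pow_one]
    abel
  have hto0 : Tendsto (fun m => P (Aop P m φ) - Aop P m φ) atTop (𝓝 0) := by
    refine squeeze_zero_norm (fun m => ?_)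
      (by simpa using (tendsto_one_div_atTop_nhds_zero_nat).const_mul (2 * ‖φ‖))
    rw [hPA m, norm_smul, Real.norm_eq_abs, abs_of_nonneg (by positivity)]
    have : ‖(P ^ (m + 1)) φ - P φ‖ ≤ 2 * ‖φ‖ := by
      refine (norm_sub_le _ _).trans ?_
      have := norm_pow_le P hnorm (m + 1) φ
      have := norm_pow_le P hnorm 1 φ
      simp only [pow_one] at this
      linarith [norm_pow_le P hnorm (m + 1) φ, this]
    calc (m : ℝ)⁻¹ * ‖(P ^ (m + 1)) φ - P φ‖ ≤ (m : ℝ)⁻¹ * (2 * ‖φ‖) :=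
          mul_le_mul_of_nonneg_left this (by positivity)
      _ = 2 * ‖φ‖ * (m : ℝ)⁻¹ := by ring
  have hPu : Tendsto (fun m => P (Aop P m φ)) atTop (𝓝 (P u)) := tendsto_P P hnorm hu
  have hdiff : Tendsto (fun m => P (Aop P m φ) - Aop P m φ) atTop (𝓝 (P u - u)) :=
    hPu.sub hu
  have := tendsto_nhds_unique hdiff hto0
  exact sub_eq_zero.mp this

variable (hergodic : ∀ f : Lp ℝ 1 μ, 0 ≤ f → ∫ x, f x ∂μ = 1 →
      ∀ h : X → ℝ, MemLp h ⊤ μ →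
        Tendsto (fun m : ℕ => (1 / (m : ℝ)) *
            ∑ k ∈ Finset.Icc 1 m, ∫ x, ((P ^ k) f) x * h x ∂μ)
          atTop (𝓝 (∫ x, h x ∂μ)))

include hpos hnorm hergodic in
lemma fixed_eq_const {u : Lp ℝ 1 μ} (hu : P u = u) : u = Lp.const 1 μ (J μ u) := by
  have hpowu : ∀ k : ℕ, (P ^ k) u = u := by
    intro k
    induction k with
    | zero => simp
    | succ n ih => rw [pow_succ, Module.End.mul_apply, hu, ih]
  have key : ∀ h : X → ℝ, MemLp h ⊤ μ →
      ∫ x, u x * h x ∂μ = J μ u * ∫ x, h x ∂μ := by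
    intro h hh
    have htd := ergodic_ext P hpos hnorm hergodic u hh
    have hev : (fun m : ℕ => (1 / (m : ℝ)) *
          ∑ k ∈ Finset.Icc 1 m, ∫ x, ((P ^ k) u) x * h x ∂μ)
        =ᶠ[atTop] (fun _ => ∫ x, u x * h x ∂μ) := by
      filter_upwards [eventually_ge_atTop 1] with m hm
      have hcongr : ∀ k ∈ Finset.Icc 1 m,
          ∫ x, ((P ^ k) u) x * h x ∂μ = ∫ x, u x * h x ∂μ := fun k _ => by rw [hpowu k]
      rw [Finset.sum_congr rfl hcongr, Finset.sum_const, Nat.card_Icc,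
        Nat.add_sub_cancel, nsmul_eq_mul]
      have hm0 : (m : ℝ) ≠ 0 := Nat.cast_ne_zero.2 (by omega)
      field_simp
    exact (tendsto_nhds_unique (htd.congr' hev) tendsto_const_nhds).symm
  have hzero : u - Lp.const 1 μ (J μ u) = 0 := by
    refine eq_zero_of_pairing _ ?_
    intro h hh
    rw [pair_sub _ _ hh, key h hh]
    have hconstint : ∫ x, (Lp.const 1 μ (J μ u) : X → ℝ) x * h x ∂μ
        = J μ u * ∫ x, h x ∂μ := by
      rw [← integral_const_mul]
      refine integral_congr_ae ?_
      filter_upwards [Lp.coeFn_const (μ := μ) (p := (1 : ENNReal)) (J μ u)] with x hx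
      rw [hx]
      simp [Function.const]
    rw [hconstint]
    ring
  have := sub_eq_zero.mp hzero
  exact this

include hpos hnorm in
lemma J_Aop (φ : Lp ℝ 1 μ) (m : ℕ) (hm : 1 ≤ m) : J μ (Aop P m φ) = J μ φ := by
  rw [Aop_apply, ContinuousLinearMap.map_smul, map_sum]
  have : ∀ k ∈ Finset.range m, J μ ((P ^ (k + 1)) φ) = J μ φ :=
    fun k _ => J_pow P hpos hnorm (k + 1) φ
  rw [Finset.sum_congr rfl this, Finset.sum_const, nsmul_eq_mul, Finset.card_range]
  have hm0 : (m : ℝ) ≠ 0 := Nat.cast_ne_zero.2 (by omega)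
  simp [smul_eq_mul]
  field_simp

lemma iterate_eq (g φ : Lp ℝ 1 μ) (hphi : φ = P φ + g) (j : ℕ) :
    φ = (P ^ j) φ + ∑ k ∈ Finset.range j, (P ^ k) g := by
  induction j with
  | zero => simp
  | succ n ih =>
    have h1 : (P ^ n) φ = (P ^ (n + 1)) φ + (P ^ n) g := by
      conv_lhs => rw [hphi]
      rw [map_add, pow_succ, Module.End.mul_apply]
    conv_lhs => rw [ih, h1]
    rw [Finset.sum_range_succ]
    abel

lemma weighted (g φ : Lp ℝ 1 μ) (hphi : φ = P φ + g) (m : ℕ) :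
    (m : ℝ) • φ = ∑ j ∈ Finset.range m, (P ^ (j + 1)) φ
      + ∑ k ∈ Finset.range m, ((m : ℝ) - (k : ℝ)) • (P ^ k) g := by
  induction m with
  | zero => simp
  | succ n ih =>
    have hsplit : ∑ k ∈ Finset.range (n + 1), (((n : ℝ) + 1) - (k : ℝ)) • (P ^ k) g
        = ∑ k ∈ Finset.range (n + 1), ((n : ℝ) - (k : ℝ)) • (P ^ k) g
          + ∑ k ∈ Finset.range (n + 1), (P ^ k) g := by
      rw [← Finset.sum_add_distrib]
      refine Finset.sum_congr rfl fun k _ => ?_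
      have hcoef : ((n : ℝ) + 1) - (k : ℝ) = ((n : ℝ) - k) + 1 := by ring
      rw [hcoef, add_smul, one_smul]
    have htail : ∑ k ∈ Finset.range (n + 1), ((n : ℝ) - (k : ℝ)) • (P ^ k) g
        = ∑ k ∈ Finset.range n, ((n : ℝ) - (k : ℝ)) • (P ^ k) g := by
      rw [Finset.sum_range_succ]
      simp
    have hcast : ((n + 1 : ℕ) : ℝ) = (n : ℝ) + 1 := by push_cast; ring
    calc ((n + 1 : ℕ) : ℝ) • φ = (n : ℝ) • φ + φ := by rw [hcast, add_smul, one_smul]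
      _ = (∑ j ∈ Finset.range n, (P ^ (j + 1)) φ
            + ∑ k ∈ Finset.range n, ((n : ℝ) - (k : ℝ)) • (P ^ k) g)
          + ((P ^ (n + 1)) φ + ∑ k ∈ Finset.range (n + 1), (P ^ k) g) := by
        rw [← ih, ← iterate_eq P g φ hphi (n + 1)]
      _ = (∑ j ∈ Finset.range n, (P ^ (j + 1)) φ + (P ^ (n + 1)) φ)
          + (∑ k ∈ Finset.range n, ((n : ℝ) - (k : ℝ)) • (P ^ k) g
            + ∑ k ∈ Finset.range (n + 1), (P ^ k) g) := by abel
      _ = ∑ j ∈ Finset.range (n + 1), (P ^ (j + 1)) φ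
          + ∑ k ∈ Finset.range (n + 1), (((n + 1 : ℕ) : ℝ) - (k : ℝ)) • (P ^ k) g := by
        rw [Finset.sum_range_succ (fun j => (P ^ (j + 1)) φ) n]
        simp only [hcast]
        rw [hsplit, htail]

lemma S_eq (g φ : Lp ℝ 1 μ) (hphi : φ = P φ + g) (m : ℕ) (hm : 1 ≤ m) :
    ∑ k ∈ Finset.range m, (((m : ℝ) - k) / (m : ℝ)) • (P ^ k) g = φ - Aop P m φ := by
  have hm0 : (m : ℝ) ≠ 0 := Nat.cast_ne_zero.2 (by omega)
  have h1 : ∑ k ∈ Finset.range m, (((m : ℝ) - k) / (m : ℝ)) • (P ^ k) g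
      = (m : ℝ)⁻¹ • ∑ k ∈ Finset.range m, ((m : ℝ) - (k : ℝ)) • (P ^ k) g := by
    rw [Finset.smul_sum]
    refine Finset.sum_congr rfl fun k _ => ?_
    rw [smul_smul]
    congr 1
    field_simp
  have h2 : ∑ k ∈ Finset.range m, ((m : ℝ) - (k : ℝ)) • (P ^ k) g
      = (m : ℝ) • φ - ∑ j ∈ Finset.range m, (P ^ (j + 1)) φ := by
    rw [weighted P g φ hphi m]
    abel
  rw [h1, h2, smul_sub, smul_smul, inv_mul_cancel₀ hm0, one_smul, Aop_apply]

include hpos hnorm hP1 hergodic in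
lemma main_forward (g φ : Lp ℝ 1 μ) (hphi : φ = P φ + g) :
    Tendsto (fun m : ℕ => ∑ k ∈ Finset.range m, (((m : ℝ) - k) / (m : ℝ)) • (P ^ k) g)
      atTop (𝓝 (φ - Lp.const 1 μ (J μ φ))) := by
  obtain ⟨u, hu, hPu⟩ := tendsto_Aop P hpos hnorm hP1 φ
  have huconst : u = Lp.const 1 μ (J μ u) := fixed_eq_const P hpos hnorm hergodic hPu
  have hJu : J μ u = J μ φ := by
    have h1 : Tendsto (fun m => J μ (Aop P m φ)) atTop (𝓝 (J μ u)) :=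
      ((J μ).continuous.tendsto u).comp hu
    have h2 : (fun m => J μ (Aop P m φ)) =ᶠ[atTop] (fun _ => J μ φ) := by
      filter_upwards [eventually_ge_atTop 1] with m hm
      exact J_Aop P hpos hnorm φ m hm
    exact tendsto_nhds_unique (h1.congr' h2) tendsto_const_nhds
  have hS : Tendsto (fun m => φ - Aop P m φ) atTop (𝓝 (φ - u)) := tendsto_const_nhds.sub hu
  have hev : (fun m : ℕ => φ - Aop P m φ) =ᶠ[atTop]
      (fun m : ℕ => ∑ k ∈ Finset.range m, (((m : ℝ) - k) / (m : ℝ)) • (P ^ k) g) := by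
    filter_upwards [eventually_ge_atTop 1] with m hm
    exact (S_eq P g φ hphi m hm).symm
  have hfin := hS.congr' hev
  rwa [huconst, hJu] at hfin

lemma S_rec (g : Lp ℝ 1 μ) (m : ℕ) :
    ∑ k ∈ Finset.range (m + 1), ((((m + 1 : ℕ) : ℝ) - k) / ((m + 1 : ℕ) : ℝ)) • (P ^ k) g
      = ((m : ℝ) / ((m : ℝ) + 1))
          • P (∑ k ∈ Finset.range m, (((m : ℝ) - k) / (m : ℝ)) • (P ^ k) g) + g := by
  have hm1 : ((m : ℝ) + 1) ≠ 0 := by positivity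
  have hrhs : ((m : ℝ) / ((m : ℝ) + 1))
        • P (∑ k ∈ Finset.range m, (((m : ℝ) - k) / (m : ℝ)) • (P ^ k) g)
      = ∑ k ∈ Finset.range m,
          (((m : ℝ) / ((m : ℝ) + 1)) * (((m : ℝ) - k) / (m : ℝ))) • (P ^ (k + 1)) g := by
    rw [map_sum, Finset.smul_sum]
    refine Finset.sum_congr rfl fun k _ => ?_
    rw [_root_.map_smul, smul_smul]
    congr 1
    rw [pow_succ', Module.End.mul_apply]
  have hlhs := Finset.sum_range_succ'
    (fun k => ((((m + 1 : ℕ) : ℝ) - k) / ((m + 1 : ℕ) : ℝ)) • (P ^ k) g) m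
  rw [hlhs, hrhs]
  congr 1
  · refine Finset.sum_congr rfl fun k hk => ?_
    have hkm : k < m := Finset.mem_range.mp hk
    have hm0 : (m : ℝ) ≠ 0 := Nat.cast_ne_zero.2 (by omega)
    congr 1
    push_cast
    field_simp
    ring
  · have : ((((m + 1 : ℕ) : ℝ) - (0 : ℕ)) / ((m + 1 : ℕ) : ℝ)) = 1 := by
      push_cast
      field_simp
      ring
    rw [this, one_smul, pow_zero, Module.End.one_apply]

include hnorm in
lemma limit_solves (g s : Lp ℝ 1 μ)
    (hs : Tendsto (fun m : ℕ => ∑ k ∈ Finset.range m, (((m : ℝ) - k) / (m : ℝ)) • (P ^ k) g)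
      atTop (𝓝 s)) :
    s = P s + g := by
  set S : ℕ → Lp ℝ 1 μ :=
    fun m => ∑ k ∈ Finset.range m, (((m : ℝ) - k) / (m : ℝ)) • (P ^ k) g with hS
  have h1 : Tendsto (fun m : ℕ => S (m + 1)) atTop (𝓝 s) := hs.comp (tendsto_add_atTop_nat 1)
  have h2 : Tendsto (fun m : ℕ => ((m : ℝ) / ((m : ℝ) + 1)) • P (S m) + g) atTop
      (𝓝 ((1 : ℝ) • P s + g)) :=
    ((tendsto_natCast_div_add_atTop (1 : ℝ)).smul (tendsto_P P hnorm hs)).add tendsto_const_nhds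
  have h3 : (fun m : ℕ => ((m : ℝ) / ((m : ℝ) + 1)) • P (S m) + g)
      = fun m : ℕ => S (m + 1) := by
    funext m
    exact (S_rec P g m).symm
  rw [h3] at h2
  have h4 := tendsto_nhds_unique h1 h2
  rwa [one_smul] at h4

end Main

end Stmt10

/-- Let `(X, 𝒜, μ)` be a probability space, `g ∈ L¹(X, μ)` with
`∫ g dμ = 0`, and let `P : L¹ → L¹` be an ergodic Markov operator with `P 1 = 1`.
Then `φ = P φ + g` has a solution in `L¹` iff the sequence
`(∑_{k=0}^{m-1} ((m-k)/m) Pᵏ g)ₘ` converges in `L¹`; moreover, `φ ∈ L¹` solves the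
equation iff `φ = limₘ ∑_{k=0}^{m-1} ((m-k)/m) Pᵏ g + c` for some real constant `c`. -/
theorem stmt10 {X : Type*} [MeasurableSpace X] (μ : Measure X) [IsProbabilityMeasure μ]
    (g : Lp ℝ 1 μ) (hg : ∫ x, g x ∂μ = 0)
    (P : Lp ℝ 1 μ →ₗ[ℝ] Lp ℝ 1 μ)
    (hpos : ∀ f : Lp ℝ 1 μ, 0 ≤ f → 0 ≤ P f)
    (hnorm : ∀ f : Lp ℝ 1 μ, 0 ≤ f → ‖P f‖ = ‖f‖)
    (hP1 : P (Lp.const 1 μ (1 : ℝ)) = Lp.const 1 μ (1 : ℝ))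
    (hergodic : ∀ f : Lp ℝ 1 μ, 0 ≤ f → ∫ x, f x ∂μ = 1 →
      ∀ h : X → ℝ, MemLp h ⊤ μ →
        Tendsto (fun m : ℕ => (1 / (m : ℝ)) *
            ∑ k ∈ Finset.Icc 1 m, ∫ x, ((P ^ k) f) x * h x ∂μ)
          atTop (𝓝 (∫ x, h x ∂μ))) :
    ((∃ φ : Lp ℝ 1 μ, φ = P φ + g) ↔
      ∃ s : Lp ℝ 1 μ,
        Tendsto (fun m : ℕ =>
            ∑ k ∈ Finset.range m, (((m : ℝ) - k) / (m : ℝ)) • (P ^ k) g)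
          atTop (𝓝 s)) ∧
    (∀ φ : Lp ℝ 1 μ, φ = P φ + g ↔
      ∃ c : ℝ,
        Tendsto (fun m : ℕ =>
            ∑ k ∈ Finset.range m, (((m : ℝ) - k) / (m : ℝ)) • (P ^ k) g)
          atTop (𝓝 (φ - Lp.const 1 μ c))) := by
  have hsecond : ∀ φ : Lp ℝ 1 μ, φ = P φ + g ↔
      ∃ c : ℝ,
        Tendsto (fun m : ℕ =>
            ∑ k ∈ Finset.range m, (((m : ℝ) - k) / (m : ℝ)) • (P ^ k) g)
          atTop (𝓝 (φ - Lp.const 1 μ c)) := by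
    intro φ
    constructor
    · intro hφ
      exact ⟨Stmt10.J μ φ, Stmt10.main_forward P hpos hnorm hP1 hergodic g φ hφ⟩
    · rintro ⟨c, hc⟩
      have hsol := Stmt10.limit_solves P hnorm g _ hc
      have hPc : P (Lp.const 1 μ c) = Lp.const 1 μ c := by
        rw [Stmt10.const_eq_smul_one c, _root_.map_smul, hP1]
      rw [map_sub, hPc] at hsol
      calc φ = φ - Lp.const 1 μ c + Lp.const 1 μ c := by abel
        _ = (P φ - Lp.const 1 μ c + g) + Lp.const 1 μ c := by rw [hsol]
        _ = P φ + g := by abel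
  refine ⟨⟨?_, ?_⟩, hsecond⟩
  · rintro ⟨φ, hφ⟩
    obtain ⟨c, hc⟩ := (hsecond φ).1 hφ
    exact ⟨φ - Lp.const 1 μ c, hc⟩
  · rintro ⟨s, hs⟩
    exact ⟨s, Stmt10.limit_solves P hnorm g s hs⟩
end

section
/- Let (X, 𝒜, μ) be a probability space, let g ∈ L¹(X, μ), and let P : L¹(X, μ) → L¹(X, μ) be a continuous linear operator such that for every density f ∈ L¹(X, μ) the sequence (Pᵐf)_{m∈ℕ} converges to 0 in L¹(X, μ). Then the equation φ = Pφ + g has a solution φ ∈ L¹(X, μ) if and only if the series ∑_{m=0}^∞ Pᵐg converges in L¹(X, μ); moreover, every solution φ ∈ L¹(X, μ) of φ = Pφ + g equals ∑_{m=0}^∞ Pᵐg (μ-a.e.), so the solution is unique when it exists. -/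
/-!
Splitting `f = f⁺ - f⁻` and rescaling each part to a density shows that `Pᵐ f → 0` for every
`f ∈ L¹`, not only for densities. If `φ = Pφ + g`, iterating gives
`∑_{m<M} Pᵐ g = φ - Pᴹ φ → φ`; conversely, applying the continuous `P` to the partial sums
shows that the sum `s` of the series satisfies `P s = s - g`.
-/

open MeasureTheory Filter Topology

section Iteration

variable {R E : Type*} [Semiring R] [TopologicalSpace E] [AddCommGroup E] [Module R E]
  {P : E →L[R] E} {g φ : E}

theorem sum_range_pow_apply_eq_sub_of_eq_apply_add (hφ : φ = P φ + g) (M : ℕ) :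
    ∑ m ∈ Finset.range M, (P ^ m) g = φ - (P ^ M) φ := by
  induction M with
  | zero => simp
  | succ M ih =>
    have hstep : (P ^ M) φ = (P ^ (M + 1)) φ + (P ^ M) g := by
      conv_lhs => rw [hφ]
      rw [map_add, pow_succ, mul_apply_eq_comp]
    rw [Finset.sum_range_succ, ih, hstep]
    abel

theorem tendsto_sum_range_pow_apply_of_eq_apply_add [IsTopologicalAddGroup E]
    (hφ : φ = P φ + g) (hP : Tendsto (fun M : ℕ => (P ^ M) φ) atTop (𝓝 0)) :
    Tendsto (fun M : ℕ => ∑ m ∈ Finset.range M, (P ^ m) g) atTop (𝓝 φ) := by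
  simpa only [sum_range_pow_apply_eq_sub_of_eq_apply_add hφ, sub_zero] using
    tendsto_const_nhds.sub hP

theorem apply_sum_range_pow_apply (M : ℕ) :
    P (∑ m ∈ Finset.range M, (P ^ m) g) = ∑ m ∈ Finset.range (M + 1), (P ^ m) g - g := by
  simp only [map_sum, ← mul_apply_eq_comp, ← pow_succ', Finset.sum_range_succ', pow_zero,
    one_apply_eq_self, add_sub_cancel_right]

theorem eq_apply_add_of_tendsto_sum_range_pow_apply [IsTopologicalAddGroup E] [T2Space E] {s : E}
    (hs : Tendsto (fun M : ℕ => ∑ m ∈ Finset.range M, (P ^ m) g) atTop (𝓝 s)) :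
    s = P s + g := by
  have hPs : Tendsto (fun M : ℕ => P (∑ m ∈ Finset.range M, (P ^ m) g)) atTop (𝓝 (P s)) :=
    (P.continuous.tendsto s).comp hs
  have hshift : Tendsto (fun M : ℕ => ∑ m ∈ Finset.range (M + 1), (P ^ m) g - g) atTop
      (𝓝 (s - g)) :=
    (hs.comp (tendsto_add_atTop_nat 1)).sub tendsto_const_nhds
  have hfixed : P s = s - g :=
    tendsto_nhds_unique (hPs.congr apply_sum_range_pow_apply) hshift
  rw [hfixed, sub_add_cancel]

end Iteration

theorem tendsto_apply_nhds_zero_of_forall_nonneg {ι E F G : Type*} [Lattice E] [AddCommGroup E]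
    [AddLeftMono E] [AddCommGroup F] [TopologicalSpace F] [IsTopologicalAddGroup F]
    [FunLike G E F] [AddMonoidHomClass G E F] {l : Filter ι} {T : ι → G}
    (hT : ∀ f, 0 ≤ f → Tendsto (fun i => T i f) l (𝓝 0)) (f : E) :
    Tendsto (fun i => T i f) l (𝓝 0) := by
  simpa only [← map_sub, posPart_sub_negPart, sub_zero] using
    (hT _ (posPart_nonneg f)).sub (hT _ (negPart_nonneg f))

namespace MeasureTheory.L1

variable {X : Type*} [MeasurableSpace X] {μ : Measure X}

theorem eq_zero_of_nonneg_of_integral_eq_zero {f : Lp ℝ 1 μ} (hf : 0 ≤ f)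
    (h : ∫ x, f x ∂μ = 0) : f = 0 := by
  have hf' : 0 ≤ᵐ[μ] (f : X → ℝ) := (Lp.coeFn_nonneg f).mpr hf
  ext1
  exact ((integral_eq_zero_iff_of_nonneg_ae hf' (integrable_coeFn f)).mp h).trans
    (Lp.coeFn_zero ℝ 1 μ).symm

theorem smul_nonneg {c : ℝ} (hc : 0 ≤ c) {f : Lp ℝ 1 μ} (hf : 0 ≤ f) : 0 ≤ c • f := by
  rw [← Lp.coeFn_nonneg]
  filter_upwards [Lp.coeFn_smul c f, (Lp.coeFn_nonneg f).mpr hf] with x hcf hfx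
  rw [hcf]
  exact _root_.smul_nonneg hc hfx

theorem integral_smul_coeFn (c : ℝ) (f : Lp ℝ 1 μ) :
    ∫ x, (c • f) x ∂μ = c * ∫ x, f x ∂μ := by
  rw [integral_congr_ae (Lp.coeFn_smul c f)]
  exact MeasureTheory.integral_smul c _

theorem tendsto_apply_nhds_zero_of_forall_density {ι G : Type*}
    [FunLike G (Lp ℝ 1 μ) (Lp ℝ 1 μ)] [LinearMapClass G ℝ (Lp ℝ 1 μ) (Lp ℝ 1 μ)]
    {l : Filter ι} {T : ι → G}
    (hT : ∀ f : Lp ℝ 1 μ, 0 ≤ f → ∫ x, f x ∂μ = 1 → Tendsto (fun i => T i f) l (𝓝 0))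
    (f : Lp ℝ 1 μ) : Tendsto (fun i => T i f) l (𝓝 0) := by
  refine tendsto_apply_nhds_zero_of_forall_nonneg (fun f hf => ?_) f
  set c := ∫ x, f x ∂μ
  have hc_nonneg : 0 ≤ c := integral_nonneg_of_ae ((Lp.coeFn_nonneg f).mpr hf)
  rcases hc_nonneg.eq_or_lt with hc | hc
  · simp [eq_zero_of_nonneg_of_integral_eq_zero hf hc.symm, tendsto_const_nhds]
  · have hdensity := hT (c⁻¹ • f) (smul_nonneg (inv_nonneg.mpr hc.le) hf)
      (by rw [integral_smul_coeFn, inv_mul_cancel₀ hc.ne'])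
    simpa only [map_smul, smul_smul, mul_inv_cancel₀ hc.ne', one_smul, smul_zero] using
      hdensity.const_smul c

end MeasureTheory.L1

theorem stmt12_general {X : Type*} [MeasurableSpace X] (μ : Measure X)
    (g : Lp ℝ 1 μ) (P : Lp ℝ 1 μ →L[ℝ] Lp ℝ 1 μ)
    (hPm : ∀ f : Lp ℝ 1 μ, 0 ≤ f → ∫ x, f x ∂μ = 1 →
      Tendsto (fun m : ℕ => (P ^ m) f) atTop (𝓝 0)) :
    ((∃ φ : Lp ℝ 1 μ, φ = P φ + g) ↔
      ∃ s : Lp ℝ 1 μ,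
        Tendsto (fun M : ℕ => ∑ m ∈ Finset.range M, (P ^ m) g) atTop (𝓝 s)) ∧
    (∀ φ : Lp ℝ 1 μ, φ = P φ + g →
      Tendsto (fun M : ℕ => ∑ m ∈ Finset.range M, (P ^ m) g) atTop (𝓝 φ)) := by
  have hsol : ∀ φ : Lp ℝ 1 μ, φ = P φ + g →
      Tendsto (fun M : ℕ => ∑ m ∈ Finset.range M, (P ^ m) g) atTop (𝓝 φ) := fun φ hφ =>
    tendsto_sum_range_pow_apply_of_eq_apply_add hφ
      (L1.tendsto_apply_nhds_zero_of_forall_density hPm φ)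
  exact ⟨⟨fun ⟨φ, hφ⟩ => ⟨φ, hsol φ hφ⟩,
    fun ⟨s, hs⟩ => ⟨s, eq_apply_add_of_tendsto_sum_range_pow_apply hs⟩⟩, hsol⟩

/-- Let `(X, 𝒜, μ)` be a probability space, `g ∈ L¹(X, μ)`, and let
`P : L¹ → L¹` be a continuous linear operator such that for every density `f`
(i.e. `f ≥ 0` and `∫ f dμ = 1`) the iterates `Pᵐ f` converge to `0` in `L¹`. Then
`φ = P φ + g` has a solution in `L¹` iff the series `∑ₘ Pᵐ g` converges in `L¹`;
moreover every solution `φ` equals `∑ₘ Pᵐ g`, so the solution is unique when it exists. -/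
theorem stmt12 {X : Type*} [MeasurableSpace X] (μ : Measure X) [IsProbabilityMeasure μ]
    (g : Lp ℝ 1 μ) (P : Lp ℝ 1 μ →L[ℝ] Lp ℝ 1 μ)
    (hPm : ∀ f : Lp ℝ 1 μ, 0 ≤ f → ∫ x, f x ∂μ = 1 →
      Tendsto (fun m : ℕ => (P ^ m) f) atTop (𝓝 0)) :
    ((∃ φ : Lp ℝ 1 μ, φ = P φ + g) ↔
      ∃ s : Lp ℝ 1 μ,
        Tendsto (fun M : ℕ => ∑ m ∈ Finset.range M, (P ^ m) g) atTop (𝓝 s)) ∧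
    (∀ φ : Lp ℝ 1 μ, φ = P φ + g →
      Tendsto (fun M : ℕ => ∑ m ∈ Finset.range M, (P ^ m) g) atTop (𝓝 φ)) :=
  stmt12_general μ g P hPm
end

section
/- Let N ≥ 2 and let f₁, …, f_N : [0,1] → [0,1] be strictly monotone absolutely continuous functions with f_n((0,1)) ∩ f_m((0,1)) = ∅ for all n ≠ m. Define P₀ : L¹([0,1]) → L¹([0,1]) by P₀f = ∑_{n=1}^N |f_n′|·(f∘f_n), and define A₀ = [0,1] and A_m = ⋃_{n=1}^N f_n(A_{m−1}) for m ∈ ℕ. Then for every nonnegative f ∈ L¹([0,1]) and every m ∈ ℕ, ‖P₀ᵐf‖₁ = ∫_{A_m} f(y) dy, and consequently lim_{m→∞} ‖P₀ᵐf‖₁ = ∫_{A_*} f(y) dy, where A_* = ⋂_{m∈ℕ} A_m. -/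
open MeasureTheory Filter Topology

lemma stmt14_disjointify : ∀ (k : ℕ) (s : Finset (ℝ × ℝ)), s.card ≤ k →
    ∃ t : Finset (ℝ × ℝ),
    (⋃ p ∈ t, Set.Ioo p.1 p.2) = (⋃ p ∈ s, Set.Ioo p.1 p.2) ∧
    (∀ p ∈ t, p.1 < p.2) ∧
    ((t : Set (ℝ × ℝ)).Pairwise fun p q => Disjoint (Set.Ioo p.1 p.2) (Set.Ioo q.1 q.2)) := by
  intro k
  induction k with
  | zero =>
    intro s hs
    rw [Nat.le_zero, Finset.card_eq_zero] at hs
    subst hs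
    exact ⟨∅, rfl, by simp, by simp⟩
  | succ k IH =>
    intro s hs
    by_cases h1 : ∃ p ∈ s, ¬ p.1 < p.2
    · obtain ⟨p, hp, hple⟩ := h1
      obtain ⟨t, ht1, ht2, ht3⟩ := IH (s.erase p) (by
        have := Finset.card_erase_of_mem hp
        omega)
      refine ⟨t, ?_, ht2, ht3⟩
      rw [ht1]
      conv_rhs => rw [← Finset.insert_erase hp]
      rw [Finset.set_biUnion_insert, Set.Ioo_eq_empty hple, Set.empty_union]
    · push_neg at h1
      by_cases h2 : ∃ p ∈ s, ∃ q ∈ s, p ≠ q ∧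
          ¬ Disjoint (Set.Ioo p.1 p.2) (Set.Ioo q.1 q.2)
      · obtain ⟨p, hp, q, hq, hpq, hnd⟩ := h2
        obtain ⟨x, hxp, hxq⟩ := Set.not_disjoint_iff.1 hnd
        have h₁ : q.1 < p.2 := lt_trans hxq.1 hxp.2
        have h₂ : p.1 < q.2 := lt_trans hxp.1 hxq.2
        have hq' : q ∈ s.erase p := Finset.mem_erase.2 ⟨fun h => hpq h.symm, hq⟩
        set s' : Finset (ℝ × ℝ) :=
          insert (min p.1 q.1, max p.2 q.2) ((s.erase p).erase q) with hs'def
        have hcard : s'.card ≤ k := by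
          rw [hs'def]
          have c1 := Finset.card_erase_of_mem hp
          have c2 := Finset.card_erase_of_mem hq'
          have c3 := Finset.card_insert_le (min p.1 q.1, max p.2 q.2) ((s.erase p).erase q)
          have c4 : 2 ≤ s.card := Finset.one_lt_card_iff.2 ⟨p, q, hp, hq, hpq⟩
          omega
        obtain ⟨t, ht1, ht2, ht3⟩ := IH s' hcard
        refine ⟨t, ?_, ht2, ht3⟩
        rw [ht1]
        conv_rhs => rw [← Finset.insert_erase hp, ← Finset.insert_erase hq']
        rw [hs'def, Finset.set_biUnion_insert, Finset.set_biUnion_insert,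
          Finset.set_biUnion_insert, ← Set.union_assoc]
        congr 1
        exact (Set.Ioo_union_Ioo' h₁ h₂).symm
      · push_neg at h2
        exact ⟨s, rfl, h1, fun p hp q hq hpq => h2 p hp q hq hpq⟩

/-- Luzin-N property: an absolutely continuous monotone function maps null subsets of
`[0,1]` to null sets. -/
lemma stmt14_luzin (g : ℝ → ℝ)
    (hm : MonotoneOn g (Set.Icc 0 1) ∨ AntitoneOn g (Set.Icc 0 1))
    (hAC : AbsolutelyContinuousOnIcc g 0 1)
    {E : Set ℝ} (hE : E ⊆ Set.Icc 0 1) (h0 : volume E = 0) :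
    volume (g '' E) = 0 := by
  -- reduce to the interior part
  have hsplit : g '' E ⊆ g '' (E ∩ Set.Ioo 0 1) ∪ {g 0, g 1} := by
    rintro y ⟨x, hx, rfl⟩
    by_cases hxi : x ∈ Set.Ioo 0 1
    · exact Or.inl ⟨x, ⟨hx, hxi⟩, rfl⟩
    · have hx01 : x = 0 ∨ x = 1 := by
        rcases hE hx with ⟨h1, h2⟩
        rcases eq_or_lt_of_le h1 with h | h
        · exact Or.inl h.symm
        rcases eq_or_lt_of_le h2 with h' | h'
        · exact Or.inr h'
        exact absurd ⟨h, h'⟩ hxi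
      rcases hx01 with rfl | rfl
      · exact Or.inr (by simp)
      · exact Or.inr (by simp)
  have hpair : volume ({g 0, g 1} : Set ℝ) = 0 :=
    ((Set.countable_singleton (g 1)).insert (g 0)).measure_zero _
  have key : ∀ ε : ℝ, 0 < ε → volume (g '' (E ∩ Set.Ioo 0 1)) ≤ ENNReal.ofReal ε := by
    intro ε hε
    obtain ⟨δ, hδ, hACδ⟩ := hAC ε hε
    have hE0 : volume (E ∩ Set.Ioo 0 1) < ENNReal.ofReal δ := by
      rw [measure_mono_null Set.inter_subset_left h0]
      exact ENNReal.ofReal_pos.2 hδ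
    obtain ⟨U, hUsub, hUopen, hUvol⟩ :=
      Set.exists_isOpen_lt_of_lt (E ∩ Set.Ioo 0 1) (ENNReal.ofReal δ) hE0
    set W := U ∩ Set.Ioo 0 1 with hWdef
    have hWopen : IsOpen W := hUopen.inter isOpen_Ioo
    have hWsub : E ∩ Set.Ioo 0 1 ⊆ W := Set.subset_inter hUsub Set.inter_subset_right
    have hWIoo : W ⊆ Set.Ioo 0 1 := Set.inter_subset_right
    have hWvol : volume W < ENNReal.ofReal δ :=
      lt_of_le_of_lt (measure_mono Set.inter_subset_left) hUvol
    -- It suffices to bound the image of W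
    refine le_trans (measure_mono (Set.image_mono (f := g) hWsub)) ?_
    -- compact exhaustion of W
    set K : ℕ → Set ℝ := fun n => {x : ℝ | 1 / (n + 1 : ℝ) ≤ Metric.infDist x Wᶜ} ∩ Set.Icc 0 1
      with hKdef
    have hKcomp : ∀ n, IsCompact (K n) := fun n =>
      isCompact_Icc.inter_left (isClosed_le continuous_const (Metric.continuous_infDist_pt _))
    have hKW : ∀ n, K n ⊆ W := by
      intro n x hx
      by_contra hxW
      have hx1 : 1 / (n + 1 : ℝ) ≤ Metric.infDist x Wᶜ := hx.1
      rw [Metric.infDist_zero_of_mem (Set.mem_compl hxW)] at hx1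
      have h1 : (0:ℝ) < 1 / (n + 1 : ℝ) := by positivity
      linarith
    have hKmono : Monotone K := by
      intro n m hnm x hx
      have hx1 : 1 / (n + 1 : ℝ) ≤ Metric.infDist x Wᶜ := hx.1
      refine ⟨le_trans ?_ hx1, hx.2⟩
      apply one_div_le_one_div_of_le (by positivity)
      have : (n:ℝ) ≤ m := Nat.cast_le.2 hnm
      linarith
    have hKunion : ⋃ n, K n = W := by
      apply Set.Subset.antisymm (Set.iUnion_subset hKW)
      intro x hxW
      have hWc : IsClosed Wᶜ := hWopen.isClosed_compl
      have hWcne : Wᶜ.Nonempty := ⟨2, fun h => absurd (hWIoo h).2 (by norm_num)⟩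
      have hpos : 0 < Metric.infDist x Wᶜ :=
        (hWc.notMem_iff_infDist_pos hWcne).1 (by simpa using hxW)
      obtain ⟨n, hn⟩ := exists_nat_one_div_lt hpos
      exact Set.mem_iUnion.2 ⟨n, ⟨le_of_lt hn, Set.Ioo_subset_Icc_self (hWIoo hxW)⟩⟩
    -- reduce to compact subsets
    have himg : g '' W = ⋃ n, g '' K n := by rw [← Set.image_iUnion, hKunion]
    have hdir : Directed (· ⊆ ·) (fun n => g '' K n) :=
      Monotone.directed_le fun a b hab => Set.image_mono (f := g) (hKmono hab)
    rw [himg, hdir.measure_iUnion]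
    refine iSup_le fun n => ?_
    -- now bound the image of the compact set K n
    set Kn := K n with hKndef
    have hKnW : Kn ⊆ W := hKW n
    -- finite subcover by intervals inside W
    have hcov : ∀ x : Kn, ∃ r > 0, Metric.ball (x : ℝ) r ⊆ W := fun x =>
      Metric.isOpen_iff.1 hWopen x (hKnW x.2)
    choose r hr hball using hcov
    obtain ⟨t, ht⟩ := (hKcomp n).elim_finite_subcover
      (fun i : Kn => Set.Ioo (i.1 - r i) (i.1 + r i)) (fun i => isOpen_Ioo)
      (by
        intro x hx
        exact Set.mem_iUnion.2 ⟨⟨x, hx⟩, by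
          simp only [Set.mem_Ioo]
          constructor <;> [linarith [hr ⟨x, hx⟩]; linarith [hr ⟨x, hx⟩]]⟩)
    set s : Finset (ℝ × ℝ) := t.image fun i => (i.1 - r i, i.1 + r i) with hsdef
    have hsunion : (⋃ p ∈ s, Set.Ioo p.1 p.2)
        = ⋃ i ∈ t, Set.Ioo (i.1 - r i) (i.1 + r i) := by
      rw [hsdef]
      ext y
      simp only [Set.mem_iUnion, Finset.mem_image]
      constructor
      · rintro ⟨p, ⟨i, hi, rfl⟩, hy⟩
        exact ⟨i, hi, hy⟩
      · rintro ⟨i, hi, hy⟩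
        exact ⟨_, ⟨i, hi, rfl⟩, hy⟩
    have hsW : (⋃ p ∈ s, Set.Ioo p.1 p.2) ⊆ W := by
      rw [hsunion]
      refine Set.iUnion₂_subset fun i _ => ?_
      rw [← Real.ball_eq_Ioo]
      exact hball i
    have hKs : Kn ⊆ ⋃ p ∈ s, Set.Ioo p.1 p.2 := by rw [hsunion]; exact ht
    -- disjointify
    obtain ⟨t', ht'union, ht'lt, ht'disj⟩ := stmt14_disjointify s.card s le_rfl
    set V := ⋃ p ∈ t', Set.Ioo p.1 p.2 with hVdef
    have hVW : V ⊆ W := ht'union ▸ hsW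
    have hKV : Kn ⊆ V := ht'union ▸ hKs
    have hVIoo : ∀ p ∈ t', Set.Ioo p.1 p.2 ⊆ Set.Ioo 0 1 := fun p hp =>
      (Set.subset_iUnion₂ p hp).trans (hVW.trans hWIoo)
    have hendpts : ∀ p ∈ t', p.1 ∈ Set.Icc (0:ℝ) 1 ∧ p.2 ∈ Set.Icc (0:ℝ) 1 := by
      intro p hp
      have h1 : Set.Icc p.1 p.2 ⊆ Set.Icc (0:ℝ) 1 := by
        rw [← closure_Ioo (ne_of_lt (ht'lt p hp)), ← closure_Ioo (zero_ne_one' ℝ)]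
        exact closure_mono (hVIoo p hp)
      exact ⟨h1 ⟨le_refl _, le_of_lt (ht'lt p hp)⟩, h1 ⟨le_of_lt (ht'lt p hp), le_refl _⟩⟩
    -- total length bound
    have hVsum : volume V = ∑ p ∈ t', ENNReal.ofReal (p.2 - p.1) := by
      rw [hVdef, measure_biUnion_finset ht'disj (fun p _ => measurableSet_Ioo)]
      exact Finset.sum_congr rfl fun p _ => Real.volume_Ioo
    have hlen : (∑ p ∈ t', (p.2 - p.1)) < δ := by
      have h1 : ENNReal.ofReal (∑ p ∈ t', (p.2 - p.1)) < ENNReal.ofReal δ := by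
        rw [ENNReal.ofReal_sum_of_nonneg fun p hp => le_of_lt (sub_pos.2 (ht'lt p hp))]
        rw [← hVsum]
        exact lt_of_le_of_lt (measure_mono hVW) hWvol
      exact (ENNReal.ofReal_lt_ofReal_iff hδ).1 h1
    -- apply absolute continuity
    set nn := t'.card with hnndef
    set e : Fin nn ≃ {x // x ∈ t'} := t'.equivFin.symm with hedef
    set u : Fin nn → ℝ := fun i => ((e i : ℝ × ℝ)).1 with hudef
    set v : Fin nn → ℝ := fun i => ((e i : ℝ × ℝ)).2 with hvdef
    have hmem : ∀ i, ((e i : ℝ × ℝ)) ∈ t' := fun i => (e i).2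
    have hbounds : ∀ i, 0 ≤ u i ∧ u i ≤ v i ∧ v i ≤ 1 := fun i =>
      ⟨(hendpts _ (hmem i)).1.1, le_of_lt (ht'lt _ (hmem i)), (hendpts _ (hmem i)).2.2⟩
    have hpairw : Pairwise fun i j => Disjoint (Set.Ioo (u i) (v i)) (Set.Ioo (u j) (v j)) := by
      intro i j hij
      exact ht'disj (hmem i) (hmem j)
        (fun h => hij (e.injective (Subtype.coe_injective h)))
    have hsum_eq : (∑ i, (v i - u i)) = ∑ p ∈ t', (p.2 - p.1) := by
      rw [← Finset.sum_coe_sort t' (fun p => p.2 - p.1)]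
      exact Fintype.sum_equiv e _ _ fun i => rfl
    have hsum_abs : (∑ i, |g (v i) - g (u i)|) = ∑ p ∈ t', |g p.2 - g p.1| := by
      rw [← Finset.sum_coe_sort t' (fun p => |g p.2 - g p.1|)]
      exact Fintype.sum_equiv e _ _ fun i => rfl
    have hACres : (∑ p ∈ t', |g p.2 - g p.1|) < ε := by
      rw [← hsum_abs]
      exact hACδ nn u v hbounds hpairw (by rw [hsum_eq]; exact hlen)
    -- bound the measure of the image
    have himgV : g '' Kn ⊆ ⋃ p ∈ t', g '' Set.Ioo p.1 p.2 := by
      refine (Set.image_mono (f := g) hKV).trans ?_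
      rw [hVdef, Set.image_iUnion₂]
    refine le_trans (measure_mono himgV) ?_
    refine le_trans (measure_biUnion_finset_le t' _) ?_
    have hterm : ∀ p ∈ t', volume (g '' Set.Ioo p.1 p.2) ≤ ENNReal.ofReal |g p.2 - g p.1| := by
      intro p hp
      have hsubI : g '' Set.Ioo p.1 p.2
          ⊆ Set.Icc (min (g p.1) (g p.2)) (max (g p.1) (g p.2)) := by
        rintro y ⟨x, hx, rfl⟩
        have hx01 : x ∈ Set.Icc (0:ℝ) 1 := Set.Ioo_subset_Icc_self (hVIoo p hp hx)
        have hp1 := (hendpts p hp).1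
        have hp2 := (hendpts p hp).2
        rcases hm with hmon | hant
        · exact ⟨le_trans (min_le_left _ _) (hmon hp1 hx01 (le_of_lt hx.1)),
            le_trans (hmon hx01 hp2 (le_of_lt hx.2)) (le_max_right _ _)⟩
        · exact ⟨le_trans (min_le_right _ _) (hant hx01 hp2 (le_of_lt hx.2)),
            le_trans (hant hp1 hx01 (le_of_lt hx.1)) (le_max_left _ _)⟩
      refine le_trans (measure_mono hsubI) ?_
      rw [Real.volume_Icc]
      apply ENNReal.ofReal_le_ofReal
      exact le_of_eq (max_sub_min_eq_abs _ _)
    refine le_trans (Finset.sum_le_sum hterm) ?_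
    rw [← ENNReal.ofReal_sum_of_nonneg fun p _ => abs_nonneg _]
    exact ENNReal.ofReal_le_ofReal (le_of_lt hACres)
  -- conclude
  have hz : volume (g '' (E ∩ Set.Ioo 0 1)) = 0 := by
    refine le_antisymm ?_ zero_le
    refine ENNReal.le_of_forall_pos_le_add fun ε hε _ => ?_
    rw [zero_add]
    refine le_trans (key (ε:ℝ) (by exact_mod_cast hε)) ?_
    exact le_of_eq ENNReal.ofReal_coe_nnreal
  exact measure_mono_null hsplit (le_antisymm
    (le_trans (measure_union_le _ _) (by simp [hz, hpair])) zero_le)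

/-- A.e. change of variables for an absolutely continuous strictly monotone map of `[0,1]`. -/
lemma stmt14_cov (g g' : ℝ → ℝ)
    (hmono : StrictMonoOn g (Set.Icc 0 1) ∨ StrictAntiOn g (Set.Icc 0 1))
    (hAC : AbsolutelyContinuousOnIcc g 0 1)
    (hg' : ∀ᵐ x ∂(volume.restrict (Set.Icc (0:ℝ) 1)),
      HasDerivWithinAt g (g' x) (Set.Icc 0 1) x)
    {S : Set ℝ} (hS : MeasurableSet S) (hSsub : S ⊆ Set.Icc 0 1) (G : ℝ → ℝ) :
    (∫ y in g '' S, G y = ∫ x in S, |g' x| * G (g x)) ∧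
    (IntegrableOn G (g '' S) volume ↔ IntegrableOn (fun x => |g' x| * G (g x)) S volume) := by
  have hinj : Set.InjOn g (Set.Icc 0 1) := hmono.elim (fun h => h.injOn) (fun h => h.injOn)
  have hm : MonotoneOn g (Set.Icc 0 1) ∨ AntitoneOn g (Set.Icc 0 1) :=
    hmono.imp (fun h => h.monotoneOn) (fun h => h.antitoneOn)
  -- extract a measurable full-measure set where the derivative exists
  have hae : ∀ᵐ x ∂(volume : Measure ℝ), x ∈ Set.Icc (0:ℝ) 1 →
      HasDerivWithinAt g (g' x) (Set.Icc 0 1) x :=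
    (ae_restrict_iff' measurableSet_Icc).1 hg'
  rw [Filter.Eventually, mem_ae_iff] at hae
  obtain ⟨B', hBB', hB'meas, hB'0⟩ := exists_measurable_superset_of_null hae
  set S' := S \ B' with hS'def
  have hS'meas : MeasurableSet S' := hS.diff hB'meas
  have hS'sub : S' ⊆ S := Set.diff_subset
  have hSdiffnull : volume (S \ S') = 0 := by
    refine measure_mono_null ?_ hB'0
    intro x hx
    rcases Classical.em (x ∈ B') with h | h
    · exact h
    · exact absurd ⟨hx.1, h⟩ hx.2
  have hSdiffsub : S \ S' ⊆ Set.Icc 0 1 := fun x hx => hSsub hx.1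
  have hd : ∀ x ∈ S', HasDerivWithinAt g (g' x) S' x := by
    intro x hx
    have hxB : x ∉ B' := hx.2
    have hxp : x ∈ Set.Icc (0:ℝ) 1 → HasDerivWithinAt g (g' x) (Set.Icc 0 1) x := by
      by_contra hc
      exact hxB (hBB' hc)
    exact (hxp (hSsub hx.1)).mono (hS'sub.trans hSsub)
  have hinj' : Set.InjOn g S' := hinj.mono (hS'sub.trans hSsub)
  -- a.e. equality of sets
  have hsetae : S' =ᵐ[volume] S := by
    rw [ae_eq_set]
    refine ⟨?_, hSdiffnull⟩
    rw [Set.diff_eq_empty.2 hS'sub]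
    exact measure_empty
  have himgnull : volume (g '' (S \ S')) = 0 := stmt14_luzin g hm hAC hSdiffsub hSdiffnull
  have himgae : (g '' S') =ᵐ[volume] (g '' S) := by
    rw [ae_eq_set]
    constructor
    · rw [Set.diff_eq_empty.2 (Set.image_mono (f := g) hS'sub)]
      exact measure_empty
    · refine measure_mono_null ?_ himgnull
      rintro y ⟨⟨x, hxS, rfl⟩, hy⟩
      rcases Classical.em (x ∈ S') with h | h
      · exact absurd ⟨x, h, rfl⟩ hy
      · exact ⟨x, ⟨hxS, fun h' => h ⟨hxS, h'.2⟩⟩, rfl⟩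
  constructor
  · calc ∫ y in g '' S, G y = ∫ y in g '' S', G y := setIntegral_congr_set himgae.symm
      _ = ∫ x in S', |g' x| • G (g x) :=
        integral_image_eq_integral_abs_deriv_smul hS'meas hd hinj' G
      _ = ∫ x in S', |g' x| * G (g x) := by simp [smul_eq_mul]
      _ = ∫ x in S, |g' x| * G (g x) := setIntegral_congr_set hsetae
  · have h1 := integrableOn_image_iff_integrableOn_abs_deriv_smul hS'meas hd hinj' G
    simp only [smul_eq_mul] at h1
    rw [IntegrableOn, IntegrableOn, ← Measure.restrict_congr_set himgae,
      ← Measure.restrict_congr_set hsetae]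
    exact h1

/-- Absolute continuity implies continuity on `[0,1]`. -/
lemma stmt14_cont (g : ℝ → ℝ) (hAC : AbsolutelyContinuousOnIcc g 0 1) :
    ContinuousOn g (Set.Icc 0 1) := by
  rw [Metric.continuousOn_iff]
  intro x hx ε hε
  obtain ⟨δ, hδ, hACδ⟩ := hAC ε hε
  refine ⟨δ, hδ, fun y hy hxy => ?_⟩
  rw [Real.dist_eq] at hxy ⊢
  rcases le_total x y with h | h
  · have h1 := hACδ 1 (fun _ => x) (fun _ => y) (fun _ => ⟨hx.1, h, hy.2⟩)
      Subsingleton.pairwise (by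
        rw [Fin.sum_univ_one]
        calc y - x ≤ |y - x| := le_abs_self _
          _ < δ := hxy)
    rw [Fin.sum_univ_one] at h1
    exact h1
  · have h1 := hACδ 1 (fun _ => y) (fun _ => x) (fun _ => ⟨hy.1, h, hx.2⟩)
      Subsingleton.pairwise (by
        rw [Fin.sum_univ_one]
        calc x - y ≤ |x - y| := le_abs_self _
          _ = |y - x| := abs_sub_comm _ _
          _ < δ := hxy)
    rw [Fin.sum_univ_one, abs_sub_comm] at h1
    exact h1

/-- Let `N ≥ 2` and let `f₁, …, f_N : [0,1] → [0,1]` be strictly monotone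
absolutely continuous functions with `f_n((0,1)) ∩ f_m((0,1)) = ∅` for `n ≠ m`, with a.e.
derivatives `f_n′`. Define `P₀ f = ∑ₙ |f_n′| (f ∘ f_n)`, `A₀ = [0,1]` and
`A_m = ⋃ₙ f_n(A_{m−1})`. Then for every nonnegative `f ∈ L¹([0,1])` and every `m`,
`‖P₀ᵐ f‖₁ = ∫_{A_m} f(y) dy`, and consequently
`limₘ ‖P₀ᵐ f‖₁ = ∫_{A_*} f(y) dy` where `A_* = ⋂ₘ A_m`. -/
theorem stmt14 (N : ℕ) (hN : 2 ≤ N) (f : Fin N → ℝ → ℝ)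
    (hmaps : ∀ n, Set.MapsTo (f n) (Set.Icc 0 1) (Set.Icc 0 1))
    (hmono : ∀ n, StrictMonoOn (f n) (Set.Icc 0 1) ∨ StrictAntiOn (f n) (Set.Icc 0 1))
    (hAC : ∀ n, AbsolutelyContinuousOnIcc (f n) 0 1)
    (hdisj : ∀ n m, n ≠ m →
      Disjoint (f n '' Set.Ioo 0 1) (f m '' Set.Ioo 0 1))
    (f' : Fin N → ℝ → ℝ)
    (hf' : ∀ n, ∀ᵐ x ∂(volume.restrict (Set.Icc (0 : ℝ) 1)),
      HasDerivWithinAt (f n) (f' n x) (Set.Icc 0 1) x)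
    (P₀ : (ℝ → ℝ) → (ℝ → ℝ))
    (hP₀ : ∀ F : ℝ → ℝ, ∀ x : ℝ, P₀ F x = ∑ n, |f' n x| * F (f n x))
    (A : ℕ → Set ℝ) (hA0 : A 0 = Set.Icc 0 1)
    (hAsucc : ∀ m : ℕ, A (m + 1) = ⋃ n, f n '' A m) :
    ∀ F : ℝ → ℝ, Integrable F (volume.restrict (Set.Icc 0 1)) → (∀ x, 0 ≤ F x) →
      (∀ m : ℕ, ∫ x in Set.Icc (0 : ℝ) 1, |(P₀^[m]) F x| = ∫ y in A m, F y) ∧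
      Tendsto (fun m : ℕ => ∫ x in Set.Icc (0 : ℝ) 1, |(P₀^[m]) F x|) atTop
        (𝓝 (∫ y in ⋂ m, A m, F y)) := by
  have hcont : ∀ n, ContinuousOn (f n) (Set.Icc 0 1) := fun n => stmt14_cont (f n) (hAC n)
  have hinj : ∀ n, Set.InjOn (f n) (Set.Icc 0 1) := fun n =>
    (hmono n).elim (fun h => h.injOn) (fun h => h.injOn)
  have hAprop : ∀ m, IsCompact (A m) ∧ A m ⊆ Set.Icc 0 1 := by
    intro m
    induction m with
    | zero => rw [hA0]; exact ⟨isCompact_Icc, subset_rfl⟩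
    | succ m ih =>
      rw [hAsucc m]
      constructor
      · exact isCompact_iUnion fun n => ih.1.image_of_continuousOn ((hcont n).mono ih.2)
      · exact Set.iUnion_subset fun n =>
          (Set.image_mono (f := f n) ih.2).trans (hmaps n).image_subset
  have hAmeas : ∀ m, MeasurableSet (A m) := fun m => (hAprop m).1.isClosed.measurableSet
  have hAanti : Antitone A := by
    refine antitone_nat_of_succ_le ?_
    have hstep : ∀ m, A (m+1) ⊆ A m := by
      intro m
      induction m with
      | zero => rw [hAsucc 0, hA0]; exact Set.iUnion_subset fun n => (hmaps n).image_subset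
      | succ m ih =>
        rw [hAsucc (m+1)]
        refine Set.iUnion_subset fun n => (Set.image_mono (f := f n) ih).trans ?_
        rw [hAsucc m]
        exact Set.subset_iUnion (fun k => f k '' A m) n
    exact hstep
  have hterm_int : ∀ (n : Fin N) (G : ℝ → ℝ), IntegrableOn G (Set.Icc 0 1) volume →
      IntegrableOn (fun x => |f' n x| * G (f n x)) (Set.Icc 0 1) volume := by
    intro n G hG
    exact ((stmt14_cov (f n) (f' n) (hmono n) (hAC n) (hf' n)
      measurableSet_Icc subset_rfl G).2).1 (hG.mono_set (hmaps n).image_subset)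
  have hPG_int : ∀ G : ℝ → ℝ, IntegrableOn G (Set.Icc 0 1) volume →
      IntegrableOn (P₀ G) (Set.Icc 0 1) volume := by
    intro G hG
    have hfun : P₀ G = fun x => ∑ n, |f' n x| * G (f n x) := funext fun x => hP₀ G x
    rw [hfun]
    exact integrable_finset_sum _ fun n _ => hterm_int n G hG
  have hPG_nonneg : ∀ G : ℝ → ℝ, (∀ x, 0 ≤ G x) → ∀ x, 0 ≤ P₀ G x := by
    intro G hG x
    rw [hP₀]
    exact Finset.sum_nonneg fun n _ => mul_nonneg (abs_nonneg _) (hG _)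
  have step : ∀ S : Set ℝ, MeasurableSet S → S ⊆ Set.Icc 0 1 → ∀ G : ℝ → ℝ,
      IntegrableOn G (Set.Icc 0 1) volume →
      ∫ x in S, P₀ G x = ∫ y in ⋃ n, f n '' S, G y := by
    intro S hSm hSsub G hG
    have hSIsub : S ∩ Set.Ioo 0 1 ⊆ Set.Icc 0 1 := fun x hx => hSsub hx.1
    have h1 : ∫ x in S, P₀ G x = ∑ n, ∫ x in S, |f' n x| * G (f n x) := by
      simp only [hP₀]
      exact integral_finset_sum _ fun n _ => (hterm_int n G hG).mono_set hSsub
    have h2 : ∀ n : Fin N, ∫ x in S, |f' n x| * G (f n x) = ∫ y in f n '' S, G y := fun n =>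
      ((stmt14_cov (f n) (f' n) (hmono n) (hAC n) (hf' n) hSm hSsub G).1).symm
    set T' : Fin N → Set ℝ := fun n => f n '' (S ∩ Set.Ioo 0 1) with hT'def
    have hT'meas : ∀ n, MeasurableSet (T' n) := fun n =>
      (hSm.inter measurableSet_Ioo).image_of_continuousOn_injOn
        ((hcont n).mono hSIsub) ((hinj n).mono hSIsub)
    have hT'disj : Pairwise (Function.onFun Disjoint T') := fun n m hnm =>
      (hdisj n m hnm).mono (Set.image_mono Set.inter_subset_right)
        (Set.image_mono Set.inter_subset_right)
    have hpairnull : ∀ n : Fin N, volume ({f n 0, f n 1} : Set ℝ) = 0 := fun n =>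
      ((Set.countable_singleton (f n 1)).insert (f n 0)).measure_zero _
    have hT'sub : ∀ n : Fin N, T' n ⊆ Set.Icc 0 1 := fun n =>
      (Set.image_mono (f := f n) hSIsub).trans (hmaps n).image_subset
    have hT'ae : ∀ n : Fin N, (T' n) =ᵐ[volume] (f n '' S) := by
      intro n
      rw [ae_eq_set]
      constructor
      · rw [Set.diff_eq_empty.2 (Set.image_mono Set.inter_subset_left)]
        exact measure_empty
      · refine measure_mono_null ?_ (hpairnull n)
        rintro y ⟨⟨x, hxS, rfl⟩, hy⟩
        have hxIoo : x ∉ Set.Ioo (0:ℝ) 1 := fun h => hy ⟨x, ⟨hxS, h⟩, rfl⟩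
        have hx01 : x = 0 ∨ x = 1 := by
          rcases hSsub hxS with ⟨ha, hb⟩
          rcases eq_or_lt_of_le ha with h | h
          · exact Or.inl h.symm
          rcases eq_or_lt_of_le hb with h' | h'
          · exact Or.inr h'
          exact absurd ⟨h, h'⟩ hxIoo
        rcases hx01 with rfl | rfl
        · exact Or.inl rfl
        · exact Or.inr rfl
    have hUae : (⋃ n, T' n) =ᵐ[volume] (⋃ n, f n '' S) := by
      rw [ae_eq_set]
      constructor
      · have hsub : (⋃ n, T' n) \ (⋃ n, f n '' S) = ∅ := by
          rw [Set.diff_eq_empty]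
          exact Set.iUnion_mono fun n => Set.image_mono Set.inter_subset_left
        rw [hsub]; exact measure_empty
      · refine measure_mono_null (fun y hy => ?_)
          (measure_iUnion_null fun n : Fin N => (ae_eq_set.1 (hT'ae n)).2)
        obtain ⟨hy1, hy2⟩ := hy
        obtain ⟨n, hn⟩ := Set.mem_iUnion.1 hy1
        exact Set.mem_iUnion.2 ⟨n, hn, fun h => hy2 (Set.mem_iUnion.2 ⟨n, h⟩)⟩
    calc ∫ x in S, P₀ G x = ∑ n, ∫ y in f n '' S, G y := by
          rw [h1]; exact Finset.sum_congr rfl fun n _ => h2 n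
      _ = ∑ n, ∫ y in T' n, G y :=
          Finset.sum_congr rfl fun n _ => (setIntegral_congr_set (hT'ae n)).symm
      _ = ∫ y in ⋃ n, T' n, G y :=
          (integral_iUnion_fintype hT'meas hT'disj fun n => hG.mono_set (hT'sub n)).symm
      _ = ∫ y in ⋃ n, f n '' S, G y := setIntegral_congr_set hUae
  intro F hF hF0
  have hFint : IntegrableOn F (Set.Icc 0 1) volume := hF
  have main : ∀ m : ℕ, ∀ G : ℝ → ℝ, IntegrableOn G (Set.Icc 0 1) volume → (∀ x, 0 ≤ G x) →
      IntegrableOn ((P₀^[m]) G) (Set.Icc 0 1) volume ∧ (∀ x, 0 ≤ (P₀^[m]) G x) ∧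
      (∫ x in Set.Icc (0:ℝ) 1, (P₀^[m]) G x = ∫ y in A m, G y) := by
    intro m
    induction m with
    | zero =>
      intro G hG hG0
      simp only [Function.iterate_zero_apply]
      exact ⟨hG, hG0, by rw [hA0]⟩
    | succ m ih =>
      intro G hG hG0
      obtain ⟨h1, h2, h3⟩ := ih (P₀ G) (hPG_int G hG) (hPG_nonneg G hG0)
      simp only [Function.iterate_succ_apply]
      exact ⟨h1, h2, by
        rw [h3, step (A m) (hAmeas m) (hAprop m).2 G hG, ← hAsucc m]⟩
  have habs : ∀ m : ℕ, ∫ x in Set.Icc (0:ℝ) 1, |(P₀^[m]) F x| = ∫ y in A m, F y := by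
    intro m
    obtain ⟨_, h2, h3⟩ := main m F hFint hF0
    rw [← h3]
    exact integral_congr_ae (ae_of_all _ fun x => abs_of_nonneg (h2 x))
  refine ⟨habs, ?_⟩
  have ht := tendsto_setIntegral_of_antitone (f := F) (μ := volume) hAmeas hAanti
    ⟨0, by rw [hA0]; exact hFint⟩
  have heq : (fun m : ℕ => ∫ x in Set.Icc (0:ℝ) 1, |(P₀^[m]) F x|)
      = fun m => ∫ y in A m, F y := funext habs
  rw [heq]
  exact ht
end

section
/- Let N ≥ 2 and let f₁, …, f_N : [0,1] → [0,1] be strictly monotone contractions (Lipschitz with constant < 1) with f_n((0,1)) ∩ f_m((0,1)) = ∅ for all n ≠ m, forming an iterated function system whose attractor A_* = ⋂_{m∈ℕ} A_m (where A₀ = [0,1] and A_m = ⋃_{n=1}^N f_n(A_{m−1})) has Lebesgue measure zero. Define P₀ : L¹([0,1]) → L¹([0,1]) by P₀f = ∑_{n=1}^N |f_n′|·(f∘f_n). Then for every nonnegative f ∈ L¹([0,1]) the sequence (P₀ᵐf)_{m∈ℕ} converges to 0 in L¹([0,1]). -/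
/-!
By the one-dimensional change of variables formula, and because the images `fₙ((0,1))` are
disjoint, the mass of `P₀ G` on a set `U ⊆ [0,1]` is at most the mass of `G` on `⋃ₙ fₙ(U)`.
Iterating from `U = [0,1] = A₀`, the mass of `P₀ᵐ F` is at most the `F`-mass of `Aₘ`, which
decreases to the `F`-mass of the null attractor, that is, to `0`.
-/

open MeasureTheory Filter Topology Set Function
open scoped ENNReal

section ChangeOfVariables

variable {s : Set ℝ} {f f' : ℝ → ℝ}

theorem aemeasurable_deriv_of_hasDerivWithinAt (hs : MeasurableSet s)
    (hf' : ∀ x ∈ s, HasDerivWithinAt f (f' x) s x) : AEMeasurable f' (volume.restrict s) := by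
  have h := aemeasurable_fderivWithin volume hs fun x hx => (hf' x hx).hasFDerivWithinAt
  exact ((ContinuousLinearMap.apply ℝ ℝ (1 : ℝ)).continuous.measurable.comp_aemeasurable h).congr
    (ae_of_all _ fun x => by simp)

theorem ae_restrict_deriv_eq_zero_of_mem_null (hs : MeasurableSet s)
    (hf' : ∀ x ∈ s, HasDerivWithinAt f (f' x) s x) (hf : InjOn f s) {E : Set ℝ}
    (hE : volume E = 0) : ∀ᵐ x ∂volume.restrict s, f x ∈ E → f' x = 0 := by
  set E' := toMeasurable volume E
  have hE'm : MeasurableSet E' := measurableSet_toMeasurable _ _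
  have hcont : ContinuousOn f s := fun x hx => (hf' x hx).continuousWithinAt
  have hmeas : AEMeasurable (fun x => ENNReal.ofReal |f' x| * E'.indicator 1 (f x))
      (volume.restrict s) :=
    (ENNReal.measurable_ofReal.comp_aemeasurable
      (aemeasurable_deriv_of_hasDerivWithinAt hs hf').abs).mul
      ((measurable_one.indicator hE'm).comp_aemeasurable (hcont.aemeasurable hs))
  have hzero : ∫⁻ x in s, ENNReal.ofReal |f' x| * E'.indicator 1 (f x) = 0 := by
    rw [← lintegral_image_eq_lintegral_abs_deriv_mul hs hf' hf, lintegral_indicator_one hE'm,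
      Measure.restrict_apply hE'm]
    exact measure_mono_null inter_subset_left (by rwa [measure_toMeasurable])
  filter_upwards [(lintegral_eq_zero_iff' hmeas).1 hzero] with x hx hxE
  have hxE' : f x ∈ E' := subset_toMeasurable volume E hxE
  simpa [hxE'] using hx

theorem aemeasurable_abs_deriv_mul_comp {t : Set ℝ} (hs : MeasurableSet s)
    (hf' : ∀ x ∈ s, HasDerivWithinAt f (f' x) s x) (hf : InjOn f s) (hst : MapsTo f s t)
    {G : ℝ → ℝ} (hG : AEMeasurable G (volume.restrict t)) :
    AEMeasurable (fun x => |f' x| * G (f x)) (volume.restrict s) := by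
  set E := toMeasurable (volume.restrict t) {y | G y ≠ hG.mk G y}
  have hE : volume (E ∩ t) = 0 := by
    rw [← Measure.restrict_apply (measurableSet_toMeasurable _ _), measure_toMeasurable]
    exact hG.ae_eq_mk
  have hcont : ContinuousOn f s := fun x hx => (hf' x hx).continuousWithinAt
  refine AEMeasurable.congr (f := fun x => |f' x| * hG.mk G (f x)) ?_ ?_
  · exact (aemeasurable_deriv_of_hasDerivWithinAt hs hf').abs.mul
      (hG.measurable_mk.comp_aemeasurable (hcont.aemeasurable hs))
  filter_upwards [ae_restrict_deriv_eq_zero_of_mem_null hs hf' hf hE, ae_restrict_mem hs]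
    with x hx hxs
  by_cases hGx : G (f x) = hG.mk G (f x)
  · rw [hGx]
  · simp [hx ⟨subset_toMeasurable _ _ hGx, hst hxs⟩]

end ChangeOfVariables

theorem exists_measurableSet_subset_forall_ae_eq {α : Type*} [MeasurableSpace α]
    {μ : Measure α} {u : Set α} {p : α → Prop} (hu : MeasurableSet u)
    (hp : ∀ᵐ x ∂μ.restrict u, p x) :
    ∃ s ⊆ u, MeasurableSet s ∧ (∀ x ∈ s, p x) ∧ s =ᵐ[μ] u := by
  have hnull : μ (u \ {x | p x}) = 0 :=
    measure_mono_null (fun x hx (h : x ∈ u → p x) => hx.2 (h hx.1))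
      (ae_iff.1 ((ae_restrict_iff' hu).1 hp))
  have hpu : (u ∩ {x | p x} : Set α) =ᵐ[μ] u := ae_eq_set.2
    ⟨by rw [sdiff_eq_empty.2 inter_subset_left, measure_empty], by rwa [sdiff_self_inter]⟩
  obtain ⟨s, hs, hsm, hs_ae⟩ :=
    (hu.nullMeasurableSet.congr hpu.symm).exists_measurable_subset_ae_eq
  exact ⟨s, hs.trans inter_subset_left, hsm, fun x hx => (hs hx).2, hs_ae.trans hpu⟩

section TransferOperator

variable {ι : Type*} [Fintype ι] {f f' : ι → ℝ → ℝ} {s t : Set ℝ}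

def transferOp (f f' : ι → ℝ → ℝ) (G : ℝ → ℝ) (x : ℝ) : ℝ :=
  ∑ n, |f' n x| * G (f n x)

theorem transferOp_nonneg {G : ℝ → ℝ} (hG : 0 ≤ G) : 0 ≤ transferOp f f' G := fun _ =>
  Finset.sum_nonneg fun _ _ => mul_nonneg (abs_nonneg _) (hG _)

theorem iterate_transferOp_nonneg {G : ℝ → ℝ} (hG : 0 ≤ G) (m : ℕ) :
    0 ≤ (transferOp f f')^[m] G := by
  induction m with
  | zero => exact hG
  | succ m ih => rw [iterate_succ_apply']; exact transferOp_nonneg ih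

theorem aemeasurable_transferOp (hs : MeasurableSet s)
    (hf' : ∀ n, ∀ x ∈ s, HasDerivWithinAt (f n) (f' n x) s x) (hf : ∀ n, InjOn (f n) s)
    (hst : ∀ n, MapsTo (f n) s t) {G : ℝ → ℝ} (hG : AEMeasurable G (volume.restrict t)) :
    AEMeasurable (transferOp f f' G) (volume.restrict s) := by
  unfold transferOp
  exact Finset.aemeasurable_fun_sum _ fun n _ =>
    aemeasurable_abs_deriv_mul_comp hs (hf' n) (hf n) (hst n) hG

theorem aemeasurable_iterate_transferOp (hs : MeasurableSet s) (hs_ae : s =ᵐ[volume] t)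
    (hf' : ∀ n, ∀ x ∈ s, HasDerivWithinAt (f n) (f' n x) s x) (hf : ∀ n, InjOn (f n) s)
    (hst : ∀ n, MapsTo (f n) s t) {G : ℝ → ℝ} (hG : AEMeasurable G (volume.restrict t))
    (m : ℕ) : AEMeasurable ((transferOp f f')^[m] G) (volume.restrict t) := by
  induction m with
  | zero => exact hG
  | succ m ih =>
    rw [iterate_succ_apply', ← Measure.restrict_congr_set hs_ae]
    exact aemeasurable_transferOp hs hf' hf hst ih

theorem lintegral_transferOp (hs : MeasurableSet s)
    (hf' : ∀ n, ∀ x ∈ s, HasDerivWithinAt (f n) (f' n x) s x) (hf : ∀ n, InjOn (f n) s)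
    (hst : ∀ n, MapsTo (f n) s t) (hdisj : Pairwise (Disjoint on fun n => f n '' s))
    {G : ℝ → ℝ} (hG : AEMeasurable G (volume.restrict t)) (hG0 : 0 ≤ G) :
    ∫⁻ x in s, ENNReal.ofReal (transferOp f f' G x) =
      ∫⁻ y in ⋃ n, f n '' s, ENNReal.ofReal (G y) := by
  have hsplit : ∀ x, ENNReal.ofReal (transferOp f f' G x) =
      ∑ n, ENNReal.ofReal (|f' n x| * G (f n x)) := fun x =>
    ENNReal.ofReal_sum_of_nonneg fun n _ => mul_nonneg (abs_nonneg _) (hG0 _)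
  simp_rw [hsplit]
  rw [lintegral_finsetSum' _ fun n _ => (aemeasurable_abs_deriv_mul_comp hs (hf' n) (hf n)
      (hst n) hG).ennreal_ofReal,
    Measure.restrict_iUnion hdisj fun n => measurable_image_of_fderivWithin hs
      (fun x hx => (hf' n x hx).hasFDerivWithinAt) (hf n),
    lintegral_sum_measure, tsum_fintype]
  refine Finset.sum_congr rfl fun n _ => ?_
  simp_rw [ENNReal.ofReal_mul (abs_nonneg _)]
  exact (lintegral_image_eq_lintegral_abs_deriv_mul hs (hf' n) (hf n)
    fun y => ENNReal.ofReal (G y)).symm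

theorem setLIntegral_transferOp_le (hs : MeasurableSet s) (hs_ae : s =ᵐ[volume] t)
    (hf' : ∀ n, ∀ x ∈ s, HasDerivWithinAt (f n) (f' n x) s x) (hf : ∀ n, InjOn (f n) s)
    (hst : ∀ n, MapsTo (f n) s t) (hdisj : Pairwise (Disjoint on fun n => f n '' s))
    {G : ℝ → ℝ} (hG : AEMeasurable G (volume.restrict t)) (hG0 : 0 ≤ G) {U : Set ℝ}
    (hU : MeasurableSet U) (hUt : U ⊆ t) :
    ∫⁻ x in U, ENNReal.ofReal (transferOp f f' G x) ≤
      ∫⁻ y in ⋃ n, f n '' U, ENNReal.ofReal (G y) := by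
  have hUs : (U ∩ s : Set ℝ) =ᵐ[volume] U := by
    simpa [inter_eq_left.2 hUt] using ae_eq_set_inter (ae_eq_refl U) hs_ae
  have hsub : U ∩ s ⊆ s := inter_subset_right
  calc ∫⁻ x in U, ENNReal.ofReal (transferOp f f' G x)
      = ∫⁻ x in U ∩ s, ENNReal.ofReal (transferOp f f' G x) := by
        rw [Measure.restrict_congr_set hUs]
    _ = ∫⁻ y in ⋃ n, f n '' (U ∩ s), ENNReal.ofReal (G y) :=
        lintegral_transferOp (hU.inter hs) (fun n x hx => (hf' n x (hsub hx)).mono hsub)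
          (fun n => (hf n).mono hsub) (fun n => (hst n).mono_left hsub)
          (fun m n hmn => (hdisj hmn).mono (image_mono hsub) (image_mono hsub)) hG hG0
    _ ≤ ∫⁻ y in ⋃ n, f n '' U, ENNReal.ofReal (G y) :=
        lintegral_mono_set (iUnion_mono fun n => image_mono inter_subset_left)

theorem setLIntegral_iterate_transferOp_le (hs : MeasurableSet s) (hs_ae : s =ᵐ[volume] t)
    (hf' : ∀ n, ∀ x ∈ s, HasDerivWithinAt (f n) (f' n x) s x) (hf : ∀ n, InjOn (f n) s)
    (hst : ∀ n, MapsTo (f n) s t) (hdisj : Pairwise (Disjoint on fun n => f n '' s))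
    {F : ℝ → ℝ} (hF : AEMeasurable F (volume.restrict t)) (hF0 : 0 ≤ F) {A : ℕ → Set ℝ}
    (hAm : ∀ k, MeasurableSet (A k)) (hAt : ∀ k, A k ⊆ t)
    (hAsucc : ∀ k, A (k + 1) = ⋃ n, f n '' A k) (m k : ℕ) :
    ∫⁻ x in A k, ENNReal.ofReal ((transferOp f f')^[m] F x) ≤
      ∫⁻ x in A (k + m), ENNReal.ofReal (F x) := by
  induction m generalizing k with
  | zero => rfl
  | succ m ih =>
    calc ∫⁻ x in A k, ENNReal.ofReal ((transferOp f f')^[m + 1] F x)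
        ≤ ∫⁻ x in A (k + 1), ENNReal.ofReal ((transferOp f f')^[m] F x) := by
          rw [iterate_succ_apply', hAsucc]
          exact setLIntegral_transferOp_le hs hs_ae hf' hf hst hdisj
            (aemeasurable_iterate_transferOp hs hs_ae hf' hf hst hF m)
            (iterate_transferOp_nonneg hF0 m) (hAm k) (hAt k)
      _ ≤ ∫⁻ x in A (k + (m + 1)), ENNReal.ofReal (F x) := by
          rw [← add_assoc, add_right_comm]
          exact ih (k + 1)

theorem integral_abs_iterate_transferOp_le (hs : MeasurableSet s) (hs_ae : s =ᵐ[volume] t)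
    (hf' : ∀ n, ∀ x ∈ s, HasDerivWithinAt (f n) (f' n x) s x) (hf : ∀ n, InjOn (f n) s)
    (hst : ∀ n, MapsTo (f n) s t) (hdisj : Pairwise (Disjoint on fun n => f n '' s))
    {F : ℝ → ℝ} (hF : Integrable F (volume.restrict t)) (hF0 : 0 ≤ F) {A : ℕ → Set ℝ}
    (hAm : ∀ k, MeasurableSet (A k)) (hAt : ∀ k, A k ⊆ t) (hA0 : A 0 = t)
    (hAsucc : ∀ k, A (k + 1) = ⋃ n, f n '' A k) (m : ℕ) :
    ∫ x in t, |(transferOp f f')^[m] F x| ≤ (∫⁻ x in A m, ENNReal.ofReal (F x)).toReal := by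
  have hmass := setLIntegral_iterate_transferOp_le hs hs_ae hf' hf hst hdisj hF.aemeasurable
    hF0 hAm hAt hAsucc m 0
  rw [hA0, zero_add] at hmass
  have hfin : ∫⁻ x in A m, ENNReal.ofReal (F x) ≠ ∞ :=
    ne_top_of_le_ne_top hF.lintegral_lt_top.ne (lintegral_mono_set (hAt m))
  have hpos := iterate_transferOp_nonneg (f := f) (f' := f') hF0 m
  have hnorm := norm_integral_le_lintegral_norm (μ := volume.restrict t) ((transferOp f f')^[m] F)
  simp only [Real.norm_eq_abs, abs_of_nonneg (hpos _)] at hnorm ⊢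
  exact (le_abs_self _).trans (hnorm.trans (ENNReal.toReal_mono hfin hmass))

end TransferOperator

section Hutchinson

variable {ι : Type*} {f : ι → ℝ → ℝ} {t : Set ℝ} {A : ℕ → Set ℝ}

theorem hutchinson_iterate_subset (hA0 : A 0 = t) (hAsucc : ∀ m, A (m + 1) = ⋃ n, f n '' A m)
    (hmaps : ∀ n, MapsTo (f n) t t) (m : ℕ) : A m ⊆ t := by
  induction m with
  | zero => exact hA0.le
  | succ m ih =>
    rw [hAsucc]
    exact iUnion_subset fun n => (image_mono ih).trans (hmaps n).image_subset

theorem hutchinson_iterate_antitone (hA0 : A 0 = t)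
    (hAsucc : ∀ m, A (m + 1) = ⋃ n, f n '' A m) (hmaps : ∀ n, MapsTo (f n) t t) :
    Antitone A := by
  refine antitone_nat_of_succ_le fun m => ?_
  induction m with
  | zero => exact hA0 ▸ hutchinson_iterate_subset hA0 hAsucc hmaps 1
  | succ m ih =>
    exact (hAsucc (m + 1)).trans_le ((iUnion_mono fun n => image_mono ih).trans (hAsucc m).ge)

theorem measurableSet_hutchinson_iterate [Countable ι] (ht : MeasurableSet t) (hA0 : A 0 = t)
    (hAsucc : ∀ m, A (m + 1) = ⋃ n, f n '' A m) (hmaps : ∀ n, MapsTo (f n) t t)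
    (hcont : ∀ n, ContinuousOn (f n) t) (hinj : ∀ n, InjOn (f n) t) (m : ℕ) :
    MeasurableSet (A m) := by
  induction m with
  | zero => exact hA0 ▸ ht
  | succ m ih =>
    have hAt := hutchinson_iterate_subset hA0 hAsucc hmaps m
    rw [hAsucc]
    exact .iUnion fun n => ih.image_of_continuousOn_injOn ((hcont n).mono hAt) ((hinj n).mono hAt)

end Hutchinson

theorem tendsto_setLIntegral_zero_of_antitone {α : Type*} [MeasurableSpace α] {μ : Measure α}
    {g : α → ℝ≥0∞} {A : ℕ → Set α} (hAm : ∀ m, MeasurableSet (A m)) (hA : Antitone A)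
    (hfin : ∫⁻ x in A 0, g x ∂μ ≠ ∞) (hnull : μ (⋂ m, A m) = 0) :
    Tendsto (fun m => ∫⁻ x in A m, g x ∂μ) atTop (𝓝 0) := by
  have h := tendsto_measure_iInter_atTop (μ := μ.withDensity g)
    (fun m => (hAm m).nullMeasurableSet) hA ⟨0, by rwa [withDensity_apply _ (hAm 0)]⟩
  rw [withDensity_absolutelyContinuous μ g hnull] at h
  simpa only [Function.comp_def, withDensity_apply _ (hAm _)] using h

theorem stmt15_general (N : ℕ) (f : Fin N → ℝ → ℝ)
    (hmaps : ∀ n, Set.MapsTo (f n) (Set.Icc 0 1) (Set.Icc 0 1))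
    (hmono : ∀ n, StrictMonoOn (f n) (Set.Icc 0 1) ∨ StrictAntiOn (f n) (Set.Icc 0 1))
    (hlip : ∀ n, ∃ K : NNReal, K < 1 ∧ LipschitzOnWith K (f n) (Set.Icc 0 1))
    (hdisj : ∀ n m, n ≠ m →
      Disjoint (f n '' Set.Ioo 0 1) (f m '' Set.Ioo 0 1))
    (f' : Fin N → ℝ → ℝ)
    (hf' : ∀ n, ∀ᵐ x ∂(volume.restrict (Set.Icc (0 : ℝ) 1)),
      HasDerivWithinAt (f n) (f' n x) (Set.Icc 0 1) x)
    (P₀ : (ℝ → ℝ) → (ℝ → ℝ))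
    (hP₀ : ∀ F : ℝ → ℝ, ∀ x : ℝ, P₀ F x = ∑ n, |f' n x| * F (f n x))
    (A : ℕ → Set ℝ) (hA0 : A 0 = Set.Icc 0 1)
    (hAsucc : ∀ m : ℕ, A (m + 1) = ⋃ n, f n '' A m)
    (hattr : volume (⋂ m, A m) = 0) :
    ∀ F : ℝ → ℝ, Integrable F (volume.restrict (Set.Icc 0 1)) → (∀ x, 0 ≤ F x) →
      Tendsto (fun m : ℕ => ∫ x in Set.Icc (0 : ℝ) 1, |(P₀^[m]) F x|) atTop (𝓝 0) := by
  intro F hF hF0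
  obtain rfl : P₀ = transferOp f f' := funext fun G => funext (hP₀ G)
  have hinj : ∀ n, InjOn (f n) (Icc 0 1) := fun n => (hmono n).elim (·.injOn) (·.injOn)
  have hcont : ∀ n, ContinuousOn (f n) (Icc 0 1) := fun n =>
    (hlip n).choose_spec.2.continuousOn
  -- Interior points, where the images are disjoint, at which every `f n` is differentiable.
  obtain ⟨S, hSIoo, hSm, hSderiv, hSIoo_ae⟩ :=
    exists_measurableSet_subset_forall_ae_eq (μ := volume) (u := Ioo (0 : ℝ) 1) measurableSet_Ioo
      (by rw [Measure.restrict_congr_set Ioo_ae_eq_Icc]; exact ae_all_iff.2 hf')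
  have hSI : S ⊆ Icc 0 1 := hSIoo.trans Ioo_subset_Icc_self
  have hAI := hutchinson_iterate_subset hA0 hAsucc hmaps
  have hAm := measurableSet_hutchinson_iterate measurableSet_Icc hA0 hAsucc hmaps hcont hinj
  have hbound := integral_abs_iterate_transferOp_le hSm (hSIoo_ae.trans Ioo_ae_eq_Icc)
    (fun n x hx => (hSderiv x hx n).mono hSI) (fun n => (hinj n).mono hSI)
    (fun n => (hmaps n).mono_left hSI)
    (fun m n hmn => (hdisj m n hmn).mono (image_mono hSIoo) (image_mono hSIoo)) hF hF0 hAm hAI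
    hA0 hAsucc
  have hlim := tendsto_setLIntegral_zero_of_antitone hAm
    (hutchinson_iterate_antitone hA0 hAsucc hmaps) (hA0 ▸ hF.lintegral_lt_top.ne) hattr
  exact squeeze_zero (fun m => integral_nonneg fun x => abs_nonneg _) hbound
    (by simpa [Function.comp_def] using (ENNReal.tendsto_toReal ENNReal.zero_ne_top).comp hlim)

/-- Let `N ≥ 2` and let `f₁, …, f_N : [0,1] → [0,1]` be strictly monotone
contractions (Lipschitz with constant `< 1`) with `f_n((0,1)) ∩ f_m((0,1)) = ∅` for
`n ≠ m`, forming an iterated function system whose attractor `A_* = ⋂ₘ A_m` (where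
`A₀ = [0,1]`, `A_m = ⋃ₙ f_n(A_{m−1})`) has Lebesgue measure zero. Define
`P₀ f = ∑ₙ |f_n′| (f ∘ f_n)` with `f_n′` the a.e. derivatives. Then for every nonnegative
`f ∈ L¹([0,1])`, the sequence `(P₀ᵐ f)ₘ` converges to `0` in `L¹([0,1])`. -/
theorem stmt15 (N : ℕ) (hN : 2 ≤ N) (f : Fin N → ℝ → ℝ)
    (hmaps : ∀ n, Set.MapsTo (f n) (Set.Icc 0 1) (Set.Icc 0 1))
    (hmono : ∀ n, StrictMonoOn (f n) (Set.Icc 0 1) ∨ StrictAntiOn (f n) (Set.Icc 0 1))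
    (hlip : ∀ n, ∃ K : NNReal, K < 1 ∧ LipschitzOnWith K (f n) (Set.Icc 0 1))
    (hdisj : ∀ n m, n ≠ m →
      Disjoint (f n '' Set.Ioo 0 1) (f m '' Set.Ioo 0 1))
    (f' : Fin N → ℝ → ℝ)
    (hf' : ∀ n, ∀ᵐ x ∂(volume.restrict (Set.Icc (0 : ℝ) 1)),
      HasDerivWithinAt (f n) (f' n x) (Set.Icc 0 1) x)
    (P₀ : (ℝ → ℝ) → (ℝ → ℝ))
    (hP₀ : ∀ F : ℝ → ℝ, ∀ x : ℝ, P₀ F x = ∑ n, |f' n x| * F (f n x))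
    (A : ℕ → Set ℝ) (hA0 : A 0 = Set.Icc 0 1)
    (hAsucc : ∀ m : ℕ, A (m + 1) = ⋃ n, f n '' A m)
    (hattr : volume (⋂ m, A m) = 0) :
    ∀ F : ℝ → ℝ, Integrable F (volume.restrict (Set.Icc 0 1)) → (∀ x, 0 ≤ F x) →
      Tendsto (fun m : ℕ => ∫ x in Set.Icc (0 : ℝ) 1, |(P₀^[m]) F x|) atTop (𝓝 0) :=
  stmt15_general N f hmaps hmono hlip hdisj f' hf' P₀ hP₀ A hA0 hAsucc hattr
end
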